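/- arXiv:2303.00842 — 9 statements merged into one kernel-verified Lean document; each statement's English description precedes it below -/
import Mathlib

section
/- Let n ≥ 1, N ≥ 1, and let σ_0, …, σ_n be real numbers. Let A be the N × N symmetric n-banded Toeplitz matrix with entries A_{ij} = σ_{|i−j|} for |i − j| ≤ n and A_{ij} = 0 otherwise, and let Φ(t) = σ_0 + 2 ∑_{k=1}^{n} σ_k cos(kt). Then for every z ∈ ℝ^N one has (min_{t∈ℝ} Φ(t)) |z|² ≤ ⟨Az, z⟩ ≤ (max_{t∈ℝ} Φ(t)) |z|²; in particular all eigenvalues of A lie in the interval [min Φ, max Φ]. -/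
/-!
With `F_z(t) = |∑ⱼ zⱼ e^{ijt}|² = ∑_{i,j} zᵢ zⱼ cos((i - j) t)`, the orthogonality of
`t ↦ cos(kt)` on `[0, 2π]` gives `∫₀^{2π} F_z = 2π |z|²`, and, since `A_{ij}` is the
`(i - j)`-th cosine coefficient of `Φ`, `∫₀^{2π} Φ F_z = 2π ⟨Az, z⟩`. Integrating
`min Φ ≤ Φ ≤ max Φ` against the nonnegative weight `F_z` gives the bounds on the quadratic
form, and evaluating them at an eigenvector gives those on the eigenvalues.
-/

open Real Finset intervalIntegral
open MeasureTheory (volume)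

theorem integral_cos_int_mul (a : ℤ) :
    ∫ t in 0..2 * π, cos (a * t) = if a = 0 then 2 * π else 0 := by
  split_ifs with ha
  · simp [ha]
  · have ha' : (a : ℝ) ≠ 0 := by exact_mod_cast ha
    have hsin : sin (a * (2 * π)) = 0 := by simpa using sin_add_int_mul_two_pi 0 a
    simp [integral_comp_mul_left (fun t => cos t) ha', hsin]

theorem integral_cos_nat_mul_mul_cos_int_mul {k : ℕ} (hk : k ≠ 0) (d : ℤ) :
    ∫ t in 0..2 * π, cos (k * t) * cos (d * t) = if k = d.natAbs then π else 0 := by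
  have hprod (t : ℝ) : cos (k * t) * cos (d * t)
      = (cos (((k - d : ℤ) : ℝ) * t) + cos (((k + d : ℤ) : ℝ) * t)) / 2 := by
    push_cast
    rw [sub_mul, add_mul, ← two_mul_cos_mul_cos]
    ring
  simp_rw [hprod]
  rw [integral_div, integral_add (Continuous.intervalIntegrable (by fun_prop) _ _)
    (Continuous.intervalIntegrable (by fun_prop) _ _), integral_cos_int_mul, integral_cos_int_mul]
  rcases Int.natAbs_eq d with hd | hd <;> split_ifs <;> first | omega | ring

noncomputable def toeplitzSymbol (σ : ℕ → ℝ) (n : ℕ) (t : ℝ) : ℝ :=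
  σ 0 + 2 * ∑ k ∈ Icc 1 n, σ k * cos (k * t)

theorem continuous_toeplitzSymbol (σ : ℕ → ℝ) (n : ℕ) :
    Continuous (toeplitzSymbol σ n) := by
  unfold toeplitzSymbol; fun_prop

theorem integral_toeplitzSymbol_mul_cos_int_mul (σ : ℕ → ℝ) (n : ℕ) (d : ℤ) :
    ∫ t in 0..2 * π, toeplitzSymbol σ n t * cos (d * t)
      = 2 * π * if d.natAbs ≤ n then σ d.natAbs else 0 := by
  have hsplit (t : ℝ) : toeplitzSymbol σ n t * cos (d * t)
      = σ 0 * cos (d * t) + 2 * ∑ k ∈ Icc 1 n, σ k * (cos (k * t) * cos (d * t)) := by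
    simp only [toeplitzSymbol, add_mul, mul_assoc, sum_mul]
  have hterm : ∀ k ∈ Icc 1 n,
      ∫ t in 0..2 * π, σ k * (cos (k * t) * cos (d * t))
        = σ k * if k = d.natAbs then π else 0 := fun k hk => by
      rw [integral_const_mul, integral_cos_nat_mul_mul_cos_int_mul (by simp at hk; omega)]
  simp_rw [hsplit]
  rw [integral_add (Continuous.intervalIntegrable (by fun_prop) _ _)
      (Continuous.intervalIntegrable (by fun_prop) _ _),
    integral_const_mul, integral_const_mul, integral_finsetSum
      (fun k _ => Continuous.intervalIntegrable (by fun_prop) _ _),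
    sum_congr rfl hterm, integral_cos_int_mul]
  simp only [mul_ite, mul_zero, sum_ite_eq', mem_Icc]
  rcases eq_or_ne d 0 with rfl | hd
  · simp only [Int.natAbs_zero]
    split_ifs <;> first | omega | ring
  · split_ifs <;> first | omega | ring

section TrigSum

variable {N : ℕ}

/-- `|∑ⱼ zⱼ e^{ijt}|²`. -/
noncomputable def trigSumNormSq (z : Fin N → ℝ) (t : ℝ) : ℝ :=
  (∑ j, z j * cos ((j : ℕ) * t)) ^ 2 + (∑ j, z j * sin ((j : ℕ) * t)) ^ 2

theorem trigSumNormSq_nonneg (z : Fin N → ℝ) (t : ℝ) : 0 ≤ trigSumNormSq z t := by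
  unfold trigSumNormSq; positivity

theorem continuous_trigSumNormSq (z : Fin N → ℝ) : Continuous (trigSumNormSq z) := by
  unfold trigSumNormSq; fun_prop

theorem trigSumNormSq_eq_sum_cos (z : Fin N → ℝ) (t : ℝ) :
    trigSumNormSq z t = ∑ i, ∑ j, z i * z j * cos (((i : ℤ) - j : ℤ) * t) := by
  simp only [trigSumNormSq, sq, sum_mul_sum, ← sum_add_distrib]
  refine sum_congr rfl fun i _ => sum_congr rfl fun j _ => ?_
  push_cast
  rw [sub_mul, cos_sub]
  ring

theorem integral_mul_trigSumNormSq {Φ : ℝ → ℝ} (hΦ : Continuous Φ) (z : Fin N → ℝ) :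
    ∫ t in 0..2 * π, Φ t * trigSumNormSq z t
      = ∑ i, ∑ j, z i * z j * ∫ t in 0..2 * π, Φ t * cos (((i : ℤ) - j : ℤ) * t) := by
  simp_rw [trigSumNormSq_eq_sum_cos, mul_sum]
  rw [integral_finsetSum fun i _ => Continuous.intervalIntegrable (by fun_prop) _ _]
  refine sum_congr rfl fun i _ => ?_
  rw [integral_finsetSum fun j _ => Continuous.intervalIntegrable (by fun_prop) _ _]
  refine sum_congr rfl fun j _ => ?_
  rw [← integral_const_mul]
  congr with t
  ring

theorem integral_trigSumNormSq (z : Fin N → ℝ) :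
    ∫ t in 0..2 * π, trigSumNormSq z t = 2 * π * ∑ i, z i ^ 2 := by
  have h := integral_mul_trigSumNormSq continuous_const z (Φ := 1)
  simp only [Pi.one_apply, one_mul, integral_cos_int_mul, sub_eq_zero, Nat.cast_inj,
    Fin.val_inj] at h
  simp only [h, mul_ite, mul_zero, sum_ite_eq, mem_univ, if_true, mul_sum]
  exact sum_congr rfl fun i _ => by ring

end TrigSum

theorem toeplitz_quadratic_form_bounds {Φ : ℝ → ℝ} (hΦ : Continuous Φ) {m M : ℝ}
    (hm : ∀ t, m ≤ Φ t) (hM : ∀ t, Φ t ≤ M) {N : ℕ} (A : Matrix (Fin N) (Fin N) ℝ)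
    (hA : ∀ i j : Fin N, ∫ t in 0..2 * π, Φ t * cos (((i : ℤ) - j : ℤ) * t) = 2 * π * A i j)
    (z : Fin N → ℝ) :
    m * ∑ i, z i ^ 2 ≤ ∑ i, A.mulVec z i * z i ∧ ∑ i, A.mulVec z i * z i ≤ M * ∑ i, z i ^ 2 := by
  have hF := integral_trigSumNormSq z
  have hΦF : ∫ t in 0..2 * π, Φ t * trigSumNormSq z t = 2 * π * ∑ i, A.mulVec z i * z i := by
    simp only [integral_mul_trigSumNormSq hΦ, hA, Matrix.mulVec, dotProduct, sum_mul, mul_sum]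
    exact sum_congr rfl fun i _ => sum_congr rfl fun j _ => by ring
  have hF_int : IntervalIntegrable (trigSumNormSq z) volume 0 (2 * π) :=
    (continuous_trigSumNormSq z).intervalIntegrable _ _
  have hΦF_int : IntervalIntegrable (fun t => Φ t * trigSumNormSq z t) volume 0 (2 * π) :=
    (hΦ.mul (continuous_trigSumNormSq z)).intervalIntegrable _ _
  have h2π : 0 < 2 * π := by positivity
  constructor
  · have hlow := integral_mono_on h2π.le (hF_int.const_mul m) hΦF_int
      fun t _ => mul_le_mul_of_nonneg_right (hm t) (trigSumNormSq_nonneg z t)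
    rw [integral_const_mul, hF, hΦF] at hlow
    exact le_of_mul_le_mul_left (by linarith) h2π
  · have hupp := integral_mono_on h2π.le hΦF_int (hF_int.const_mul M)
      fun t _ => mul_le_mul_of_nonneg_right (hM t) (trigSumNormSq_nonneg z t)
    rw [integral_const_mul, hF, hΦF] at hupp
    exact le_of_mul_le_mul_left (by linarith) h2π

theorem Matrix.eigenvalue_bounds_of_quadratic_form_bounds {ι : Type*} [Fintype ι]
    {A : Matrix ι ι ℝ} {m M : ℝ}
    (hA : ∀ z, m * ∑ i, z i ^ 2 ≤ ∑ i, A.mulVec z i * z i ∧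
      ∑ i, A.mulVec z i * z i ≤ M * ∑ i, z i ^ 2)
    {μ : ℝ} {z : ι → ℝ} (hz : z ≠ 0) (hμ : A.mulVec z = μ • z) : m ≤ μ ∧ μ ≤ M := by
  have hQ : ∑ i, A.mulVec z i * z i = μ * ∑ i, z i ^ 2 := by
    simp [hμ, mul_sum, sq, mul_assoc]
  have hpos : 0 < ∑ i, z i ^ 2 := by
    obtain ⟨i, hi⟩ := Function.ne_iff.1 hz
    exact sum_pos' (fun i _ => sq_nonneg (z i)) ⟨i, mem_univ i, pow_two_pos_of_ne_zero hi⟩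
  obtain ⟨hlow, hupp⟩ := hA z
  rw [hQ] at hlow hupp
  exact ⟨le_of_mul_le_mul_right hlow hpos, le_of_mul_le_mul_right hupp hpos⟩

theorem toeplitz_banded_eigenvalue_bounds_general (n : ℕ) (N : ℕ)
    (σ : ℕ → ℝ)
    (A : Matrix (Fin N) (Fin N) ℝ)
    (hA : ∀ i j : Fin N,
      A i j = if ((i : ℤ) - (j : ℤ)).natAbs ≤ n then σ ((i : ℤ) - (j : ℤ)).natAbs else 0)
    (m M : ℝ)
    (hm : IsLeast (Set.range fun t : ℝ =>
      σ 0 + 2 * ∑ k ∈ Finset.Icc 1 n, σ k * Real.cos (k * t)) m)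
    (hM : IsGreatest (Set.range fun t : ℝ =>
      σ 0 + 2 * ∑ k ∈ Finset.Icc 1 n, σ k * Real.cos (k * t)) M) :
    (∀ z : Fin N → ℝ,
      m * ∑ i, (z i) ^ 2 ≤ ∑ i, A.mulVec z i * z i ∧
        ∑ i, A.mulVec z i * z i ≤ M * ∑ i, (z i) ^ 2) ∧
    (∀ (μ : ℝ) (z : Fin N → ℝ), z ≠ 0 → A.mulVec z = μ • z → m ≤ μ ∧ μ ≤ M) := by
  have hsymbol (i j : Fin N) :
      ∫ t in 0..2 * π, toeplitzSymbol σ n t * cos (((i : ℤ) - j : ℤ) * t) = 2 * π * A i j := by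
    rw [integral_toeplitzSymbol_mul_cos_int_mul, hA]
  have bounds := toeplitz_quadratic_form_bounds (continuous_toeplitzSymbol σ n)
    (fun t => hm.2 (Set.mem_range_self t)) (fun t => hM.2 (Set.mem_range_self t)) A hsymbol
  exact ⟨bounds, fun _ _ hz hμ => Matrix.eigenvalue_bounds_of_quadratic_form_bounds bounds hz hμ⟩

/-- For `n ≥ 1`, `N ≥ 1` and reals `σ_0, …, σ_n`, the symmetric `n`-banded Toeplitz `N × N`
matrix `A` with `A_{ij} = σ_{|i−j|}` for `|i−j| ≤ n` and `0` otherwise satisfies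
`(min Φ) |z|² ≤ ⟨Az, z⟩ ≤ (max Φ) |z|²` for all `z ∈ ℝ^N`, where
`Φ(t) = σ_0 + 2 ∑_{k=1}^{n} σ_k cos(kt)`; in particular all eigenvalues of `A` lie in
`[min Φ, max Φ]`. -/
theorem toeplitz_banded_eigenvalue_bounds (n : ℕ) (hn : 1 ≤ n) (N : ℕ) (hN : 1 ≤ N)
    (σ : ℕ → ℝ)
    (A : Matrix (Fin N) (Fin N) ℝ)
    (hA : ∀ i j : Fin N,
      A i j = if ((i : ℤ) - (j : ℤ)).natAbs ≤ n then σ ((i : ℤ) - (j : ℤ)).natAbs else 0)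
    (m M : ℝ)
    (hm : IsLeast (Set.range fun t : ℝ =>
      σ 0 + 2 * ∑ k ∈ Finset.Icc 1 n, σ k * Real.cos (k * t)) m)
    (hM : IsGreatest (Set.range fun t : ℝ =>
      σ 0 + 2 * ∑ k ∈ Finset.Icc 1 n, σ k * Real.cos (k * t)) M) :
    (∀ z : Fin N → ℝ,
      m * ∑ i, (z i) ^ 2 ≤ ∑ i, A.mulVec z i * z i ∧
        ∑ i, A.mulVec z i * z i ≤ M * ∑ i, (z i) ^ 2) ∧
    (∀ (μ : ℝ) (z : Fin N → ℝ), z ≠ 0 → A.mulVec z = μ • z → m ≤ μ ∧ μ ≤ M) :=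
  toeplitz_banded_eigenvalue_bounds_general n N σ A hA m M hm hM
end

section
/- Let φ : ℝ → ℝ be continuously differentiable and let x ∈ ℝ. Then lim_{ε→0⁺} (1/ε) ( ∑_{i=1}^{M} ρ_i φ(x + εi) − ∑_{i=1}^{M} ρ_i φ(x + ε(1−i)) ) = K φ′(x), where K = ∑_{j=1}^{M} (2j−1) ρ_j; that is, the scaled discrete nonlocal gradient of the sampled function φ(ε·) converges at x to K times the classical derivative. -/
open Filter

/-- For `φ` continuously differentiable,
`lim_{ε→0⁺} (1/ε)(∑_{i=1}^{M} ρ_i φ(x+εi) − ∑_{i=1}^{M} ρ_i φ(x+ε(1−i))) = K φ′(x)` with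
`K = ∑_{j=1}^{M} (2j−1) ρ_j`. -/
theorem discrete_nonlocal_gradient_of_sampled_C1_tendsto (M : ℕ) (hM : 1 ≤ M)
    (ρ : ℕ → ℝ) (φ : ℝ → ℝ) (hφ : ContDiff ℝ 1 φ) (x : ℝ) :
    Tendsto
      (fun ε : ℝ =>
        (1 / ε) * (∑ i ∈ Finset.Icc 1 M, ρ i * φ (x + ε * i)
          - ∑ i ∈ Finset.Icc 1 M, ρ i * φ (x + ε * (1 - i))))
      (nhdsWithin 0 (Set.Ioi 0))
      (nhds ((∑ j ∈ Finset.Icc 1 M, (2 * (j : ℝ) - 1) * ρ j) * deriv φ x)) := by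
  set F : ℝ → ℝ := fun ε =>
    ∑ i ∈ Finset.Icc 1 M, (ρ i * φ (x + ε * i) - ρ i * φ (x + ε * (1 - i))) with hF
  have hφd : ∀ y : ℝ, HasDerivAt φ (deriv φ y) y := fun y =>
    ((hφ.differentiable one_ne_zero) y).hasDerivAt
  have hcomp : ∀ c : ℝ, HasDerivAt (fun ε : ℝ => φ (x + ε * c)) (deriv φ x * c) 0 := by
    intro c
    have h1 : HasDerivAt (fun ε : ℝ => x + ε * c) c 0 := by
      simpa using ((hasDerivAt_id (0:ℝ)).mul_const c).const_add x
    have h2 := (hφd (x + 0 * c)).comp 0 h1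
    simpa [Function.comp_def] using h2
  have hFd : HasDerivAt F ((∑ j ∈ Finset.Icc 1 M, (2 * (j : ℝ) - 1) * ρ j) * deriv φ x) 0 := by
    have : HasDerivAt F
        (∑ i ∈ Finset.Icc 1 M,
          (ρ i * (deriv φ x * (i : ℝ)) - ρ i * (deriv φ x * (1 - (i : ℝ))))) 0 := by
      apply HasDerivAt.fun_sum
      intro i _
      exact ((hcomp (i : ℝ)).const_mul (ρ i)).sub ((hcomp (1 - (i : ℝ))).const_mul (ρ i))
    convert this using 1
    rw [Finset.sum_mul]
    apply Finset.sum_congr rfl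
    intro i _
    ring
  have hF0 : F 0 = 0 := by simp [hF]
  have hslope := hasDerivAt_iff_tendsto_slope.mp hFd
  have hsub : nhdsWithin (0:ℝ) (Set.Ioi 0) ≤ nhdsWithin 0 {(0:ℝ)}ᶜ :=
    nhdsWithin_mono 0 (fun y hy => ne_of_gt hy)
  have := hslope.mono_left hsub
  refine this.congr' ?_
  filter_upwards [self_mem_nhdsWithin] with ε hε
  have hεne : ε ≠ 0 := ne_of_gt hε
  simp only [slope, hF0, sub_zero, vsub_eq_sub, hF, zero_mul, add_zero, sub_self, mul_zero, Finset.sum_const_zero, smul_eq_mul]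
  rw [Finset.sum_sub_distrib]
  field_simp
end

section
/- Let M ≥ 1 and let ρ_1 > ρ_2 > ⋯ > ρ_M > 0 be a strictly decreasing array of positive real numbers. Then there exists a constant Λ > 0, depending only on ρ_1, …, ρ_M (one may take Λ = (ρ_1 − ρ_2)², reading ρ_{M+1} = 0 when M = 1), such that for every finitely supported u : ℤ → ℝ, ∑_{k∈ℤ} |(u'_ρ)_k|² ≥ Λ ∑_{k∈ℤ} |u_{k+1} − u_k|². Equivalently, for every ε > 0, the scaled energy F_ε(u) = ∑_{k∈ℤ} ε |(1/ε)(u'_ρ)_k|² satisfies F_ε(u) ≥ Λ ∑_{k∈ℤ} ε |(u_{k+1} − u_k)/ε|². -/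
/-- The discrete nonlocal gradient of `u : ℤ → ℝ` associated with `ρ_1, …, ρ_M`:
`(u'_ρ)_k = −∑_{i=1}^M ρ_i u_{k+1−i} + ∑_{i=1}^M ρ_i u_{k+i}`. -/
def discreteNonlocalGradient (M : ℕ) (ρ : ℕ → ℝ) (u : ℤ → ℝ) (k : ℤ) : ℝ :=
  -∑ i ∈ Finset.Icc 1 M, ρ i * u (k + 1 - (i : ℤ)) +
    ∑ i ∈ Finset.Icc 1 M, ρ i * u (k + (i : ℤ))

open Function Finset

section Aux

variable {u : ℤ → ℝ}

/-- Autocorrelation of `u` at lag `m`. -/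
noncomputable def dnlgCorr (u : ℤ → ℝ) (m : ℤ) : ℝ := ∑ᶠ k : ℤ, u k * u (k + m)

lemma dnlg_finsum_shift (f : ℤ → ℝ) (a : ℤ) : (∑ᶠ k : ℤ, f (k + a)) = ∑ᶠ k : ℤ, f k :=
  finsum_comp_equiv (Equiv.addRight a)

lemma dnlg_supp_shift (hu : (support u).Finite) (a : ℤ) :
    (support fun k : ℤ => u (k + a)).Finite := by
  apply (hu.image (fun x => x - a)).subset
  intro k hk
  exact ⟨k + a, hk, by ring⟩

/-- Any function vanishing whenever two shifts of `u` vanish has finite support. -/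
lemma dnlg_fin_of (hu : (support u).Finite) (g : ℤ → ℝ) (a b : ℤ)
    (h : ∀ k, u (k + a) = 0 → u (k + b) = 0 → g k = 0) : (support g).Finite := by
  apply ((dnlg_supp_shift hu a).union (dnlg_supp_shift hu b)).subset
  intro k hk
  by_contra hcon
  simp only [Set.mem_union, mem_support, not_or, not_not] at hcon
  exact hk (h k hcon.1 hcon.2)

lemma dnlg_mul_shift (hu : (support u).Finite) (a b : ℤ) :
    (∑ᶠ k : ℤ, u (k + a) * u (k + b)) = dnlgCorr u (b - a) := by
  have h := dnlg_finsum_shift (fun k => u k * u (k + (b - a))) a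
  rw [dnlgCorr, ← h]
  refine finsum_congr fun k => ?_
  congr 2
  ring

lemma dnlg_corr_symm (hu : (support u).Finite) (m : ℤ) :
    dnlgCorr u (-m) = dnlgCorr u m := by
  have h1 : (∑ᶠ k : ℤ, u (k + m) * u (k + 0)) = dnlgCorr u (-m) := by
    rw [dnlg_mul_shift hu m 0]; norm_num
  have h2 : (∑ᶠ k : ℤ, u (k + 0) * u (k + m)) = dnlgCorr u m := by
    rw [dnlg_mul_shift hu 0 m]; norm_num
  rw [← h1, ← h2]
  exact finsum_congr fun k => by ring

/-- The master expansion of a pairing of differences in terms of autocorrelations. -/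
lemma dnlg_pair_eq (hu : (support u).Finite) (a b c d : ℤ) :
    (∑ᶠ k : ℤ, (u (k + a) - u (k + b)) * (u (k + c) - u (k + d)))
      = (dnlgCorr u (c - a) - dnlgCorr u (d - a))
        - (dnlgCorr u (c - b) - dnlgCorr u (d - b)) := by
  have e : ∀ k : ℤ, (u (k + a) - u (k + b)) * (u (k + c) - u (k + d)) =
      (u (k + a) * u (k + c) - u (k + a) * u (k + d))
        - (u (k + b) * u (k + c) - u (k + b) * u (k + d)) := fun k => by ring
  have fac : ∀ x y : ℤ, (support fun k : ℤ => u (k + x) * u (k + y)).Finite := by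
    intro x y
    exact dnlg_fin_of hu _ x y fun k h1 _ => by rw [h1, zero_mul]
  have fsub : ∀ x y z : ℤ,
      (support fun k : ℤ => u (k + x) * u (k + y) - u (k + x) * u (k + z)).Finite := by
    intro x y z
    exact dnlg_fin_of hu _ x x fun k h1 _ => by rw [h1]; ring
  rw [finsum_congr e, finsum_sub_distrib (fsub a c d) (fsub b c d),
    finsum_sub_distrib (fac a c) (fac a d), finsum_sub_distrib (fac b c) (fac b d),
    dnlg_mul_shift hu a c, dnlg_mul_shift hu a d, dnlg_mul_shift hu b c,
    dnlg_mul_shift hu b d]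

lemma dnlg_sq_diff (hu : (support u).Finite) (j : ℤ) :
    (∑ᶠ k : ℤ, (u (k + j) - u k) ^ 2) = 2 * (dnlgCorr u 0 - dnlgCorr u j) := by
  have e : ∀ k : ℤ, (u (k + j) - u k) ^ 2 =
      (u (k + j) - u (k + 0)) * (u (k + j) - u (k + 0)) := fun k => by
    rw [add_zero]; ring
  rw [finsum_congr e, dnlg_pair_eq hu j 0 j 0]
  have h1 : (0 : ℤ) - j = -j := by ring
  have h2 : j - j = 0 := by ring
  have h3 : j - 0 = j := by ring
  have h4 : (0 : ℤ) - 0 = 0 := by ring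
  rw [h1, h2, h3, h4, dnlg_corr_symm hu j]
  ring

lemma dnlg_sq_diff_nonneg (hu : (support u).Finite) (j : ℤ) :
    0 ≤ 2 * (dnlgCorr u 0 - dnlgCorr u j) := by
  rw [← dnlg_sq_diff hu j]
  exact finsum_nonneg fun k => sq_nonneg _

/-- Rewriting of the nonlocal gradient as a sum of paired differences. -/
lemma dnlg_grad_eq (M : ℕ) (ρ : ℕ → ℝ) (u : ℤ → ℝ) (k : ℤ) :
    discreteNonlocalGradient M ρ u k
      = ∑ i ∈ Icc 1 M, ρ i * (u (k + (i : ℤ)) - u (k + (1 - (i : ℤ)))) := by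
  rw [discreteNonlocalGradient, neg_add_eq_sub, ← Finset.sum_sub_distrib]
  refine Finset.sum_congr rfl fun i _ => ?_
  have : k + 1 - (i : ℤ) = k + (1 - (i : ℤ)) := by ring
  rw [this]
  ring

lemma dnlg_suppG_fin {M : ℕ} {ρ : ℕ → ℝ} (hu : (support u).Finite) :
    (support fun k => discreteNonlocalGradient M ρ u k).Finite := by
  apply Set.Finite.subset (Set.Finite.biUnion (Finset.finite_toSet (Icc 1 M))
    (fun i _ => ((dnlg_supp_shift hu (i : ℤ)).union (dnlg_supp_shift hu (1 - (i : ℤ))))))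
  intro k hk
  simp only [mem_support] at hk
  by_contra h
  simp only [Set.mem_iUnion, Set.mem_union, mem_support, not_exists, not_or, not_not,
    Finset.mem_coe] at h
  apply hk
  rw [dnlg_grad_eq]
  refine Finset.sum_eq_zero fun i hi => ?_
  rw [(h i hi).1, (h i hi).2]
  ring

lemma dnlg_suppD_fin (hu : (support u).Finite) :
    (support fun k : ℤ => u (k + 1) - u k).Finite := by
  refine dnlg_fin_of hu _ 1 0 fun k h1 h0 => ?_
  rw [h1]
  rw [add_zero] at h0
  rw [h0]
  ring

/-- Abel-summation inequality. -/
lemma dnlg_abel_ineq (g A : ℕ → ℝ) (hA0 : A 0 = 0) (hA : ∀ n, 0 ≤ A n)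
    (hg : ∀ i, 2 ≤ i → g (i + 1) ≤ g i) :
    ∀ n, 2 ≤ n →
      (g 1 - g 2) * A 1 + g n * A n ≤ ∑ i ∈ Icc 1 n, g i * (A i - A (i - 1)) := by
  intro n hn
  induction n with
  | zero => omega
  | succ n ih =>
    rcases Nat.lt_or_ge n 2 with h | h
    · have hn2 : n = 1 := by omega
      subst hn2
      rw [show (2 : ℕ) = 1 + 1 from rfl, Finset.sum_Icc_succ_top (by omega), Finset.Icc_self,
        Finset.sum_singleton]
      simp only [Nat.sub_self, hA0]
      norm_num
      nlinarith [hA 1, hA 2]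
    · rw [Finset.sum_Icc_succ_top (by omega)]
      have hih := ih h
      have h2 := hg n h
      have h3 : n + 1 - 1 = n := rfl
      rw [h3]
      nlinarith [hA n, hA (n + 1)]

end Aux

/-- Coerciveness of the discrete nonlocal energy: for a strictly decreasing positive array
`ρ_1 > ⋯ > ρ_M > 0` there is `Λ > 0`, depending only on `ρ`, such that for every finitely
supported `u : ℤ → ℝ` one has `∑_k |(u'_ρ)_k|² ≥ Λ ∑_k |u_{k+1} − u_k|²`, and equivalently
`∑_k ε |(1/ε)(u'_ρ)_k|² ≥ Λ ∑_k ε |(u_{k+1} − u_k)/ε|²` for every `ε > 0`. -/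
theorem discrete_nonlocal_energy_coercive (M : ℕ) (hM : 1 ≤ M) (ρ : ℕ → ℝ)
    (hpos : ∀ i ∈ Finset.Icc 1 M, 0 < ρ i)
    (hdec : ∀ i : ℕ, 1 ≤ i → i < M → ρ (i + 1) < ρ i) :
    ∃ Λ : ℝ, 0 < Λ ∧
      ∀ u : ℤ → ℝ, (Function.support u).Finite →
        (∑ᶠ k : ℤ, (discreteNonlocalGradient M ρ u k) ^ 2
            ≥ Λ * ∑ᶠ k : ℤ, (u (k + 1) - u k) ^ 2) ∧
        ∀ ε : ℝ, 0 < ε →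
          ∑ᶠ k : ℤ, ε * ((1 / ε) * discreteNonlocalGradient M ρ u k) ^ 2
            ≥ Λ * ∑ᶠ k : ℤ, ε * ((u (k + 1) - u k) / ε) ^ 2 := by
  classical
  set σ : ℝ := ρ 1 - (if 2 ≤ M then ρ 2 else 0) with hσ
  have hσpos : 0 < σ := by
    rw [hσ]
    split_ifs with h
    · have := hdec 1 le_rfl (by omega)
      linarith
    · simpa using hpos 1 (by simp [Finset.mem_Icc]; omega)
  refine ⟨σ ^ 2, by positivity, ?_⟩
  intro u hu
  -- Notation
  set G : ℤ → ℝ := fun k => discreteNonlocalGradient M ρ u k with hG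
  set D : ℤ → ℝ := fun k => u (k + 1) - u k with hD
  have hGfin : (support G).Finite := dnlg_suppG_fin hu
  have hDfin : (support D).Finite := dnlg_suppD_fin hu
  set c : ℤ → ℝ := dnlgCorr u with hc
  set A : ℕ → ℝ := fun n => 2 * (c 0 - c n) with hA
  have hA0 : A 0 = 0 := by simp [hA]
  have hAnn : ∀ n, 0 ≤ A n := fun n => dnlg_sq_diff_nonneg hu n
  set g : ℕ → ℝ := fun i => if i ≤ M then ρ i else 0 with hg
  -- main key : P = ∑ᶠ G*D expansion
  have hGD : (∑ᶠ k : ℤ, G k * D k) = ∑ i ∈ Icc 1 M, g i * (A i - A (i - 1)) := by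
    have e1 : ∀ k : ℤ, G k * D k =
        ∑ i ∈ Icc 1 M, ρ i * ((u (k + (i : ℤ)) - u (k + (1 - (i : ℤ))))
          * (u (k + 1) - u (k + 0))) := by
      intro k
      rw [hG, hD]
      simp only [dnlg_grad_eq M ρ u k, Finset.sum_mul, add_zero]
      exact Finset.sum_congr rfl fun i _ => by ring
    rw [finsum_congr e1, finsum_sum_comm]
    · refine Finset.sum_congr rfl fun i hi => ?_
      have hi1 : 1 ≤ i := (Finset.mem_Icc.mp hi).1
      have hiM : i ≤ M := (Finset.mem_Icc.mp hi).2
      have hfin : (support fun k : ℤ =>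
          (u (k + (i : ℤ)) - u (k + (1 - (i : ℤ)))) * (u (k + 1) - u (k + 0))).Finite :=
        dnlg_fin_of hu _ (i : ℤ) (1 - (i : ℤ)) fun k h1 h2 => by rw [h1, h2]; ring
      rw [← mul_finsum _ _, dnlg_pair_eq hu (i : ℤ) (1 - (i : ℤ)) 1 0]
      have c1 : (1 : ℤ) - (i : ℤ) = -((i : ℤ) - 1) := by ring
      have c2 : (0 : ℤ) - (i : ℤ) = -(i : ℤ) := by ring
      have c3 : (1 : ℤ) - (1 - (i : ℤ)) = (i : ℤ) := by ring
      have c4 : (0 : ℤ) - (1 - (i : ℤ)) = (i : ℤ) - 1 := by ring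
      rw [c3, c4, c1, c2, dnlg_corr_symm hu ((i : ℤ) - 1), dnlg_corr_symm hu (i : ℤ)]
      have hcast : ((i - 1 : ℕ) : ℤ) = (i : ℤ) - 1 := by
        have : i - 1 + 1 = i := Nat.succ_pred_eq_of_pos hi1
        omega
      have hgi : g i = ρ i := by simp [hg, hiM]
      rw [hgi, hA]
      simp only [hcast]
      ring
    · intro i hi
      exact dnlg_fin_of hu _ (i : ℤ) (1 - (i : ℤ)) fun k h1 h2 => by rw [h1, h2]; ring
  -- P ≥ σ * A 1
  have hP : σ * A 1 ≤ ∑ᶠ k : ℤ, G k * D k := by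
    rw [hGD]
    rcases Nat.lt_or_ge M 2 with hM2 | hM2
    · have hM1 : M = 1 := by omega
      subst hM1
      rw [Finset.Icc_self, Finset.sum_singleton]
      simp only [Nat.sub_self, hA0, sub_zero]
      have : g 1 = ρ 1 := by simp [hg]
      rw [this, hσ]
      simp
    · have hgd : ∀ i, 2 ≤ i → g (i + 1) ≤ g i := by
        intro i hi2
        rw [hg]
        by_cases h1 : i + 1 ≤ M
        · have h2 : i ≤ M := by omega
          simp only [h1, h2, if_true]
          exact le_of_lt (hdec i (by omega) (by omega))
        · by_cases h2 : i ≤ M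
          · simp only [h1, h2, if_true, if_false]
            exact le_of_lt (hpos i (by simp [Finset.mem_Icc]; omega))
          · simp [h1, h2]
      have habel := dnlg_abel_ineq g A hA0 hAnn hgd M hM2
      have hg1 : g 1 = ρ 1 := by simp [hg]; omega
      have hg2 : g 2 = ρ 2 := by simp [hg, hM2]
      have hgM : g M = ρ M := by simp [hg]
      have hρM : 0 < ρ M := hpos M (by simp [Finset.mem_Icc]; omega)
      have hσeq : σ = g 1 - g 2 := by rw [hσ, hg1, hg2, if_pos hM2]
      rw [hσeq]
      nlinarith [hAnn M, habel]
  -- A 1 = ∑ᶠ D^2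
  have hS : (∑ᶠ k : ℤ, D k ^ 2) = A 1 := by
    rw [hA, hD]
    have := dnlg_sq_diff hu 1
    simp only [Nat.cast_one]
    exact this
  -- Cauchy–Schwarz
  set s : Finset ℤ := (hGfin.union hDfin).toFinset with hs
  have hGDs : (∑ᶠ k : ℤ, G k * D k) = ∑ k ∈ s, G k * D k := by
    refine finsum_eq_sum_of_support_subset _ fun k hk => ?_
    simp only [hs, Set.Finite.coe_toFinset, Set.mem_union, mem_support]
    simp only [mem_support] at hk
    by_contra h
    push_neg at h
    exact hk (by rw [h.1, zero_mul])
  have hG2s : (∑ᶠ k : ℤ, G k ^ 2) = ∑ k ∈ s, G k ^ 2 := by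
    refine finsum_eq_sum_of_support_subset _ fun k hk => ?_
    simp only [hs, Set.Finite.coe_toFinset, Set.mem_union, mem_support]
    simp only [mem_support] at hk
    left
    intro h
    exact hk (by rw [h]; ring)
  have hD2s : (∑ᶠ k : ℤ, D k ^ 2) = ∑ k ∈ s, D k ^ 2 := by
    refine finsum_eq_sum_of_support_subset _ fun k hk => ?_
    simp only [hs, Set.Finite.coe_toFinset, Set.mem_union, mem_support]
    simp only [mem_support] at hk
    right
    intro h
    exact hk (by rw [h]; ring)
  have hCS : (∑ᶠ k : ℤ, G k * D k) ^ 2 ≤ (∑ᶠ k : ℤ, G k ^ 2) * ∑ᶠ k : ℤ, D k ^ 2 := by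
    rw [hGDs, hG2s, hD2s]
    exact Finset.sum_mul_sq_le_sq_mul_sq s G D
  have hT0 : 0 ≤ ∑ᶠ k : ℤ, G k ^ 2 := finsum_nonneg fun k => sq_nonneg _
  have hS0 : 0 ≤ ∑ᶠ k : ℤ, D k ^ 2 := finsum_nonneg fun k => sq_nonneg _
  -- main inequality
  have hmain : (∑ᶠ k : ℤ, G k ^ 2) ≥ σ ^ 2 * ∑ᶠ k : ℤ, D k ^ 2 := by
    rcases eq_or_lt_of_le hS0 with h0 | h0
    · rw [← h0]
      simpa using hT0
    · have hP' : σ * (∑ᶠ k : ℤ, D k ^ 2) ≤ ∑ᶠ k : ℤ, G k * D k := by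
        rw [hS]; exact hP
      nlinarith [hCS, hP', mul_pos hσpos h0]
  constructor
  · exact hmain
  · intro ε hε
    have hεne : ε ≠ 0 := ne_of_gt hε
    have e1 : ∀ k : ℤ, ε * ((1 / ε) * G k) ^ 2 = (1 / ε) * G k ^ 2 := by
      intro k; field_simp
    have e2 : ∀ k : ℤ, ε * (D k / ε) ^ 2 = (1 / ε) * D k ^ 2 := by
      intro k; field_simp
    have hG2fin : (support fun k => G k ^ 2).Finite := by
      apply hGfin.subset
      intro k hk
      simp only [mem_support] at hk ⊢
      intro h
      exact hk (by rw [h]; ring)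
    have hD2fin : (support fun k => D k ^ 2).Finite := by
      apply hDfin.subset
      intro k hk
      simp only [mem_support] at hk ⊢
      intro h
      exact hk (by rw [h]; ring)
    calc ∑ᶠ k : ℤ, ε * ((1 / ε) * G k) ^ 2
        = (1 / ε) * ∑ᶠ k : ℤ, G k ^ 2 := by
          rw [finsum_congr e1, ← mul_finsum _ _]
      _ ≥ (1 / ε) * (σ ^ 2 * ∑ᶠ k : ℤ, D k ^ 2) := by
          apply mul_le_mul_of_nonneg_left hmain (by positivity)
      _ = σ ^ 2 * ∑ᶠ k : ℤ, ε * (D k / ε) ^ 2 := by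
          rw [finsum_congr e2, ← mul_finsum _ _]
          ring
end

section
/- Let M ≥ 1 and ρ_1, …, ρ_M be real numbers, and set K = ∑_{j=1}^M (2j−1) ρ_j. Let ε_n → 0⁺, let u^n : ℤ → ℝ be such that the piecewise-constant interpolations T_{ε_n}u^n belong to L²(ℝ) with sup_n ‖T_{ε_n}u^n‖_{L²(ℝ)} < ∞, and let u, v ∈ L²(ℝ). Assume that for every φ ∈ C_c^∞(ℝ): ∫_ℝ T_{ε_n}u^n · φ dx → ∫_ℝ u φ dx and ∫_ℝ T_{ε_n}g^n · φ dx → ∫_ℝ v φ dx, where g^n : ℤ → ℝ is the scaled discrete nonlocal gradient g^n_k = (1/ε_n)((u^n)'_ρ)_k. Then for every φ ∈ C_c^∞(ℝ), ∫_ℝ v φ dx = −K ∫_ℝ u φ′ dx; that is, v equals K times the distributional derivative of u. -/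
open MeasureTheory Filter
open scoped ENNReal NNReal

/-- The piecewise-constant interpolation of `w : ℤ → ℝ` at scale `ε`:
`T_ε w (x) = w_{⌊x/ε⌋}`. -/
noncomputable def pcInterp (ε : ℝ) (w : ℤ → ℝ) (x : ℝ) : ℝ := w ⌊x / ε⌋

lemma pcInterp_shift {ε : ℝ} (hε : 0 < ε) (w : ℤ → ℝ) (c : ℤ) (x : ℝ) :
    pcInterp ε w (x + (c : ℝ) * ε) = w (⌊x / ε⌋ + c) := by
  unfold pcInterp
  rw [show (x + (c : ℝ) * ε) / ε = x / ε + (c : ℝ) by field_simp, Int.floor_add_intCast]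

lemma integrable_mul_of_memL2 {f g : ℝ → ℝ} (hf : MemLp f 2 (volume : Measure ℝ))
    (hg : MemLp g 2 (volume : Measure ℝ)) :
    Integrable (fun x => f x * g x) volume := by
  have h : MemLp (f • g) 1 (volume : Measure ℝ) :=
    hg.smul hf
  rw [memLp_one_iff_integrable] at h
  exact h

lemma memL2_translate {f : ℝ → ℝ} (hf : MemLp f 2 (volume : Measure ℝ)) (c : ℝ) :
    MemLp (fun x => f (x + c)) 2 (volume : Measure ℝ) :=
  hf.comp_measurePreserving (measurePreserving_add_right volume c)


lemma step1 (M : ℕ) (ρ : ℕ → ℝ) {ε : ℝ} (hε : 0 < ε) (w : ℤ → ℝ)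
    (hw : MemLp (pcInterp ε w) 2 (volume : Measure ℝ))
    {φ : ℝ → ℝ} (hφ : MemLp φ 2 (volume : Measure ℝ)) :
    ∫ x : ℝ, pcInterp ε (fun k => (1 / ε) * discreteNonlocalGradient M ρ w k) x * φ x
      = ∫ x : ℝ, pcInterp ε w x *
          ∑ i ∈ Finset.Icc 1 M, (ρ i / ε) * (φ (x - (i : ℝ) * ε) - φ (x - (1 - (i : ℝ)) * ε)) := by
  set U := pcInterp ε w with hUdef
  have hUt : ∀ c : ℝ, MemLp (fun x => U (x + c)) 2 (volume : Measure ℝ) :=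
    fun c => memL2_translate hw c
  have hφt : ∀ c : ℝ, MemLp (fun x => φ (x - c)) 2 (volume : Measure ℝ) := fun c => by
    simpa [sub_eq_add_neg] using memL2_translate hφ (-c)
  have claim1 : ∀ x : ℝ,
      pcInterp ε (fun k => (1 / ε) * discreteNonlocalGradient M ρ w k) x * φ x
        = ∑ i ∈ Finset.Icc 1 M, (ρ i / ε) *
            (U (x + (i : ℝ) * ε) * φ x - U (x + (1 - (i : ℝ)) * ε) * φ x) := by
    intro x
    have h1 : ∀ i : ℕ, U (x + (i : ℝ) * ε) = w (⌊x / ε⌋ + (i : ℤ)) := fun i => by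
      simpa using pcInterp_shift hε w (i : ℤ) x
    have h2 : ∀ i : ℕ, U (x + (1 - (i : ℝ)) * ε) = w (⌊x / ε⌋ + 1 - (i : ℤ)) := fun i => by
      have h := pcInterp_shift hε w (1 - (i : ℤ)) x
      rw [show ⌊x / ε⌋ + (1 - (i : ℤ)) = ⌊x / ε⌋ + 1 - (i : ℤ) by ring] at h
      simpa using h
    simp only [h1, h2]
    show (fun k => (1 / ε) * discreteNonlocalGradient M ρ w k) ⌊x / ε⌋ * φ x = _
    simp only [discreteNonlocalGradient]
    rw [show -∑ i ∈ Finset.Icc 1 M, ρ i * w (⌊x / ε⌋ + 1 - (i : ℤ))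
          + ∑ i ∈ Finset.Icc 1 M, ρ i * w (⌊x / ε⌋ + (i : ℤ))
        = ∑ i ∈ Finset.Icc 1 M,
            (ρ i * w (⌊x / ε⌋ + (i : ℤ)) - ρ i * w (⌊x / ε⌋ + 1 - (i : ℤ))) by
      rw [Finset.sum_sub_distrib]; ring]
    rw [Finset.mul_sum, Finset.sum_mul]
    exact Finset.sum_congr rfl fun i _ => by ring
  have hFint : ∀ i ∈ Finset.Icc 1 M, Integrable (fun x => (ρ i / ε) *
      (U (x + (i : ℝ) * ε) * φ x - U (x + (1 - (i : ℝ)) * ε) * φ x)) volume := fun i _ =>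
    ((integrable_mul_of_memL2 (hUt _) hφ).sub (integrable_mul_of_memL2 (hUt _) hφ)).const_mul _
  have hGint : ∀ i ∈ Finset.Icc 1 M, Integrable (fun x => (ρ i / ε) *
      (U x * φ (x - (i : ℝ) * ε) - U x * φ (x - (1 - (i : ℝ)) * ε))) volume := fun i _ =>
    ((integrable_mul_of_memL2 hw (hφt _)).sub (integrable_mul_of_memL2 hw (hφt _))).const_mul _
  have htrans : ∀ c : ℝ, (∫ x : ℝ, U (x + c) * φ x) = ∫ x : ℝ, U x * φ (x - c) := fun c => by
    have h := integral_add_right_eq_self (μ := (volume : Measure ℝ)) (fun y => U y * φ (y - c)) c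
    simpa [add_sub_cancel_right] using h
  calc ∫ x : ℝ, pcInterp ε (fun k => (1 / ε) * discreteNonlocalGradient M ρ w k) x * φ x
      = ∫ x : ℝ, ∑ i ∈ Finset.Icc 1 M, (ρ i / ε) *
          (U (x + (i : ℝ) * ε) * φ x - U (x + (1 - (i : ℝ)) * ε) * φ x) := by
        simp only [claim1]
    _ = ∑ i ∈ Finset.Icc 1 M, ∫ x : ℝ, (ρ i / ε) *
          (U (x + (i : ℝ) * ε) * φ x - U (x + (1 - (i : ℝ)) * ε) * φ x) :=
        integral_finset_sum _ hFint
    _ = ∑ i ∈ Finset.Icc 1 M, ∫ x : ℝ, (ρ i / ε) *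
          (U x * φ (x - (i : ℝ) * ε) - U x * φ (x - (1 - (i : ℝ)) * ε)) := by
        refine Finset.sum_congr rfl fun i hi => ?_
        rw [integral_const_mul, integral_const_mul,
          integral_sub (integrable_mul_of_memL2 (hUt _) hφ) (integrable_mul_of_memL2 (hUt _) hφ),
          integral_sub (integrable_mul_of_memL2 hw (hφt _)) (integrable_mul_of_memL2 hw (hφt _)),
          htrans, htrans]
    _ = ∫ x : ℝ, ∑ i ∈ Finset.Icc 1 M, (ρ i / ε) *
          (U x * φ (x - (i : ℝ) * ε) - U x * φ (x - (1 - (i : ℝ)) * ε)) :=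
        (integral_finset_sum _ hGint).symm
    _ = ∫ x : ℝ, U x *
          ∑ i ∈ Finset.Icc 1 M, (ρ i / ε) * (φ (x - (i : ℝ) * ε) - φ (x - (1 - (i : ℝ)) * ε)) := by
        congr 1; funext x
        rw [Finset.mul_sum]
        exact Finset.sum_congr rfl fun i _ => by ring

set_option maxHeartbeats 1000000 in
/-- If the interpolations of `u^n` converge weakly (tested against `C_c^∞`) to `u` and the
interpolations of the scaled discrete nonlocal gradients converge weakly to `v`, then
`∫ v φ = −K ∫ u φ′` for all test functions `φ`, i.e. `v = K u′` distributionally, where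
`K = ∑_{j=1}^M (2j−1) ρ_j`. -/
theorem weak_limit_of_discrete_nonlocal_gradients (M : ℕ) (hM : 1 ≤ M) (ρ : ℕ → ℝ)
    (ε : ℕ → ℝ) (hε : ∀ n, 0 < ε n) (hε0 : Tendsto ε atTop (nhds 0))
    (u' : ℕ → ℤ → ℝ) (u v : ℝ → ℝ)
    (hL2 : ∀ n, MemLp (pcInterp (ε n) (u' n)) 2 (volume : Measure ℝ))
    (hbdd : ∃ C : NNReal, ∀ n, eLpNorm (pcInterp (ε n) (u' n)) 2 (volume : Measure ℝ) ≤ C)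
    (huL2 : MemLp u 2 (volume : Measure ℝ)) (hvL2 : MemLp v 2 (volume : Measure ℝ))
    (hconvu : ∀ φ : ℝ → ℝ, ContDiff ℝ (⊤ : ℕ∞) φ → HasCompactSupport φ →
      Tendsto (fun n => ∫ x : ℝ, pcInterp (ε n) (u' n) x * φ x) atTop
        (nhds (∫ x : ℝ, u x * φ x)))
    (hconvg : ∀ φ : ℝ → ℝ, ContDiff ℝ (⊤ : ℕ∞) φ → HasCompactSupport φ →
      Tendsto
        (fun n => ∫ x : ℝ,
          pcInterp (ε n) (fun k => (1 / ε n) * discreteNonlocalGradient M ρ (u' n) k) x * φ x)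
        atTop (nhds (∫ x : ℝ, v x * φ x))) :
    ∀ φ : ℝ → ℝ, ContDiff ℝ (⊤ : ℕ∞) φ → HasCompactSupport φ →
      ∫ x : ℝ, v x * φ x
        = -(∑ j ∈ Finset.Icc 1 M, (2 * (j : ℝ) - 1) * ρ j) * ∫ x : ℝ, u x * deriv φ x := by
  intro φ hφ hφc
  obtain ⟨C, hC⟩ := hbdd
  have hsucc := contDiff_succ_iff_deriv.mp (show ContDiff ℝ (((⊤ : ℕ∞) : WithTop ℕ∞) + 1) φ by
    exact hφ)
  have hφdiff : Differentiable ℝ φ := hsucc.1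
  have hφ'smooth : ContDiff ℝ ((⊤ : ℕ∞) : WithTop ℕ∞) (deriv φ) := hsucc.2.2
  have hφ'c : HasCompactSupport (deriv φ) := hφc.deriv
  have hφcont : Continuous φ := hφ.continuous
  have hφ'cont : Continuous (deriv φ) := hφ'smooth.continuous
  have hφL2 : MemLp φ 2 (volume : Measure ℝ) := hφcont.memLp_of_hasCompactSupport hφc
  have hφ'L2 : MemLp (deriv φ) 2 (volume : Measure ℝ) :=
    hφ'cont.memLp_of_hasCompactSupport hφ'c
  set K : ℝ := ∑ j ∈ Finset.Icc 1 M, (2 * (j : ℝ) - 1) * ρ j with hK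
  set U : ℕ → ℝ → ℝ := fun n => pcInterp (ε n) (u' n) with hU
  set ψ : ℕ → ℝ → ℝ := fun n x => ∑ i ∈ Finset.Icc 1 M,
      (ρ i / ε n) * (φ (x - (i : ℝ) * ε n) - φ (x - (1 - (i : ℝ)) * ε n)) with hψ
  set h : ℕ → ℝ → ℝ := fun n x => ψ n x + K * deriv φ x with hh
  -- a radius containing both supports
  obtain ⟨R, hR0, hRs⟩ := hφc.isBounded.subset_closedBall_lt 0 0
  have hRφ : ∀ x : ℝ, x ∉ Set.Icc (-R) R → φ x = 0 := by
    intro x hx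
    apply image_eq_zero_of_notMem_tsupport
    intro hmem
    exact hx (by simpa [Real.closedBall_eq_Icc] using hRs hmem)
  have hRφ' : ∀ x : ℝ, x ∉ Set.Icc (-R) R → deriv φ x = 0 := by
    intro x hx
    apply image_eq_zero_of_notMem_tsupport
    intro hmem
    have : x ∈ tsupport φ :=
      closure_minimal support_deriv_subset (isClosed_tsupport φ) hmem
    exact hx (by simpa [Real.closedBall_eq_Icc] using hRs this)
  set S : Set ℝ := Set.Icc (-(R + ((M : ℝ) + 1))) (R + ((M : ℝ) + 1)) with hS
  have hScompact : IsCompact S := by rw [hS]; exact isCompact_Icc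
  have hSmeas : MeasurableSet S := hScompact.measurableSet
  have hSfin : volume S ≠ ⊤ := by rw [hS]; exact measure_Icc_lt_top.ne
  -- vanishing of h n outside S when ε n ≤ 1
  have hvanish : ∀ n, ε n ≤ 1 → ∀ y, y ∉ S → h n y = 0 := by
    intro n hεn y hy
    have hy' : y < -(R + ((M : ℝ) + 1)) ∨ R + ((M : ℝ) + 1) < y := by
      rcases lt_or_ge y (-(R + ((M : ℝ) + 1))) with hlt | hge
      · exact Or.inl hlt
      · refine Or.inr ?_
        by_contra hcon
        exact hy ⟨hge, not_lt.mp hcon⟩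
    have hz : ∀ c : ℝ, |c| ≤ (M : ℝ) + 1 → φ (y - c) = 0 := by
      intro c hc
      apply hRφ
      intro hmem
      obtain ⟨h1, h2⟩ := hmem
      rcases hy' with hl | hr
      · have := abs_le.mp hc
        nlinarith [this.1, this.2]
      · have := abs_le.mp hc
        nlinarith [this.1, this.2]
    have hz' : deriv φ y = 0 := by
      apply hRφ'
      intro hmem
      obtain ⟨h1, h2⟩ := hmem
      rcases hy' with hl | hr
      · nlinarith [Nat.cast_nonneg (α := ℝ) M]
      · nlinarith [Nat.cast_nonneg (α := ℝ) M]
    have hεpos := hε n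
    have hsum : ψ n y = 0 := by
      apply Finset.sum_eq_zero
      intro i hi
      obtain ⟨hi1, hi2⟩ := Finset.mem_Icc.mp hi
      have hi1' : (1 : ℝ) ≤ (i : ℝ) := by exact_mod_cast hi1
      have hi2' : (i : ℝ) ≤ (M : ℝ) := by exact_mod_cast hi2
      have e1 : φ (y - (i : ℝ) * ε n) = 0 := by
        apply hz
        rw [abs_le]
        constructor <;> nlinarith
      have e2 : φ (y - (1 - (i : ℝ)) * ε n) = 0 := by
        apply hz
        rw [abs_le]
        constructor <;> nlinarith
      rw [e1, e2]; ring
    simp only [hh, hsum, hz']; ring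
  -- continuity of h n
  have hcontψ : ∀ n, Continuous (ψ n) := by
    intro n
    apply continuous_finset_sum
    intro i _
    exact continuous_const.mul
      ((hφcont.comp (continuous_id.sub continuous_const)).sub
        (hφcont.comp (continuous_id.sub continuous_const)))
  have hconth : ∀ n, Continuous (h n) := fun n =>
    (hcontψ n).add (continuous_const.mul hφ'cont)
  -- L² norm of h n tends to 0
  have hnorm_lim : Tendsto (fun n => eLpNorm (h n) 2 volume) atTop (nhds 0) := by
    rw [ENNReal.tendsto_nhds_zero]
    intro η hη
    obtain ⟨η', hη'def⟩ : ∃ x : ℝ≥0∞, x = min η 1 := ⟨_, rfl⟩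
    have hη'pos : (0 : ℝ≥0∞) < η' := by rw [hη'def]; exact lt_min hη zero_lt_one
    have hη'top : η' ≠ ⊤ := by
      rw [hη'def]; exact ne_top_of_le_ne_top ENNReal.one_ne_top (min_le_right _ _)
    have hη'le : η' ≤ η := by rw [hη'def]; exact min_le_left _ _
    obtain ⟨P, hP⟩ : ∃ x : ℝ≥0∞, x = volume S ^ (1 / (2:ℝ)) := ⟨_, rfl⟩
    have hPtop : P ≠ ⊤ := by
      rw [hP]; exact ENNReal.rpow_ne_top_of_nonneg (by norm_num) hSfin
    obtain ⟨δ, hδdef⟩ : ∃ x : ℝ, x = η'.toReal / (P.toReal + 1) := ⟨_, rfl⟩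
    have hδ : 0 < δ := by
      rw [hδdef]
      exact div_pos (ENNReal.toReal_pos hη'pos.ne' hη'top) (by positivity)
    obtain ⟨B, hB⟩ : ∃ x : ℝ, x = ∑ i ∈ Finset.Icc 1 M, |ρ i| * (2 * (i:ℝ) - 1) := ⟨_, rfl⟩
    have hB0 : 0 ≤ B := by
      rw [hB]
      refine Finset.sum_nonneg fun i hi => ?_
      obtain ⟨hi1, _⟩ := Finset.mem_Icc.mp hi
      have h1 : (1:ℝ) ≤ (i:ℝ) := by exact_mod_cast hi1
      have h2 := abs_nonneg (ρ i)
      nlinarith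
    obtain ⟨δ₀, hδ₀def⟩ : ∃ x : ℝ, x = δ / (B + 1) := ⟨_, rfl⟩
    have hδ₀ : 0 < δ₀ := by rw [hδ₀def]; exact div_pos hδ (by linarith)
    obtain ⟨θ, hθ, hθimp⟩ := Metric.uniformContinuous_iff.mp
      (hφ'cont.uniformContinuous_of_tendsto_cocompact hφ'c.is_zero_at_infty) δ₀ hδ₀
    have hev : ∀ᶠ n in atTop, ε n < min 1 (θ / ((M:ℝ) + 1)) :=
      hε0.eventually_lt_const (lt_min one_pos (by positivity))
    filter_upwards [hev] with n hn
    have hεn1 : ε n ≤ 1 := (lt_min_iff.mp hn).1.le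
    have hεnθ : ((M:ℝ) + 1) * ε n < θ := by
      have hlt := (lt_min_iff.mp hn).2
      have hM1 : (0:ℝ) < (M:ℝ) + 1 := by positivity
      calc ((M:ℝ)+1) * ε n < ((M:ℝ)+1) * (θ / ((M:ℝ)+1)) :=
            mul_lt_mul_of_pos_left hlt hM1
        _ = θ := by field_simp
    have hpt : ∀ y : ℝ, ‖h n y‖ ≤ ‖S.indicator (fun _ => δ) y‖ := by
      intro y
      by_cases hy : y ∈ S
      · rw [Set.indicator_of_mem hy]
        rw [Real.norm_eq_abs, Real.norm_eq_abs, abs_of_pos hδ]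
        have hεpos := hε n
        have hsplit : h n y = ∑ i ∈ Finset.Icc 1 M, ρ i *
            ((φ (y - (i:ℝ) * ε n) - φ (y - (1 - (i:ℝ)) * ε n)) / ε n
              + (2 * (i:ℝ) - 1) * deriv φ y) := by
          simp only [hh, hψ, hK, Finset.sum_mul]
          rw [← Finset.sum_add_distrib]
          exact Finset.sum_congr rfl fun i _ => by ring
        have key : ∀ i ∈ Finset.Icc 1 M,
            |(φ (y - (i:ℝ) * ε n) - φ (y - (1 - (i:ℝ)) * ε n)) / ε n
              + (2 * (i:ℝ) - 1) * deriv φ y| ≤ (2 * (i:ℝ) - 1) * δ₀ := by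
          intro i hi
          obtain ⟨hi1, hi2⟩ := Finset.mem_Icc.mp hi
          have hi1' : (1:ℝ) ≤ (i:ℝ) := by exact_mod_cast hi1
          have hi2' : (i:ℝ) ≤ (M:ℝ) := by exact_mod_cast hi2
          obtain ⟨a, ha⟩ : ∃ x : ℝ, x = y - (i:ℝ) * ε n := ⟨_, rfl⟩
          obtain ⟨b, hb⟩ : ∃ x : ℝ, x = y - (1 - (i:ℝ)) * ε n := ⟨_, rfl⟩
          rw [← ha, ← hb]
          have hab : a < b := by rw [ha, hb]; nlinarith
          obtain ⟨ξ, hξ, hslope⟩ := exists_hasDerivAt_eq_slope φ (deriv φ) hab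
            (hφcont.continuousOn) (fun x _ => (hφdiff x).hasDerivAt)
          have hba : b - a = (2 * (i:ℝ) - 1) * ε n := by rw [ha, hb]; ring
          have hterm : (φ a - φ b) / ε n = -((2 * (i:ℝ) - 1) * deriv φ ξ) := by
            rw [hslope, hba]
            have h2i : (2 * (i:ℝ) - 1) ≠ 0 := by nlinarith
            field_simp
            ring
          rw [hterm]
          have hdist : |y - ξ| < θ := by
            obtain ⟨hξ1, hξ2⟩ := hξ
            rw [hb] at hξ2
            rw [ha] at hξ1
            rw [abs_lt]
            constructor
            · nlinarith
            · nlinarith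
          have hclose : |deriv φ y - deriv φ ξ| < δ₀ := by
            have hc := hθimp (show dist y ξ < θ by rwa [Real.dist_eq])
            rwa [Real.dist_eq] at hc
          calc |-((2*(i:ℝ)-1) * deriv φ ξ) + (2*(i:ℝ)-1) * deriv φ y|
              = (2*(i:ℝ)-1) * |deriv φ y - deriv φ ξ| := by
                rw [show -((2*(i:ℝ)-1) * deriv φ ξ) + (2*(i:ℝ)-1) * deriv φ y
                    = (2*(i:ℝ)-1) * (deriv φ y - deriv φ ξ) by ring, abs_mul,
                  abs_of_nonneg (by nlinarith : (0:ℝ) ≤ 2*(i:ℝ)-1)]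
            _ ≤ (2*(i:ℝ)-1) * δ₀ := by nlinarith [abs_nonneg (deriv φ y - deriv φ ξ)]
        calc |h n y| ≤ ∑ i ∈ Finset.Icc 1 M, |ρ i *
              ((φ (y - (i:ℝ)*ε n) - φ (y - (1-(i:ℝ))*ε n)) / ε n + (2*(i:ℝ)-1)*deriv φ y)| := by
              rw [hsplit]; exact Finset.abs_sum_le_sum_abs _ _
          _ ≤ ∑ i ∈ Finset.Icc 1 M, |ρ i| * ((2*(i:ℝ)-1) * δ₀) := by
              refine Finset.sum_le_sum fun i hi => ?_
              rw [abs_mul]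
              exact mul_le_mul_of_nonneg_left (key i hi) (abs_nonneg _)
          _ = B * δ₀ := by
              rw [hB, Finset.sum_mul]
              exact Finset.sum_congr rfl fun i _ => by ring
          _ ≤ δ := by
              have hB1 : (0:ℝ) < B + 1 := by linarith
              rw [hδ₀def, mul_div_assoc', div_le_iff₀ hB1]
              nlinarith
      · rw [Set.indicator_of_notMem hy, hvanish n hεn1 y hy]
    calc eLpNorm (h n) 2 volume ≤ eLpNorm (S.indicator fun _ => δ) 2 volume := eLpNorm_mono hpt
      _ = ‖δ‖₊ * volume S ^ (1 / (2:ℝ≥0∞).toReal) :=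
          eLpNorm_indicator_const hSmeas two_ne_zero ENNReal.ofNat_ne_top
      _ = ENNReal.ofReal δ * P := by
          rw [hP, ← enorm_eq_nnnorm, Real.enorm_eq_ofReal hδ.le]
          norm_num
      _ ≤ η' := by
          rw [← ENNReal.ofReal_toReal hPtop, ← ENNReal.ofReal_mul hδ.le,
            ← ENNReal.ofReal_toReal hη'top]
          apply ENNReal.ofReal_le_ofReal
          have hPt : (0:ℝ) ≤ P.toReal := ENNReal.toReal_nonneg
          have hη't : (0:ℝ) ≤ η'.toReal := ENNReal.toReal_nonneg
          rw [hδdef, div_mul_eq_mul_div, div_le_iff₀ (by positivity)]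
          nlinarith
      _ ≤ η := hη'le
  -- the error integral tends to 0
  have hbound : ∀ᶠ n in atTop, ‖∫ x : ℝ, U n x * h n x‖
      ≤ (eLpNorm (h n) 2 volume).toReal * (C : ℝ) := by
    filter_upwards [hε0.eventually_lt_const one_pos] with n hεn1
    have hhCS : HasCompactSupport (h n) := HasCompactSupport.intro hScompact (hvanish n hεn1.le)
    have hhL2 : MemLp (h n) 2 (volume : Measure ℝ) := (hconth n).memLp_of_hasCompactSupport hhCS
    have h1 : ‖∫ x : ℝ, U n x * h n x‖
        ≤ (eLpNorm (fun x => U n x * h n x) 1 volume).toReal := by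
      rw [eLpNorm_one_eq_lintegral_enorm]
      simp_rw [← ofReal_norm_eq_enorm]
      exact norm_integral_le_lintegral_norm _
    have h2 : eLpNorm (fun x => U n x * h n x) 1 volume
        ≤ eLpNorm (h n) 2 volume * eLpNorm (U n) 2 volume := by
      have heq : (fun x => U n x * h n x) = (h n • U n) := by
        funext x; simp [mul_comm]
      rw [heq]
      exact eLpNorm_smul_le_mul_eLpNorm (hL2 n).1 hhL2.1
    have h3 : (eLpNorm (h n) 2 volume * eLpNorm (U n) 2 volume).toReal
        ≤ (eLpNorm (h n) 2 volume).toReal * (C:ℝ) := by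
      rw [ENNReal.toReal_mul]
      refine mul_le_mul_of_nonneg_left ?_ ENNReal.toReal_nonneg
      calc (eLpNorm (U n) 2 volume).toReal ≤ ((C : ℝ≥0∞)).toReal :=
            ENNReal.toReal_mono ENNReal.coe_ne_top (hC n)
        _ = (C:ℝ) := by simp
    calc ‖∫ x : ℝ, U n x * h n x‖ ≤ _ := h1
      _ ≤ (eLpNorm (h n) 2 volume * eLpNorm (U n) 2 volume).toReal :=
          ENNReal.toReal_mono (ENNReal.mul_ne_top hhL2.eLpNorm_ne_top (hL2 n).eLpNorm_ne_top) h2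
      _ ≤ _ := h3
  have hb0 : Tendsto (fun n => (eLpNorm (h n) 2 volume).toReal * (C:ℝ)) atTop (nhds 0) := by
    have h4 : Tendsto (fun n => (eLpNorm (h n) 2 volume).toReal) atTop (nhds 0) := by
      have h5 := (ENNReal.tendsto_toReal (a := 0) (by simp)).comp hnorm_lim
      exact h5
    simpa using h4.mul_const (C:ℝ)
  have hErr : Tendsto (fun n => ∫ x : ℝ, U n x * h n x) atTop (nhds 0) :=
    squeeze_zero_norm' hbound hb0
  have hφ'conv := hconvu (deriv φ) hφ'smooth hφ'c
  have hmain : Tendsto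
      (fun n => ∫ x : ℝ,
        pcInterp (ε n) (fun k => (1 / ε n) * discreteNonlocalGradient M ρ (u' n) k) x * φ x)
      atTop (nhds (0 - K * ∫ x : ℝ, u x * deriv φ x)) := by
    refine Tendsto.congr' ?_ (hErr.sub (hφ'conv.const_mul K))
    filter_upwards [hε0.eventually_lt_const one_pos] with n hεn1
    have hhCS : HasCompactSupport (h n) := HasCompactSupport.intro hScompact (hvanish n hεn1.le)
    have hhL2 : MemLp (h n) 2 (volume : Measure ℝ) := (hconth n).memLp_of_hasCompactSupport hhCS
    have hs1 := step1 M ρ (hε n) (u' n) (hL2 n) hφL2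
    have hint1 : Integrable (fun x => U n x * deriv φ x) volume :=
      integrable_mul_of_memL2 (hL2 n) hφ'L2
    have hinth : Integrable (fun x => U n x * h n x) volume :=
      integrable_mul_of_memL2 (hL2 n) hhL2
    have hsub : (∫ x : ℝ, U n x * h n x) - K * ∫ x : ℝ, U n x * deriv φ x
        = ∫ x : ℝ, U n x * ψ n x := by
      rw [← integral_const_mul K fun x => U n x * deriv φ x,
        ← integral_sub hinth (hint1.const_mul K)]
      congr 1
      funext x
      simp only [hh]
      ring
    calc (∫ x : ℝ, U n x * h n x) - K * ∫ x : ℝ, U n x * deriv φ x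
        = ∫ x : ℝ, U n x * ψ n x := hsub
      _ = ∫ x : ℝ,
            pcInterp (ε n) (fun k => (1 / ε n) * discreteNonlocalGradient M ρ (u' n) k) x * φ x := by
          simp only [hU, hψ]
          exact hs1.symm
  have hfin := tendsto_nhds_unique (hconvg φ hφ hφc) hmain
  rw [hfin]
  ring
end

section
/- Let M ≥ 1 and ρ_1, …, ρ_M be real numbers, set K = ∑_{j=1}^M (2j−1) ρ_j, let f : ℝ → ℝ be continuous with f(0) = 0, and let u : ℝ → ℝ be continuously differentiable with compact support. For ε > 0 put u^ε_k = u(εk). Then lim_{ε→0⁺} ∑_{k∈ℤ} ε f( (1/ε) ( −∑_{i=1}^M ρ_i u^ε_{k+1−i} + ∑_{i=1}^M ρ_i u^ε_{k+i} ) ) = ∫_ℝ f(K u′(t)) dt. -/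
open Filter MeasureTheory Set

section Aux

lemma aux_floor_tendsto (t : ℝ) :
    Tendsto (fun ε : ℝ => ε * (⌊t / ε⌋ : ℝ)) (nhdsWithin 0 (Set.Ioi 0)) (nhds t) := by
  have h1 : Tendsto (fun ε : ℝ => t - ε) (nhdsWithin 0 (Set.Ioi 0)) (nhds t) := by
    have : Tendsto (fun ε : ℝ => ε) (nhdsWithin 0 (Set.Ioi 0)) (nhds 0) :=
      tendsto_id.mono_left nhdsWithin_le_nhds
    simpa using tendsto_const_nhds.sub this
  refine tendsto_of_tendsto_of_tendsto_of_le_of_le' h1 tendsto_const_nhds ?_ ?_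
  · filter_upwards [self_mem_nhdsWithin] with ε (hε : 0 < ε)
    have h2 : t / ε < ⌊t / ε⌋ + 1 := Int.lt_floor_add_one _
    have := (div_lt_iff₀ hε).mp h2
    nlinarith
  · filter_upwards [self_mem_nhdsWithin] with ε (hε : 0 < ε)
    have h2 : (⌊t / ε⌋ : ℝ) ≤ t / ε := Int.floor_le _
    calc ε * (⌊t / ε⌋ : ℝ) ≤ ε * (t / ε) := by nlinarith
      _ = t := by field_simp

lemma aux_slope (u : ℝ → ℝ) (hu : ContDiff ℝ 1 u) (t : ℝ) (r : ℝ) (hr : 1 ≤ r) :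
    Tendsto (fun ε : ℝ =>
        (u (ε * ((⌊t / ε⌋ : ℝ) + r)) - u (ε * ((⌊t / ε⌋ : ℝ) + 1 - r))) / ε)
      (nhdsWithin 0 (Set.Ioi 0)) (nhds ((2 * r - 1) * deriv u t)) := by
  have hd : Differentiable ℝ u := hu.differentiable one_ne_zero
  have hdc : Continuous (deriv u) := hu.continuous_deriv le_rfl
  have hr' : (0:ℝ) < 2 * r - 1 := by linarith
  have key : ∀ ε : ℝ, 0 < ε → ∃ x,
      x ∈ Ioo (ε * ((⌊t / ε⌋ : ℝ) + 1 - r)) (ε * ((⌊t / ε⌋ : ℝ) + r)) ∧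
      (u (ε * ((⌊t / ε⌋ : ℝ) + r)) - u (ε * ((⌊t / ε⌋ : ℝ) + 1 - r))) / ε
        = (2 * r - 1) * deriv u x := by
    intro ε hε
    set a := ε * ((⌊t / ε⌋ : ℝ) + 1 - r) with ha
    set b := ε * ((⌊t / ε⌋ : ℝ) + r) with hb
    have hab : a < b := by
      have : b - a = ε * (2 * r - 1) := by rw [ha, hb]; ring
      nlinarith
    obtain ⟨x, hx, hx2⟩ := exists_hasDerivAt_eq_slope u (deriv u) hab
      hd.continuous.continuousOn (fun x _ => (hd x).hasDerivAt)
    refine ⟨x, hx, ?_⟩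
    have hba : b - a = ε * (2 * r - 1) := by rw [ha, hb]; ring
    have hne : b - a ≠ 0 := by nlinarith
    have : u b - u a = deriv u x * (b - a) := by
      rw [hx2, div_mul_cancel₀ _ hne]
    rw [this, hba]
    field_simp
  set c : ℝ → ℝ := fun ε => if h : 0 < ε then (key ε h).choose else t with hc
  have hmem : ∀ ε : ℝ, 0 < ε → c ε ∈
      Ioo (ε * ((⌊t / ε⌋ : ℝ) + 1 - r)) (ε * ((⌊t / ε⌋ : ℝ) + r)) := by
    intro ε hε; rw [hc]; simp only [dif_pos hε]; exact (key ε hε).choose_spec.1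
  have heq : ∀ ε : ℝ, 0 < ε →
      (u (ε * ((⌊t / ε⌋ : ℝ) + r)) - u (ε * ((⌊t / ε⌋ : ℝ) + 1 - r))) / ε
        = (2 * r - 1) * deriv u (c ε) := by
    intro ε hε; rw [hc]; simp only [dif_pos hε]; exact (key ε hε).choose_spec.2
  have hteps : Tendsto (fun ε : ℝ => ε) (nhdsWithin 0 (Set.Ioi 0)) (nhds 0) :=
      tendsto_id.mono_left nhdsWithin_le_nhds
  have hlo : Tendsto (fun ε : ℝ => ε * ((⌊t / ε⌋ : ℝ) + 1 - r)) (nhdsWithin 0 (Set.Ioi 0))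
      (nhds t) := by
    have : (fun ε : ℝ => ε * ((⌊t / ε⌋ : ℝ) + 1 - r))
        = fun ε : ℝ => ε * (⌊t / ε⌋ : ℝ) + ε * (1 - r) := by funext ε; ring
    rw [this]
    have h2 : Tendsto (fun ε : ℝ => ε * (1 - r)) (nhdsWithin 0 (Set.Ioi 0)) (nhds 0) := by
      simpa using hteps.mul_const (1 - r)
    simpa using (aux_floor_tendsto t).add h2
  have hhi : Tendsto (fun ε : ℝ => ε * ((⌊t / ε⌋ : ℝ) + r)) (nhdsWithin 0 (Set.Ioi 0))
      (nhds t) := by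
    have : (fun ε : ℝ => ε * ((⌊t / ε⌋ : ℝ) + r))
        = fun ε : ℝ => ε * (⌊t / ε⌋ : ℝ) + ε * r := by funext ε; ring
    rw [this]
    have h2 : Tendsto (fun ε : ℝ => ε * r) (nhdsWithin 0 (Set.Ioi 0)) (nhds 0) := by
      simpa using hteps.mul_const r
    simpa using (aux_floor_tendsto t).add h2
  have hct : Tendsto c (nhdsWithin 0 (Set.Ioi 0)) (nhds t) := by
    refine tendsto_of_tendsto_of_tendsto_of_le_of_le' hlo hhi ?_ ?_
    · filter_upwards [self_mem_nhdsWithin] with ε (hε : 0 < ε)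
      exact (hmem ε hε).1.le
    · filter_upwards [self_mem_nhdsWithin] with ε (hε : 0 < ε)
      exact (hmem ε hε).2.le
  have : Tendsto (fun ε => (2 * r - 1) * deriv u (c ε)) (nhdsWithin 0 (Set.Ioi 0))
      (nhds ((2 * r - 1) * deriv u t)) :=
    (((hdc.tendsto t).comp hct).const_mul _)
  refine this.congr' ?_
  filter_upwards [self_mem_nhdsWithin] with ε (hε : 0 < ε)
  exact (heq ε hε).symm

lemma aux_sum_eq_integral (M : ℕ) (hM : 1 ≤ M) (ρ : ℕ → ℝ) (f : ℝ → ℝ) (hf0 : f 0 = 0)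
    (u : ℝ → ℝ) (R : ℝ) (hR1 : 1 ≤ R) (hR : ∀ x : ℝ, R < |x| → u x = 0)
    (ε : ℝ) (hε : 0 < ε) :
    (∑ᶠ k : ℤ, ε * f ((1 / ε) *
        (-∑ i ∈ Finset.Icc 1 M, ρ i * u (ε * ((k : ℝ) + 1 - (i : ℝ)))
          + ∑ i ∈ Finset.Icc 1 M, ρ i * u (ε * ((k : ℝ) + (i : ℝ))))))
    = ∫ t : ℝ, f ((1 / ε) *
        (-∑ i ∈ Finset.Icc 1 M, ρ i * u (ε * ((⌊t / ε⌋ : ℝ) + 1 - (i : ℝ)))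
          + ∑ i ∈ Finset.Icc 1 M, ρ i * u (ε * ((⌊t / ε⌋ : ℝ) + (i : ℝ))))) := by
  have hRe : ε * (R / ε) = R := by field_simp
  set F : ℝ → ℝ := fun x => f ((1 / ε) *
        (-∑ i ∈ Finset.Icc 1 M, ρ i * u (ε * (x + 1 - (i : ℝ)))
          + ∑ i ∈ Finset.Icc 1 M, ρ i * u (ε * (x + (i : ℝ))))) with hF
  show (∑ᶠ k : ℤ, ε * F (k : ℝ)) = ∫ t : ℝ, F ((⌊t / ε⌋ : ℤ) : ℝ)
  have hM1 : (1 : ℝ) ≤ (M : ℝ) := by exact_mod_cast hM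
  have hFzero : ∀ x : ℝ, R / ε + M + 1 ≤ |x| → F x = 0 := by
    intro x hx
    have hzero : ∀ (c : ℝ), |c| ≤ (M : ℝ) → u (ε * (x + c)) = 0 := by
      intro c hc
      apply hR
      have h1 : |x| - |c| ≤ |x + c| := by
        have := abs_sub_abs_le_abs_sub x (-c)
        simpa [sub_neg_eq_add] using this
      have h2 : R / ε + 1 ≤ |x + c| := by linarith
      have h3 : ε * (R / ε + 1) ≤ ε * |x + c| := by nlinarith
      rw [abs_mul, abs_of_pos hε]
      nlinarith
    have hs1 : ∑ i ∈ Finset.Icc 1 M, ρ i * u (ε * (x + 1 - (i : ℝ))) = 0 := by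
      refine Finset.sum_eq_zero fun i hi => ?_
      obtain ⟨hi1, hi2⟩ := Finset.mem_Icc.mp hi
      have h1i : (1 : ℝ) ≤ (i : ℝ) := by exact_mod_cast hi1
      have hiM : (i : ℝ) ≤ (M : ℝ) := by exact_mod_cast hi2
      have : u (ε * (x + (1 - (i : ℝ)))) = 0 := by
        apply hzero; rw [abs_of_nonpos (by linarith)]; linarith
      rw [show x + 1 - (i : ℝ) = x + (1 - (i : ℝ)) by ring, this, mul_zero]
    have hs2 : ∑ i ∈ Finset.Icc 1 M, ρ i * u (ε * (x + (i : ℝ))) = 0 := by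
      refine Finset.sum_eq_zero fun i hi => ?_
      obtain ⟨hi1, hi2⟩ := Finset.mem_Icc.mp hi
      have h1i : (1 : ℝ) ≤ (i : ℝ) := by exact_mod_cast hi1
      have hiM : (i : ℝ) ≤ (M : ℝ) := by exact_mod_cast hi2
      have : u (ε * (x + (i : ℝ))) = 0 := by
        apply hzero; rw [abs_of_nonneg (by linarith)]; linarith
      rw [this, mul_zero]
    rw [hF]; simp only [hs1, hs2, neg_zero, add_zero, mul_zero, hf0]
  set N : ℤ := ⌈R / ε⌉ + M + 1 with hN
  have hceil : R / ε ≤ (⌈R / ε⌉ : ℝ) := Int.le_ceil _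
  have hNr : ((N : ℤ) : ℝ) = (⌈R / ε⌉ : ℝ) + M + 1 := by rw [hN]; push_cast; ring
  have hNk : ∀ k : ℤ, k ∉ Finset.Icc (-N) N → F (k : ℝ) = 0 := by
    intro k hk
    apply hFzero
    rw [Finset.mem_Icc, not_and_or, not_le, not_le] at hk
    rcases hk with hk | hk
    · have h1 : (k : ℝ) ≤ -((N : ℤ) : ℝ) := by exact_mod_cast (by omega : k ≤ -N)
      calc R / ε + M + 1 ≤ ((N : ℤ) : ℝ) := by rw [hNr]; linarith
        _ ≤ -(k : ℝ) := by linarith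
        _ ≤ |(k : ℝ)| := neg_le_abs _
    · have h1 : ((N : ℤ) : ℝ) ≤ (k : ℝ) := by exact_mod_cast hk.le
      calc R / ε + M + 1 ≤ ((N : ℤ) : ℝ) := by rw [hNr]; linarith
        _ ≤ (k : ℝ) := h1
        _ ≤ |(k : ℝ)| := le_abs_self _
  have hsuppF : Function.support (fun k : ℤ => ε * F (k : ℝ)) ⊆ ↑(Finset.Icc (-N) N) := by
    intro k hk
    by_contra h
    exact hk (by simp only [hNk k h, mul_zero])
  rw [finsum_eq_sum_of_support_subset _ hsuppF]
  have hfloor : ∀ (k : ℤ) (t : ℝ), t ∈ Set.Ico (ε * (k : ℝ)) (ε * ((k : ℝ) + 1)) →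
      (⌊t / ε⌋ : ℤ) = k := by
    intro k t ht
    rw [Int.floor_eq_iff]
    constructor
    · rw [le_div_iff₀ hε]; have := ht.1; nlinarith
    · push_cast
      rw [div_lt_iff₀ hε]; have := ht.2; nlinarith
  have hfl1 : ∀ t : ℝ, ε * (⌊t / ε⌋ : ℝ) ≤ t := by
    intro t
    have h := Int.floor_le (t / ε)
    have := mul_le_mul_of_nonneg_left h hε.le
    calc ε * (⌊t / ε⌋ : ℝ) ≤ ε * (t / ε) := this
      _ = t := by field_simp
  have hfl2 : ∀ t : ℝ, t < ε * ((⌊t / ε⌋ : ℝ) + 1) := by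
    intro t
    have h := Int.lt_floor_add_one (t / ε)
    have := (div_lt_iff₀ hε).mp h
    nlinarith
  have hU : ∀ t : ℝ, t ∉ ⋃ k ∈ Finset.Icc (-N) N, Set.Ico (ε * (k : ℝ)) (ε * ((k : ℝ) + 1)) →
      F ((⌊t / ε⌋ : ℤ) : ℝ) = 0 := by
    intro t ht
    by_contra h
    apply ht
    have hk : (⌊t / ε⌋ : ℤ) ∈ Finset.Icc (-N) N := by
      by_contra hk'; exact h (hNk _ hk')
    exact Set.mem_biUnion hk ⟨hfl1 t, hfl2 t⟩
  rw [← setIntegral_eq_integral_of_forall_compl_eq_zero hU]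
  rw [integral_biUnion_finset _ (fun k _ => measurableSet_Ico) ?hdisj ?hint]
  case hdisj =>
    intro k _ k' _ hne
    simp only [Function.onFun]
    rw [Set.Ico_disjoint_Ico]
    rcases lt_or_gt_of_ne hne with h | h
    · have hc : (k : ℝ) + 1 ≤ (k' : ℝ) := by exact_mod_cast h
      refine le_trans (min_le_left _ _) (le_trans ?_ (le_max_right _ _))
      nlinarith
    · have hc : (k' : ℝ) + 1 ≤ (k : ℝ) := by exact_mod_cast h
      refine le_trans (min_le_right _ _) (le_trans ?_ (le_max_left _ _))
      nlinarith
  case hint =>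
    intro k _
    refine IntegrableOn.congr_fun (f := fun _ => F (k : ℝ)) ?_ ?_ measurableSet_Ico
    · exact integrableOn_const measure_Ico_lt_top.ne
    · intro t ht
      simp only
      rw [hfloor k t ht]
  refine Finset.sum_congr rfl fun k _ => ?_
  rw [setIntegral_congr_fun measurableSet_Ico (g := fun _ => F ((k : ℤ) : ℝ))
    (fun t ht => by simp only; rw [hfloor k t ht])]
  rw [setIntegral_const, measureReal_def, Real.volume_Ico,
    show ε * ((k : ℝ) + 1) - ε * (k : ℝ) = ε by ring,
    ENNReal.toReal_ofReal hε.le, smul_eq_mul]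

end Aux

open Filter

set_option maxHeartbeats 2000000 in
/-- For `f` continuous with `f(0) = 0`, `u` continuously differentiable with compact support,
and `u^ε_k = u(εk)`, the discrete energies converge:
`lim_{ε→0⁺} ∑_k ε f((1/ε)(−∑_{i=1}^M ρ_i u^ε_{k+1−i} + ∑_{i=1}^M ρ_i u^ε_{k+i}))
  = ∫_ℝ f(K u′(t)) dt`, where `K = ∑_{j=1}^M (2j−1)ρ_j`. -/
theorem discrete_energy_pointwise_convergence (M : ℕ) (hM : 1 ≤ M) (ρ : ℕ → ℝ)
    (f : ℝ → ℝ) (hf : Continuous f) (hf0 : f 0 = 0)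
    (u : ℝ → ℝ) (hu : ContDiff ℝ 1 u) (hsupp : HasCompactSupport u) :
    Tendsto
      (fun ε : ℝ => ∑ᶠ k : ℤ,
        ε * f ((1 / ε) *
          (-∑ i ∈ Finset.Icc 1 M, ρ i * u (ε * ((k : ℝ) + 1 - (i : ℝ)))
            + ∑ i ∈ Finset.Icc 1 M, ρ i * u (ε * ((k : ℝ) + (i : ℝ))))))
      (nhdsWithin 0 (Set.Ioi 0))
      (nhds (∫ t : ℝ, f ((∑ j ∈ Finset.Icc 1 M, (2 * (j : ℝ) - 1) * ρ j) * deriv u t))) := by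
  set l := nhdsWithin (0:ℝ) (Set.Ioi 0) with hl
  set K := ∑ j ∈ Finset.Icc 1 M, (2 * (j : ℝ) - 1) * ρ j with hK
  have hM1 : (1 : ℝ) ≤ (M : ℝ) := by exact_mod_cast hM
  obtain ⟨L, hL⟩ := hsupp.deriv.exists_bound_of_continuous (hu.continuous_deriv le_rfl)
  simp only [Real.norm_eq_abs] at hL
  have hL0 : 0 ≤ L := (abs_nonneg _).trans (hL 0)
  have hd : Differentiable ℝ u := hu.differentiable one_ne_zero
  have hlip : ∀ a b : ℝ, |u a - u b| ≤ L * |a - b| := by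
    intro a b
    have := convex_univ.norm_image_sub_le_of_norm_deriv_le (f := u) (fun x _ => hd x)
      (fun x _ => hL x) (Set.mem_univ b) (Set.mem_univ a)
    simpa [Real.norm_eq_abs] using this
  obtain ⟨R₀, hR₀⟩ := hsupp.isCompact.isBounded.subset_closedBall 0
  set R := max R₀ 1 with hRdef
  have hR1 : (1:ℝ) ≤ R := le_max_right _ _
  have hR : ∀ x : ℝ, R < |x| → u x = 0 := by
    intro x hx
    by_contra h
    have hmem := hR₀ (subset_tsupport u h)
    rw [Metric.mem_closedBall, Real.dist_eq, sub_zero] at hmem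
    have : |x| ≤ R := hmem.trans (le_max_left _ _)
    linarith
  -- rewriting the inner expression as a sum of difference quotients
  have hrw : ∀ (ε : ℝ) (x : ℝ),
      (1 / ε) * (-∑ i ∈ Finset.Icc 1 M, ρ i * u (ε * (x + 1 - (i:ℝ)))
        + ∑ i ∈ Finset.Icc 1 M, ρ i * u (ε * (x + (i:ℝ))))
      = ∑ i ∈ Finset.Icc 1 M, ρ i * ((u (ε * (x + (i:ℝ))) - u (ε * (x + 1 - (i:ℝ)))) / ε) := by
    intro ε x
    rw [neg_add_eq_sub, ← Finset.sum_sub_distrib, Finset.mul_sum]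
    exact Finset.sum_congr rfl fun i _ => by ring
  -- pointwise limit
  have hlim : ∀ t : ℝ, Tendsto (fun ε : ℝ =>
      f ((1 / ε) * (-∑ i ∈ Finset.Icc 1 M, ρ i * u (ε * ((⌊t/ε⌋:ℝ) + 1 - (i:ℝ)))
        + ∑ i ∈ Finset.Icc 1 M, ρ i * u (ε * ((⌊t/ε⌋:ℝ) + (i:ℝ)))))) l
      (nhds (f (K * deriv u t))) := by
    intro t
    have h1 : Tendsto (fun ε : ℝ => ∑ i ∈ Finset.Icc 1 M,
        ρ i * ((u (ε * ((⌊t/ε⌋:ℝ) + (i:ℝ))) - u (ε * ((⌊t/ε⌋:ℝ) + 1 - (i:ℝ)))) / ε)) l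
        (nhds (∑ i ∈ Finset.Icc 1 M, ρ i * ((2 * (i:ℝ) - 1) * deriv u t))) := by
      refine tendsto_finset_sum _ fun i hi => ?_
      have h1i : (1:ℝ) ≤ (i:ℝ) := by exact_mod_cast (Finset.mem_Icc.mp hi).1
      exact (aux_slope u hu t (i:ℝ) h1i).const_mul (ρ i)
    have h2 : (∑ i ∈ Finset.Icc 1 M, ρ i * ((2 * (i:ℝ) - 1) * deriv u t)) = K * deriv u t := by
      rw [hK, Finset.sum_mul]
      exact Finset.sum_congr rfl fun i _ => by ring
    rw [← h2]
    exact (hf.tendsto _).comp (h1.congr fun ε => (hrw ε _).symm)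
  -- uniform bound on the inner expression
  set C := ∑ i ∈ Finset.Icc 1 M, |ρ i| * (L * (2 * (i:ℝ) - 1)) with hCdef
  have hC0 : 0 ≤ C := by
    refine Finset.sum_nonneg fun i hi => ?_
    have h1i : (1:ℝ) ≤ (i:ℝ) := by exact_mod_cast (Finset.mem_Icc.mp hi).1
    exact mul_nonneg (abs_nonneg _) (mul_nonneg hL0 (by linarith))
  have hCb : ∀ ε : ℝ, 0 < ε → ∀ x : ℝ,
      |∑ i ∈ Finset.Icc 1 M, ρ i * ((u (ε * (x + (i:ℝ))) - u (ε * (x + 1 - (i:ℝ)))) / ε)| ≤ C := by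
    intro ε hε x
    refine (Finset.abs_sum_le_sum_abs _ _).trans (Finset.sum_le_sum fun i hi => ?_)
    have h1i : (1:ℝ) ≤ (i:ℝ) := by exact_mod_cast (Finset.mem_Icc.mp hi).1
    have hd2 : |u (ε * (x + (i:ℝ))) - u (ε * (x + 1 - (i:ℝ)))| ≤ L * (ε * (2 * (i:ℝ) - 1)) := by
      have h := hlip (ε * (x + (i:ℝ))) (ε * (x + 1 - (i:ℝ)))
      have habs : |ε * (x + (i:ℝ)) - ε * (x + 1 - (i:ℝ))| = ε * (2 * (i:ℝ) - 1) := by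
        rw [show ε * (x + (i:ℝ)) - ε * (x + 1 - (i:ℝ)) = ε * (2 * (i:ℝ) - 1) by ring,
          abs_of_nonneg (by nlinarith)]
      rw [habs] at h
      exact h
    have hq : |u (ε * (x + (i:ℝ))) - u (ε * (x + 1 - (i:ℝ)))| / ε ≤ L * (2 * (i:ℝ) - 1) := by
      rw [div_le_iff₀ hε]; nlinarith
    rw [abs_mul, abs_div, abs_of_pos hε]
    exact mul_le_mul_of_nonneg_left hq (abs_nonneg _)
  obtain ⟨B, hB⟩ := isCompact_Icc.exists_bound_of_continuousOn
    (s := Set.Icc (-C) C) hf.continuousOn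
  simp only [Real.norm_eq_abs] at hB
  have hB0 : 0 ≤ B := (abs_nonneg _).trans (hB 0 (by constructor <;> linarith))
  set D := R + M + 1 with hDdef
  set bound : ℝ → ℝ := Set.indicator (Set.Icc (-D) D) (fun _ => B) with hbound
  have hbound_int : Integrable bound := by
    refine IntegrableOn.integrable_indicator ?_ measurableSet_Icc
    exact integrableOn_const measure_Icc_lt_top.ne
  -- measurability
  have hgm : ∀ ε : ℝ, AEStronglyMeasurable (fun t : ℝ =>
      f ((1 / ε) * (-∑ i ∈ Finset.Icc 1 M, ρ i * u (ε * ((⌊t/ε⌋:ℝ) + 1 - (i:ℝ)))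
        + ∑ i ∈ Finset.Icc 1 M, ρ i * u (ε * ((⌊t/ε⌋:ℝ) + (i:ℝ)))))) volume := by
    intro ε
    have hφ : Measurable fun t : ℝ => ((⌊t/ε⌋ : ℤ) : ℝ) :=
      measurable_from_top.comp (Int.measurable_floor.comp (measurable_id.div_const ε))
    have h1 : Measurable fun t : ℝ =>
        ∑ i ∈ Finset.Icc 1 M, ρ i * u (ε * (((⌊t/ε⌋:ℤ):ℝ) + 1 - (i:ℝ))) := by
      refine Finset.measurable_sum _ fun i _ => ?_
      exact (hu.continuous.measurable.comp
        (((hφ.add_const 1).sub_const ((i:ℝ))).const_mul ε)).const_mul (ρ i)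
    have h2 : Measurable fun t : ℝ =>
        ∑ i ∈ Finset.Icc 1 M, ρ i * u (ε * (((⌊t/ε⌋:ℤ):ℝ) + (i:ℝ))) := by
      refine Finset.measurable_sum _ fun i _ => ?_
      exact (hu.continuous.measurable.comp
        (((hφ.add_const ((i:ℝ)))).const_mul ε)).const_mul (ρ i)
    exact (hf.measurable.comp ((h1.neg.add h2).const_mul (1/ε))).aestronglyMeasurable
  -- the eventual bound
  have h_bound : ∀ᶠ ε in l, ∀ᵐ t : ℝ, ‖f ((1 / ε) *
      (-∑ i ∈ Finset.Icc 1 M, ρ i * u (ε * ((⌊t/ε⌋:ℝ) + 1 - (i:ℝ)))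
        + ∑ i ∈ Finset.Icc 1 M, ρ i * u (ε * ((⌊t/ε⌋:ℝ) + (i:ℝ)))))‖ ≤ bound t := by
    have hIoo : Set.Ioo (0:ℝ) 1 ∈ l := Ioo_mem_nhdsGT_of_mem (Set.mem_Ico.mpr ⟨le_rfl, one_pos⟩)
    filter_upwards [hIoo] with ε hε
    obtain ⟨hε0, hε1⟩ := hε
    refine Eventually.of_forall fun t => ?_
    by_cases ht : t ∈ Set.Icc (-D) D
    · rw [hbound, Set.indicator_of_mem ht, Real.norm_eq_abs, hrw ε _]
      exact hB _ (Set.mem_Icc.mpr (abs_le.mp (hCb ε hε0 ((⌊t/ε⌋:ℤ):ℝ))))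
    · rw [hbound, Set.indicator_of_notMem ht, Real.norm_eq_abs]
      have ht' : D < |t| := by
        by_contra h
        exact ht (Set.mem_Icc.mpr (abs_le.mp (not_lt.mp h)))
      have hfl1 : ε * (⌊t/ε⌋:ℝ) ≤ t := by
        have h := Int.floor_le (t / ε)
        have := mul_le_mul_of_nonneg_left h hε0.le
        calc ε * (⌊t/ε⌋:ℝ) ≤ ε * (t / ε) := this
          _ = t := by field_simp
      have hfl2 : t < ε * (⌊t/ε⌋:ℝ) + ε := by
        have h := Int.lt_floor_add_one (t / ε)
        have := (div_lt_iff₀ hε0).mp h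
        nlinarith
      have hzero : ∀ i ∈ Finset.Icc 1 M,
          u (ε * ((⌊t/ε⌋:ℝ) + 1 - (i:ℝ))) = 0 ∧ u (ε * ((⌊t/ε⌋:ℝ) + (i:ℝ))) = 0 := by
        intro i hi
        obtain ⟨hi1, hi2⟩ := Finset.mem_Icc.mp hi
        have h1i : (1:ℝ) ≤ (i:ℝ) := by exact_mod_cast hi1
        have hiM : (i:ℝ) ≤ (M:ℝ) := by exact_mod_cast hi2
        have hpos1 : (0:ℝ) ≤ (1 - ε) * ((i:ℝ) - 1) := by nlinarith
        have hpos2 : (0:ℝ) ≤ (1 - ε) * (i:ℝ) := by nlinarith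
        have hpos3 : (0:ℝ) ≤ ε * ((i:ℝ) - 1) := by nlinarith
        have hpos4 : (0:ℝ) < ε * (i:ℝ) := by nlinarith
        rcases lt_abs.mp ht' with h | h
        · -- t > D
          have he1 : R + M < ε * (⌊t/ε⌋:ℝ) := by
            rw [hDdef] at h; linarith
          have e1 : ε * ((⌊t/ε⌋:ℝ) + 1 - (i:ℝ)) = ε * (⌊t/ε⌋:ℝ) + ε * (1 - (i:ℝ)) := by ring
          have e2 : ε * ((⌊t/ε⌋:ℝ) + (i:ℝ)) = ε * (⌊t/ε⌋:ℝ) + ε * (i:ℝ) := by ring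
          have f1 : 1 - (M:ℝ) ≤ ε * (1 - (i:ℝ)) := by nlinarith
          constructor
          · apply hR
            have : R < ε * ((⌊t/ε⌋:ℝ) + 1 - (i:ℝ)) := by rw [e1]; linarith
            exact lt_of_lt_of_le this (le_abs_self _)
          · apply hR
            have : R < ε * ((⌊t/ε⌋:ℝ) + (i:ℝ)) := by rw [e2]; linarith
            exact lt_of_lt_of_le this (le_abs_self _)
        · -- t < -D
          have he1 : ε * (⌊t/ε⌋:ℝ) < -(R + M) := by
            rw [hDdef] at h; linarith
          have e1 : ε * ((⌊t/ε⌋:ℝ) + 1 - (i:ℝ)) = ε * (⌊t/ε⌋:ℝ) + ε * (1 - (i:ℝ)) := by ring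
          have e2 : ε * ((⌊t/ε⌋:ℝ) + (i:ℝ)) = ε * (⌊t/ε⌋:ℝ) + ε * (i:ℝ) := by ring
          have f1 : ε * (1 - (i:ℝ)) ≤ 0 := by nlinarith
          have f2 : ε * (i:ℝ) ≤ (M:ℝ) := by nlinarith
          constructor
          · apply hR
            have : R < -(ε * ((⌊t/ε⌋:ℝ) + 1 - (i:ℝ))) := by rw [e1]; linarith
            exact lt_of_lt_of_le this (neg_le_abs _)
          · apply hR
            have : R < -(ε * ((⌊t/ε⌋:ℝ) + (i:ℝ))) := by rw [e2]; linarith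
            exact lt_of_lt_of_le this (neg_le_abs _)
      have hs1 : ∑ i ∈ Finset.Icc 1 M, ρ i * u (ε * ((⌊t/ε⌋:ℝ) + 1 - (i:ℝ))) = 0 :=
        Finset.sum_eq_zero fun i hi => by rw [(hzero i hi).1, mul_zero]
      have hs2 : ∑ i ∈ Finset.Icc 1 M, ρ i * u (ε * ((⌊t/ε⌋:ℝ) + (i:ℝ))) = 0 :=
        Finset.sum_eq_zero fun i hi => by rw [(hzero i hi).2, mul_zero]
      rw [hs1, hs2]
      simp [hf0]
  -- dominated convergence
  have hdct := MeasureTheory.tendsto_integral_filter_of_dominated_convergence (μ := volume)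
    (l := l)
    (F := fun (ε : ℝ) (t : ℝ) => f ((1 / ε) *
      (-∑ i ∈ Finset.Icc 1 M, ρ i * u (ε * ((⌊t/ε⌋:ℝ) + 1 - (i:ℝ)))
        + ∑ i ∈ Finset.Icc 1 M, ρ i * u (ε * ((⌊t/ε⌋:ℝ) + (i:ℝ))))))
    (f := fun t : ℝ => f (K * deriv u t))
    bound (Eventually.of_forall hgm) h_bound hbound_int (Eventually.of_forall hlim)
  refine Tendsto.congr' ?_ hdct
  filter_upwards [self_mem_nhdsWithin] with ε (hε : ε ∈ Set.Ioi 0)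
  exact (aux_sum_eq_integral M hM ρ f hf0 u R hR1 hR ε hε).symm
end

section
/- Let ρ : ℝ → [0, ∞) be an even integrable kernel and let u, φ ∈ L²(ℝ). Define the nonlocal gradient ∇_ρ w(x) = ∫_ℝ ρ(ξ) (w(x+ξ) − w(x)) sign(ξ) dξ for w ∈ L²(ℝ), where sign(ξ) = ξ/|ξ| for ξ ≠ 0 and sign(0) = 0. Then ∇_ρ u and ∇_ρ φ belong to L²(ℝ) and the integration-by-parts formula ∫_ℝ (∇_ρ u)(x) φ(x) dx = −∫_ℝ u(x) (∇_ρ φ)(x) dx holds. -/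
open MeasureTheory
open scoped ENNReal NNReal

namespace NLGradAux

noncomputable def conv (g w : ℝ → ℝ) (x : ℝ) : ℝ := ∫ ξ : ℝ, g ξ * w (x + ξ)

lemma two_conj : Real.HolderConjugate 2 2 := Real.HolderConjugate.two_two

lemma half_mul_self (z : ℝ≥0∞) : z ^ (1/2 : ℝ) * z ^ (1/2 : ℝ) = z := by
  rw [← ENNReal.rpow_add_of_nonneg _ _ (by norm_num) (by norm_num)]
  norm_num

lemma rpow_two' (z : ℝ≥0∞) : z ^ (2 : ℝ) = z * z := by
  rw [show (2:ℝ) = ((2:ℕ):ℝ) by norm_num, ENNReal.rpow_natCast, pow_two]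

lemma mulL2 {f g : ℝ → ℝ} (hf : MemLp f 2 (volume : Measure ℝ))
    (hg : MemLp g 2 (volume : Measure ℝ)) :
    Integrable (fun x => f x * g x) (volume : Measure ℝ) := by
  have h : (1:ℝ≥0∞)/1 = 1/2 + 1/2 := by
    rw [div_one, ENNReal.add_halves]
  have h2 : MemLp (fun x => f x * g x) 1 volume := hg.smul hf
  rw [← memLp_one_iff_integrable]
  simpa [Pi.smul_apply, smul_eq_mul] using h2

lemma measurable_sign : Measurable Real.sign := by
  unfold Real.sign
  exact Measurable.ite measurableSet_Iio measurable_const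
    (Measurable.ite measurableSet_Ioi measurable_const measurable_const)

lemma abs_sign_le (t : ℝ) : |Real.sign t| ≤ 1 := by
  rcases lt_trichotomy t 0 with h | h | h
  · rw [Real.sign_of_neg h]; norm_num
  · rw [h, Real.sign_zero]; norm_num
  · rw [Real.sign_of_pos h]; norm_num

lemma sqrt_memL2 {ρ : ℝ → ℝ} (h0 : ∀ ξ : ℝ, 0 ≤ ρ ξ)
    (hi : Integrable ρ (volume : Measure ℝ)) :
    MemLp (fun ξ => Real.sqrt (ρ ξ)) 2 (volume : Measure ℝ) := by
  have hm : AEStronglyMeasurable (fun ξ => Real.sqrt (ρ ξ)) volume :=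
    Real.continuous_sqrt.comp_aestronglyMeasurable hi.1
  rw [memLp_two_iff_integrable_sq hm]
  exact hi.congr (Filter.Eventually.of_forall fun ξ => (Real.sq_sqrt (h0 ξ)).symm)

lemma translL2 {w : ℝ → ℝ} (hw : MemLp w 2 (volume : Measure ℝ)) (x : ℝ) :
    MemLp (fun ξ => w (x + ξ)) 2 (volume : Measure ℝ) :=
  hw.comp_measurePreserving (measurePreserving_add_left volume x)

lemma translL2' {w : ℝ → ℝ} (hw : MemLp w 2 (volume : Measure ℝ)) (ξ : ℝ) :
    MemLp (fun x => w (x + ξ)) 2 (volume : Measure ℝ) :=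
  hw.comp_measurePreserving (measurePreserving_add_right volume ξ)

lemma aesm_shift {w : ℝ → ℝ} (hw : AEStronglyMeasurable w (volume : Measure ℝ)) :
    AEStronglyMeasurable (fun p : ℝ × ℝ => w (p.1 + p.2))
      ((volume : Measure ℝ).prod volume) :=
  by
    have h1 : AEStronglyMeasurable ((fun z : ℝ × ℝ => w z.1) ∘ (fun p : ℝ × ℝ => (p.1 + p.2, p.2)))
        ((volume : Measure ℝ).prod volume) :=
      (hw.comp_fst).comp_measurePreserving (measurePreserving_add_prod volume volume)
    exact h1

/-- finiteness of `∫⁻ ‖w‖₊ * ‖w‖₊` for `w ∈ L²`. -/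
lemma J_ne_top {w : ℝ → ℝ} (hw : MemLp w 2 (volume : Measure ℝ)) :
    (∫⁻ y, (‖w y‖₊ : ℝ≥0∞) * ‖w y‖₊ ∂(volume : Measure ℝ)) ≠ ∞ := by
  have h := (mulL2 hw hw).2
  rw [hasFiniteIntegral_def] at h
  have : ∀ y : ℝ, (‖w y * w y‖₊ : ℝ≥0∞) = (‖w y‖₊ : ℝ≥0∞) * ‖w y‖₊ := by
    intro y; rw [nnnorm_mul, ENNReal.coe_mul]
  simp only [enorm_eq_nnnorm] at h
  rw [lintegral_congr this] at h
  exact h.ne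

/-- Tonelli computation. -/
lemma double {g w : ℝ → ℝ} (hg : AEStronglyMeasurable g (volume : Measure ℝ))
    (hw : AEStronglyMeasurable w (volume : Measure ℝ)) :
    ∫⁻ x, ∫⁻ ξ, (‖g ξ‖₊ : ℝ≥0∞) * ((‖w (x + ξ)‖₊ : ℝ≥0∞) * ‖w (x + ξ)‖₊)
        ∂(volume : Measure ℝ) ∂(volume : Measure ℝ)
      = (∫⁻ ξ, (‖g ξ‖₊ : ℝ≥0∞) ∂(volume : Measure ℝ))
          * ∫⁻ y, (‖w y‖₊ : ℝ≥0∞) * ‖w y‖₊ ∂(volume : Measure ℝ) := by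
  have hW : AEStronglyMeasurable (fun p : ℝ × ℝ => w (p.1 + p.2))
      ((volume : Measure ℝ).prod volume) := aesm_shift hw
  have hbig : AEMeasurable
      (Function.uncurry fun x ξ => (‖g ξ‖₊ : ℝ≥0∞) * ((‖w (x + ξ)‖₊ : ℝ≥0∞) * ‖w (x + ξ)‖₊))
      ((volume : Measure ℝ).prod volume) := by
    have h1 : AEMeasurable (fun p : ℝ × ℝ => (‖g p.2‖₊ : ℝ≥0∞))
        ((volume : Measure ℝ).prod volume) := (hg.comp_snd).enorm
    have h2 := hW.enorm
    exact h1.mul (h2.mul h2)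
  rw [lintegral_lintegral_swap hbig]
  have hinner : ∀ ξ : ℝ,
      (∫⁻ x, (‖g ξ‖₊ : ℝ≥0∞) * ((‖w (x + ξ)‖₊ : ℝ≥0∞) * ‖w (x + ξ)‖₊) ∂(volume : Measure ℝ))
        = (‖g ξ‖₊ : ℝ≥0∞) * ∫⁻ y, (‖w y‖₊ : ℝ≥0∞) * ‖w y‖₊ ∂(volume : Measure ℝ) := by
    intro ξ
    rw [lintegral_const_mul' _ _ ENNReal.coe_ne_top,
      lintegral_add_right_eq_self (fun y => (‖w y‖₊ : ℝ≥0∞) * ‖w y‖₊) ξ]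
  rw [lintegral_congr hinner, lintegral_mul_const'' _ (f := fun a => (‖g a‖₊ : ℝ≥0∞)) hg.enorm]

lemma aemeas_inner {F : ℝ × ℝ → ℝ≥0∞}
    (hF : AEMeasurable F ((volume : Measure ℝ).prod volume)) :
    AEMeasurable (fun x => ∫⁻ ξ, F (x, ξ) ∂(volume : Measure ℝ)) (volume : Measure ℝ) := by
  rcases hF with ⟨G, hG, hFG⟩
  refine ⟨fun x => ∫⁻ ξ, G (x, ξ) ∂(volume : Measure ℝ), hG.lintegral_prod_right', ?_⟩
  filter_upwards [Measure.ae_ae_of_ae_prod hFG] with x hx using lintegral_congr_ae hx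

lemma ae_int {ρ w : ℝ → ℝ} (h0 : ∀ ξ : ℝ, 0 ≤ ρ ξ)
    (hρ : Integrable ρ (volume : Measure ℝ)) (hw : MemLp w 2 (volume : Measure ℝ)) :
    ∀ᵐ x : ℝ ∂(volume : Measure ℝ),
      Integrable (fun ξ => ρ ξ * w (x + ξ)) (volume : Measure ℝ) := by
  have hW := aesm_shift hw.1
  have hbigm : AEMeasurable
      (fun p : ℝ × ℝ => (‖ρ p.2‖₊ : ℝ≥0∞) * ((‖w (p.1 + p.2)‖₊ : ℝ≥0∞) * ‖w (p.1 + p.2)‖₊))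
      ((volume : Measure ℝ).prod volume) :=
    (hρ.1.comp_snd.enorm).mul (hW.enorm.mul hW.enorm)
  have hρfin : (∫⁻ ξ, (‖ρ ξ‖₊ : ℝ≥0∞) ∂(volume : Measure ℝ)) ≠ ∞ := by
    have h := hρ.2; rw [hasFiniteIntegral_def] at h; exact h.ne
  have htot : (∫⁻ x, ∫⁻ ξ, (‖ρ ξ‖₊ : ℝ≥0∞) * ((‖w (x + ξ)‖₊ : ℝ≥0∞) * ‖w (x + ξ)‖₊)
      ∂(volume : Measure ℝ) ∂(volume : Measure ℝ)) ≠ ∞ := by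
    rw [double hρ.1 hw.1]
    exact ENNReal.mul_ne_top hρfin (J_ne_top hw)
  have hae := ae_lt_top' (aemeas_inner hbigm) htot
  filter_upwards [hae] with x hx
  set q : ℝ → ℝ := fun ξ => Real.sqrt (ρ ξ) * w (x + ξ) with hqdef
  have hqm : AEStronglyMeasurable q (volume : Measure ℝ) :=
    (Real.continuous_sqrt.comp_aestronglyMeasurable hρ.1).mul (translL2 hw x).1
  have hqq : Integrable (fun ξ => q ξ * q ξ) (volume : Measure ℝ) := by
    refine ⟨hqm.mul hqm, ?_⟩
    rw [hasFiniteIntegral_def]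
    have hptw : ∀ ξ : ℝ, (‖q ξ * q ξ‖₊ : ℝ≥0∞)
        = (‖ρ ξ‖₊ : ℝ≥0∞) * ((‖w (x + ξ)‖₊ : ℝ≥0∞) * ‖w (x + ξ)‖₊) := by
      intro ξ
      have h2 : Real.sqrt (ρ ξ) * Real.sqrt (ρ ξ) = ρ ξ := Real.mul_self_sqrt (h0 ξ)
      have h1 : q ξ * q ξ = ρ ξ * (w (x + ξ) * w (x + ξ)) := by
        calc q ξ * q ξ
            = (Real.sqrt (ρ ξ) * Real.sqrt (ρ ξ)) * (w (x + ξ) * w (x + ξ)) := by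
              simp only [hqdef]; ring
          _ = ρ ξ * (w (x + ξ) * w (x + ξ)) := by rw [h2]
      rw [h1, nnnorm_mul, nnnorm_mul, ENNReal.coe_mul, ENNReal.coe_mul]
    simp only [enorm_eq_nnnorm]
    rw [lintegral_congr hptw]
    exact hx
  have hq2 : MemLp q 2 (volume : Measure ℝ) := by
    rw [memLp_two_iff_integrable_sq hqm]
    refine hqq.congr (Filter.Eventually.of_forall fun ξ => ?_)
    simp [pow_two]
  refine (mulL2 (sqrt_memL2 h0 hρ) hq2).congr (Filter.Eventually.of_forall fun ξ => ?_)
  show Real.sqrt (ρ ξ) * q ξ = ρ ξ * w (x + ξ)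
  simp only [hqdef]
  rw [← mul_assoc, Real.mul_self_sqrt (h0 ξ)]

lemma conv_aesm {g w : ℝ → ℝ} (hg : AEStronglyMeasurable g (volume : Measure ℝ))
    (hw : AEStronglyMeasurable w (volume : Measure ℝ)) :
    AEStronglyMeasurable (conv g w) (volume : Measure ℝ) := by
  have hG : AEStronglyMeasurable (fun p : ℝ × ℝ => g p.2 * w (p.1 + p.2))
      ((volume : Measure ℝ).prod volume) := hg.comp_snd.mul (aesm_shift hw)
  exact hG.integral_prod_right'

lemma conv_memL2 {g w : ℝ → ℝ} (hg : Integrable g (volume : Measure ℝ))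
    (hw : MemLp w 2 (volume : Measure ℝ)) :
    MemLp (conv g w) 2 (volume : Measure ℝ) := by
  have hsm := conv_aesm hg.1 hw.1
  set R := ∫⁻ ξ, (‖g ξ‖₊ : ℝ≥0∞) ∂(volume : Measure ℝ) with hRdef
  have hRfin : R ≠ ∞ := by have h := hg.2; rw [hasFiniteIntegral_def] at h; exact h.ne
  set J := ∫⁻ y, (‖w y‖₊ : ℝ≥0∞) * ‖w y‖₊ ∂(volume : Measure ℝ) with hJdef
  have hJfin : J ≠ ∞ := J_ne_top hw
  have hptw : ∀ x : ℝ, (‖conv g w x‖₊ : ℝ≥0∞) * ‖conv g w x‖₊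
      ≤ R * ∫⁻ ξ, (‖g ξ‖₊ : ℝ≥0∞) * ((‖w (x + ξ)‖₊ : ℝ≥0∞) * ‖w (x + ξ)‖₊)
          ∂(volume : Measure ℝ) := by
    intro x
    set S := ∫⁻ ξ, (‖g ξ‖₊ : ℝ≥0∞) * ((‖w (x + ξ)‖₊ : ℝ≥0∞) * ‖w (x + ξ)‖₊)
        ∂(volume : Measure ℝ) with hSdef
    have hL : (‖conv g w x‖₊ : ℝ≥0∞)
        ≤ ∫⁻ ξ, (‖g ξ‖₊ : ℝ≥0∞) * ‖w (x + ξ)‖₊ ∂(volume : Measure ℝ) := by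
      refine le_trans (enorm_integral_le_lintegral_enorm _) ?_
      refine le_of_eq (lintegral_congr fun ξ => ?_)
      rw [enorm_eq_nnnorm, nnnorm_mul, ENNReal.coe_mul]
    have hgm : AEMeasurable (fun ξ => (‖g ξ‖₊ : ℝ≥0∞)) (volume : Measure ℝ) := hg.1.enorm
    have hwm : AEMeasurable (fun ξ => (‖w (x + ξ)‖₊ : ℝ≥0∞)) (volume : Measure ℝ) :=
      (translL2 hw x).1.enorm
    have hf1 : AEMeasurable (fun ξ => (‖g ξ‖₊ : ℝ≥0∞) ^ (1/2 : ℝ)) (volume : Measure ℝ) :=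
      hgm.pow_const _
    have hf2 : AEMeasurable
        (fun ξ => (‖g ξ‖₊ : ℝ≥0∞) ^ (1/2 : ℝ) * (‖w (x + ξ)‖₊ : ℝ≥0∞)) (volume : Measure ℝ) :=
      hf1.mul hwm
    have hHolder := ENNReal.lintegral_mul_le_Lp_mul_Lq volume two_conj hf1 hf2
    have hLHS : (∫⁻ ξ, ((fun ξ => (‖g ξ‖₊ : ℝ≥0∞) ^ (1/2 : ℝ)) *
          fun ξ => (‖g ξ‖₊ : ℝ≥0∞) ^ (1/2 : ℝ) * (‖w (x + ξ)‖₊ : ℝ≥0∞)) ξ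
          ∂(volume : Measure ℝ))
        = ∫⁻ ξ, (‖g ξ‖₊ : ℝ≥0∞) * ‖w (x + ξ)‖₊ ∂(volume : Measure ℝ) := by
      refine lintegral_congr fun ξ => ?_
      simp only [Pi.mul_apply]
      rw [← mul_assoc, half_mul_self]
    have hR1 : (∫⁻ ξ, ((‖g ξ‖₊ : ℝ≥0∞) ^ (1/2 : ℝ)) ^ (2 : ℝ) ∂(volume : Measure ℝ)) = R := by
      refine lintegral_congr fun ξ => ?_
      rw [← ENNReal.rpow_mul]
      norm_num
    have hR2 : (∫⁻ ξ, ((‖g ξ‖₊ : ℝ≥0∞) ^ (1/2 : ℝ) * (‖w (x + ξ)‖₊ : ℝ≥0∞)) ^ (2 : ℝ)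
          ∂(volume : Measure ℝ)) = S := by
      refine lintegral_congr fun ξ => ?_
      calc ((‖g ξ‖₊ : ℝ≥0∞) ^ (1/2 : ℝ) * (‖w (x + ξ)‖₊ : ℝ≥0∞)) ^ (2 : ℝ)
          = (((‖g ξ‖₊ : ℝ≥0∞) ^ (1/2 : ℝ)) ^ (2:ℝ)) * ((‖w (x + ξ)‖₊ : ℝ≥0∞) ^ (2:ℝ)) :=
            ENNReal.mul_rpow_of_nonneg _ _ (by norm_num)
        _ = (‖g ξ‖₊ : ℝ≥0∞) ^ ((1/2 : ℝ) * 2) * ((‖w (x + ξ)‖₊ : ℝ≥0∞) * ‖w (x + ξ)‖₊) := by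
            rw [← ENNReal.rpow_mul, rpow_two']
        _ = (‖g ξ‖₊ : ℝ≥0∞) * ((‖w (x + ξ)‖₊ : ℝ≥0∞) * ‖w (x + ξ)‖₊) := by
            norm_num
    rw [hLHS, hR1, hR2] at hHolder
    have hsq := mul_le_mul' (hL.trans hHolder) (hL.trans hHolder)
    calc (‖conv g w x‖₊ : ℝ≥0∞) * ‖conv g w x‖₊
        ≤ (R ^ (1/2:ℝ) * S ^ (1/2:ℝ)) * (R ^ (1/2:ℝ) * S ^ (1/2:ℝ)) := hsq
      _ = (R ^ (1/2:ℝ) * R ^ (1/2:ℝ)) * (S ^ (1/2:ℝ) * S ^ (1/2:ℝ)) := by ring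
      _ = R * S := by rw [half_mul_self, half_mul_self]
  rw [memLp_two_iff_integrable_sq hsm]
  refine ⟨(hsm.mul hsm).congr (Filter.Eventually.of_forall fun x => (pow_two _).symm), ?_⟩
  rw [hasFiniteIntegral_def]
  have hnn : ∀ x : ℝ, (‖conv g w x ^ 2‖₊ : ℝ≥0∞) = (‖conv g w x‖₊ : ℝ≥0∞) * ‖conv g w x‖₊ :=
    fun x => by rw [pow_two, nnnorm_mul, ENNReal.coe_mul]
  simp only [enorm_eq_nnnorm]
  rw [lintegral_congr hnn]
  calc (∫⁻ x, (‖conv g w x‖₊ : ℝ≥0∞) * ‖conv g w x‖₊ ∂(volume : Measure ℝ))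
      ≤ ∫⁻ x, R * ∫⁻ ξ, (‖g ξ‖₊ : ℝ≥0∞) * ((‖w (x + ξ)‖₊ : ℝ≥0∞) * ‖w (x + ξ)‖₊)
          ∂(volume : Measure ℝ) ∂(volume : Measure ℝ) := lintegral_mono hptw
    _ = R * ∫⁻ x, ∫⁻ ξ, (‖g ξ‖₊ : ℝ≥0∞) * ((‖w (x + ξ)‖₊ : ℝ≥0∞) * ‖w (x + ξ)‖₊)
          ∂(volume : Measure ℝ) ∂(volume : Measure ℝ) := lintegral_const_mul' _ _ hRfin
    _ = R * (R * J) := by rw [double hg.1 hw.1]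
    _ < ∞ := (ENNReal.mul_ne_top hRfin (ENNReal.mul_ne_top hRfin hJfin)).lt_top

lemma g_int {ρ : ℝ → ℝ} (hρ : Integrable ρ (volume : Measure ℝ)) :
    Integrable (fun ξ => ρ ξ * Real.sign ξ) (volume : Measure ℝ) := by
  refine Integrable.mono hρ (hρ.1.mul measurable_sign.aestronglyMeasurable) ?_
  refine Filter.Eventually.of_forall fun ξ => ?_
  rw [Real.norm_eq_abs, Real.norm_eq_abs, abs_mul]
  calc |ρ ξ| * |Real.sign ξ| ≤ |ρ ξ| * 1 :=
        mul_le_mul_of_nonneg_left (abs_sign_le ξ) (abs_nonneg _)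
    _ = |ρ ξ| := mul_one _

lemma g_sum_zero {ρ : ℝ → ℝ} (heven : ∀ ξ : ℝ, ρ (-ξ) = ρ ξ)
    (hρ : Integrable ρ (volume : Measure ℝ)) :
    (∫ ξ : ℝ, ρ ξ * Real.sign ξ) = 0 := by
  have h1 : (∫ ξ : ℝ, ρ (-ξ) * Real.sign (-ξ)) = ∫ ξ : ℝ, ρ ξ * Real.sign ξ :=
    integral_neg_eq_self (fun ξ => ρ ξ * Real.sign ξ) volume
  have h2 : (fun ξ : ℝ => ρ (-ξ) * Real.sign (-ξ)) = fun ξ : ℝ => -(ρ ξ * Real.sign ξ) :=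
    funext fun ξ => by rw [heven, Real.sign_neg]; ring
  rw [h2, integral_neg] at h1
  linarith

lemma grad_eq {ρ w : ℝ → ℝ} (h0 : ∀ ξ : ℝ, 0 ≤ ρ ξ) (heven : ∀ ξ : ℝ, ρ (-ξ) = ρ ξ)
    (hρ : Integrable ρ (volume : Measure ℝ)) (hw : MemLp w 2 (volume : Measure ℝ)) :
    (fun x => ∫ ξ : ℝ, ρ ξ * (w (x + ξ) - w x) * Real.sign ξ)
      =ᵐ[(volume : Measure ℝ)] conv (fun ξ => ρ ξ * Real.sign ξ) w := by
  have hg_meas : AEStronglyMeasurable (fun ξ => ρ ξ * Real.sign ξ) (volume : Measure ℝ) :=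
    hρ.1.mul measurable_sign.aestronglyMeasurable
  filter_upwards [ae_int h0 hρ hw] with x hx
  have h1 : Integrable (fun ξ => ρ ξ * Real.sign ξ * w (x + ξ)) (volume : Measure ℝ) := by
    refine Integrable.mono hx (hg_meas.mul (translL2 hw x).1)
      (Filter.Eventually.of_forall fun ξ => ?_)
    rw [Real.norm_eq_abs, Real.norm_eq_abs, abs_mul, abs_mul, abs_mul]
    have hs := abs_sign_le ξ
    calc |ρ ξ| * |Real.sign ξ| * |w (x + ξ)|
        ≤ |ρ ξ| * 1 * |w (x + ξ)| :=
          mul_le_mul_of_nonneg_right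
            (mul_le_mul_of_nonneg_left hs (abs_nonneg _)) (abs_nonneg _)
      _ = |ρ ξ| * |w (x + ξ)| := by ring
  have h2 : Integrable (fun ξ => ρ ξ * Real.sign ξ * w x) (volume : Measure ℝ) :=
    (g_int hρ).mul_const _
  have hcongr : (fun ξ => ρ ξ * (w (x + ξ) - w x) * Real.sign ξ)
      = fun ξ => ρ ξ * Real.sign ξ * w (x + ξ) - ρ ξ * Real.sign ξ * w x :=
    funext fun ξ => by ring
  show (∫ ξ : ℝ, ρ ξ * (w (x + ξ) - w x) * Real.sign ξ)
      = conv (fun ξ => ρ ξ * Real.sign ξ) w x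
  rw [hcongr, integral_sub h1 h2, conv, integral_mul_const, g_sum_zero heven hρ,
    zero_mul, sub_zero]

lemma fub {g u φ : ℝ → ℝ} (hg : Integrable g (volume : Measure ℝ))
    (hu : MemLp u 2 (volume : Measure ℝ)) (hφ : MemLp φ 2 (volume : Measure ℝ)) :
    Integrable (fun p : ℝ × ℝ => g p.2 * u (p.1 + p.2) * φ p.1)
      ((volume : Measure ℝ).prod volume) := by
  have hG : AEStronglyMeasurable (fun p : ℝ × ℝ => g p.2 * u (p.1 + p.2) * φ p.1)
      ((volume : Measure ℝ).prod volume) := (hg.1.comp_snd.mul (aesm_shift hu.1)).mul hφ.1.comp_fst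
  refine ⟨hG, ?_⟩
  rw [hasFiniteIntegral_def, lintegral_prod_symm _ hG.enorm]
  have hufin : (∫⁻ y, ((‖u y‖₊ : ℝ≥0∞)) ^ (2:ℝ) ∂(volume : Measure ℝ)) ≠ ∞ := by
    rw [lintegral_congr (fun y => rpow_two' _)]; exact J_ne_top hu
  have hφfin : (∫⁻ y, ((‖φ y‖₊ : ℝ≥0∞)) ^ (2:ℝ) ∂(volume : Measure ℝ)) ≠ ∞ := by
    rw [lintegral_congr (fun y => rpow_two' _)]; exact J_ne_top hφ
  have hKfin : ((∫⁻ y, ((‖u y‖₊ : ℝ≥0∞)) ^ (2:ℝ) ∂(volume : Measure ℝ)) ^ (1/2:ℝ)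
      * (∫⁻ y, ((‖φ y‖₊ : ℝ≥0∞)) ^ (2:ℝ) ∂(volume : Measure ℝ)) ^ (1/2:ℝ)) ≠ ∞ :=
    ENNReal.mul_ne_top (ENNReal.rpow_ne_top_of_nonneg (by norm_num) hufin)
      (ENNReal.rpow_ne_top_of_nonneg (by norm_num) hφfin)
  have hinner : ∀ ξ : ℝ, (∫⁻ x, (‖u (x + ξ)‖₊ : ℝ≥0∞) * (‖φ x‖₊ : ℝ≥0∞) ∂(volume : Measure ℝ))
      ≤ (∫⁻ y, ((‖u y‖₊ : ℝ≥0∞)) ^ (2:ℝ) ∂(volume : Measure ℝ)) ^ (1/2:ℝ)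
        * (∫⁻ y, ((‖φ y‖₊ : ℝ≥0∞)) ^ (2:ℝ) ∂(volume : Measure ℝ)) ^ (1/2:ℝ) := by
    intro ξ
    have hum : AEMeasurable (fun x => (‖u (x + ξ)‖₊ : ℝ≥0∞)) (volume : Measure ℝ) :=
      (translL2' hu ξ).1.enorm
    have hφm : AEMeasurable (fun x => (‖φ x‖₊ : ℝ≥0∞)) (volume : Measure ℝ) := hφ.1.enorm
    have h := ENNReal.lintegral_mul_le_Lp_mul_Lq volume two_conj hum hφm
    have hsh : (∫⁻ x, ((‖u (x + ξ)‖₊ : ℝ≥0∞)) ^ (2:ℝ) ∂(volume : Measure ℝ))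
        = ∫⁻ y, ((‖u y‖₊ : ℝ≥0∞)) ^ (2:ℝ) ∂(volume : Measure ℝ) :=
      lintegral_add_right_eq_self (fun y => ((‖u y‖₊ : ℝ≥0∞)) ^ (2:ℝ)) ξ
    calc (∫⁻ x, (‖u (x + ξ)‖₊ : ℝ≥0∞) * (‖φ x‖₊ : ℝ≥0∞) ∂(volume : Measure ℝ))
        = ∫⁻ x, ((fun x => (‖u (x + ξ)‖₊ : ℝ≥0∞)) * fun x => (‖φ x‖₊ : ℝ≥0∞)) x
            ∂(volume : Measure ℝ) := lintegral_congr fun x => by simp [Pi.mul_apply]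
      _ ≤ _ := h
      _ = _ := by rw [hsh]
  calc (∫⁻ ξ, ∫⁻ x, (‖g ξ * u (x + ξ) * φ x‖₊ : ℝ≥0∞) ∂(volume : Measure ℝ)
        ∂(volume : Measure ℝ))
      = ∫⁻ ξ, (‖g ξ‖₊ : ℝ≥0∞) * ∫⁻ x, (‖u (x + ξ)‖₊ : ℝ≥0∞) * (‖φ x‖₊ : ℝ≥0∞)
          ∂(volume : Measure ℝ) ∂(volume : Measure ℝ) := by
        refine lintegral_congr fun ξ => ?_
        rw [← lintegral_const_mul' _ _ ENNReal.coe_ne_top]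
        refine lintegral_congr fun x => ?_
        rw [nnnorm_mul, nnnorm_mul, ENNReal.coe_mul, ENNReal.coe_mul, mul_assoc]
    _ ≤ ∫⁻ ξ, (‖g ξ‖₊ : ℝ≥0∞) * ((∫⁻ y, ((‖u y‖₊ : ℝ≥0∞)) ^ (2:ℝ) ∂(volume : Measure ℝ)) ^ (1/2:ℝ)
          * (∫⁻ y, ((‖φ y‖₊ : ℝ≥0∞)) ^ (2:ℝ) ∂(volume : Measure ℝ)) ^ (1/2:ℝ))
          ∂(volume : Measure ℝ) :=
        lintegral_mono fun ξ => mul_le_mul_right (hinner ξ) _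
    _ = (∫⁻ ξ, (‖g ξ‖₊ : ℝ≥0∞) ∂(volume : Measure ℝ))
          * ((∫⁻ y, ((‖u y‖₊ : ℝ≥0∞)) ^ (2:ℝ) ∂(volume : Measure ℝ)) ^ (1/2:ℝ)
          * (∫⁻ y, ((‖φ y‖₊ : ℝ≥0∞)) ^ (2:ℝ) ∂(volume : Measure ℝ)) ^ (1/2:ℝ)) :=
        lintegral_mul_const'' _ hg.1.enorm
    _ < ∞ := by
        have hgfin : (∫⁻ ξ, (‖g ξ‖₊ : ℝ≥0∞) ∂(volume : Measure ℝ)) ≠ ∞ := by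
          have h := hg.2; rw [hasFiniteIntegral_def] at h; exact h.ne
        exact (ENNReal.mul_ne_top hgfin hKfin).lt_top

end NLGradAux

open NLGradAux

/-- The nonlocal gradient `∇_ρ w (x) = ∫_ℝ ρ(ξ)(w(x+ξ) − w(x)) sign(ξ) dξ`. -/
noncomputable def nonlocalGradient (ρ : ℝ → ℝ) (w : ℝ → ℝ) (x : ℝ) : ℝ :=
  ∫ ξ : ℝ, ρ ξ * (w (x + ξ) - w x) * Real.sign ξ

/-- For an even, nonnegative, integrable kernel `ρ` and `u, φ ∈ L²(ℝ)`, the nonlocal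
gradients `∇_ρ u` and `∇_ρ φ` belong to `L²(ℝ)` and the integration-by-parts formula
`∫ (∇_ρ u) φ = −∫ u (∇_ρ φ)` holds. -/
theorem nonlocalGradient_integration_by_parts (ρ : ℝ → ℝ)
    (hρ_nonneg : ∀ ξ : ℝ, 0 ≤ ρ ξ) (hρ_even : ∀ ξ : ℝ, ρ (-ξ) = ρ ξ)
    (hρ_int : Integrable ρ (volume : Measure ℝ))
    (u φ : ℝ → ℝ)
    (hu : MemLp u 2 (volume : Measure ℝ)) (hφ : MemLp φ 2 (volume : Measure ℝ)) :
    MemLp (nonlocalGradient ρ u) 2 (volume : Measure ℝ) ∧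
    MemLp (nonlocalGradient ρ φ) 2 (volume : Measure ℝ) ∧
    ∫ x : ℝ, nonlocalGradient ρ u x * φ x = -∫ x : ℝ, u x * nonlocalGradient ρ φ x := by
  set g : ℝ → ℝ := fun ξ => ρ ξ * Real.sign ξ with hgdef
  have hg_int : Integrable g (volume : Measure ℝ) := g_int hρ_int
  have hgradu : nonlocalGradient ρ u =ᵐ[(volume : Measure ℝ)] conv g u :=
    grad_eq hρ_nonneg hρ_even hρ_int hu
  have hgradφ : nonlocalGradient ρ φ =ᵐ[(volume : Measure ℝ)] conv g φ :=
    grad_eq hρ_nonneg hρ_even hρ_int hφ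
  have hmu : MemLp (nonlocalGradient ρ u) 2 (volume : Measure ℝ) :=
    (conv_memL2 hg_int hu).ae_eq hgradu.symm
  have hmφ : MemLp (nonlocalGradient ρ φ) 2 (volume : Measure ℝ) :=
    (conv_memL2 hg_int hφ).ae_eq hgradφ.symm
  refine ⟨hmu, hmφ, ?_⟩
  have h1 : (∫ x : ℝ, nonlocalGradient ρ u x * φ x) = ∫ x : ℝ, conv g u x * φ x :=
    integral_congr_ae (hgradu.mul (Filter.EventuallyEq.refl _ _))
  have h2 : (∫ x : ℝ, u x * nonlocalGradient ρ φ x) = ∫ x : ℝ, u x * conv g φ x :=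
    integral_congr_ae ((Filter.EventuallyEq.refl _ _).mul hgradφ)
  rw [h1, h2]
  have hFub1 := fub hg_int hu hφ
  have hFub2 := fub hg_int hφ hu
  have hodd : ∀ ξ : ℝ, g (-ξ) = -g ξ := fun ξ => by
    simp only [hgdef]; rw [hρ_even, Real.sign_neg]; ring
  have hL : (∫ x : ℝ, conv g u x * φ x) = ∫ ξ : ℝ, g ξ * ∫ x : ℝ, u (x + ξ) * φ x := by
    have e1 : ∀ x : ℝ, conv g u x * φ x = ∫ ξ : ℝ, g ξ * u (x + ξ) * φ x := fun x =>
      (integral_mul_const (φ x) (fun ξ => g ξ * u (x + ξ))).symm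
    calc (∫ x : ℝ, conv g u x * φ x)
        = ∫ x : ℝ, ∫ ξ : ℝ, g ξ * u (x + ξ) * φ x :=
          integral_congr_ae (Filter.Eventually.of_forall e1)
      _ = ∫ ξ : ℝ, ∫ x : ℝ, g ξ * u (x + ξ) * φ x := integral_integral_swap hFub1
      _ = ∫ ξ : ℝ, g ξ * ∫ x : ℝ, u (x + ξ) * φ x := by
          refine integral_congr_ae (Filter.Eventually.of_forall fun ξ => ?_)
          beta_reduce
          rw [show (fun x => g ξ * u (x + ξ) * φ x) = fun x => g ξ * (u (x + ξ) * φ x) from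
            funext fun x => by ring, integral_const_mul]
  have hR : (∫ x : ℝ, u x * conv g φ x) = ∫ ξ : ℝ, g ξ * ∫ x : ℝ, u x * φ (x + ξ) := by
    have e2 : ∀ x : ℝ, u x * conv g φ x = ∫ ξ : ℝ, u x * (g ξ * φ (x + ξ)) := fun x =>
      (integral_const_mul (u x) (fun ξ => g ξ * φ (x + ξ))).symm
    have hFub2' : Integrable (fun p : ℝ × ℝ => u p.1 * (g p.2 * φ (p.1 + p.2)))
        ((volume : Measure ℝ).prod volume) :=
      hFub2.congr (Filter.Eventually.of_forall fun p => by ring)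
    calc (∫ x : ℝ, u x * conv g φ x)
        = ∫ x : ℝ, ∫ ξ : ℝ, u x * (g ξ * φ (x + ξ)) :=
          integral_congr_ae (Filter.Eventually.of_forall e2)
      _ = ∫ ξ : ℝ, ∫ x : ℝ, u x * (g ξ * φ (x + ξ)) := integral_integral_swap hFub2'
      _ = ∫ ξ : ℝ, g ξ * ∫ x : ℝ, u x * φ (x + ξ) := by
          refine integral_congr_ae (Filter.Eventually.of_forall fun ξ => ?_)
          beta_reduce
          rw [show (fun x => u x * (g ξ * φ (x + ξ))) = fun x => g ξ * (u x * φ (x + ξ)) from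
            funext fun x => by ring, integral_const_mul]
  have hD : ∀ ξ : ℝ, (∫ x : ℝ, u x * φ (x + ξ)) = ∫ x : ℝ, u (x + -ξ) * φ x := by
    intro ξ
    have h := integral_add_right_eq_self (μ := (volume : Measure ℝ))
      (fun x => u (x + -ξ) * φ x) ξ
    calc (∫ x : ℝ, u x * φ (x + ξ))
        = ∫ x : ℝ, u (x + ξ + -ξ) * φ (x + ξ) :=
          integral_congr_ae (Filter.Eventually.of_forall fun x => by
            beta_reduce; rw [add_neg_cancel_right])
      _ = ∫ x : ℝ, u (x + -ξ) * φ x := h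
  have hD' : (∫ ξ : ℝ, g ξ * ∫ x : ℝ, u x * φ (x + ξ))
      = -∫ ξ : ℝ, g ξ * ∫ x : ℝ, u (x + ξ) * φ x := by
    calc (∫ ξ : ℝ, g ξ * ∫ x : ℝ, u x * φ (x + ξ))
        = ∫ ξ : ℝ, g ξ * ∫ x : ℝ, u (x + -ξ) * φ x :=
          integral_congr_ae (Filter.Eventually.of_forall fun ξ => by beta_reduce; rw [hD ξ])
      _ = ∫ ξ : ℝ, (fun t : ℝ => g (-t) * ∫ x : ℝ, u (x + t) * φ x) (-ξ) :=
          integral_congr_ae (Filter.Eventually.of_forall fun ξ => by simp only [neg_neg])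
      _ = ∫ t : ℝ, g (-t) * ∫ x : ℝ, u (x + t) * φ x :=
          integral_neg_eq_self (fun t : ℝ => g (-t) * ∫ x : ℝ, u (x + t) * φ x) volume
      _ = ∫ t : ℝ, -(g t * ∫ x : ℝ, u (x + t) * φ x) :=
          integral_congr_ae (Filter.Eventually.of_forall fun t => by
            beta_reduce; rw [hodd t]; ring)
      _ = -∫ t : ℝ, g t * ∫ x : ℝ, u (x + t) * φ x := integral_neg _
  rw [hL, hR, hD', neg_neg]
end

section
/- Let α ∈ (0,1), 0 < ε ≤ 1 and R > 1. Define the cut-off φ_R(t) = min{1, max{R − |t|, 0}} and u_ε(t) = ε² sin(t/ε²) φ_R(t). Then for every y ∈ ℝ the integral ∫_ℝ ε^α |ξ|^{−1−α} (u_ε(y+ξ) − u_ε(y)) sign(ξ) dξ converges absolutely and (1/ε) | ∫_ℝ ε^α |ξ|^{−1−α} (u_ε(y+ξ) − u_ε(y)) sign(ξ) dξ | ≤ (4/(1−α)) ε^{(1−α)/2} + (2/α) ε^{1−α/2}. -/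
open MeasureTheory Set intervalIntegral

private lemma abs_realSign_le_one (x : ℝ) : |Real.sign x| ≤ 1 := by
  rcases Real.sign_apply_eq x with h | h | h <;> rw [h] <;> norm_num

private lemma measurable_realSign : Measurable Real.sign := by
  have h : Real.sign = fun r : ℝ => if r < 0 then (-1 : ℝ) else if 0 < r then 1 else 0 := rfl
  rw [h]
  exact Measurable.ite measurableSet_Iio measurable_const
    (Measurable.ite measurableSet_Ioi measurable_const measurable_const)

private lemma abs_sin_sub_sin (x z : ℝ) : |Real.sin x - Real.sin z| ≤ |x - z| := by
  rw [Real.sin_sub_sin, abs_mul, abs_mul, abs_two]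
  calc 2 * |Real.sin ((x - z) / 2)| * |Real.cos ((x + z) / 2)|
      ≤ 2 * |(x - z) / 2| * 1 := by
        have h1 : |Real.sin ((x - z) / 2)| ≤ |(x - z) / 2| := Real.abs_sin_le_abs
        have h2 : |Real.cos ((x + z) / 2)| ≤ 1 := Real.abs_cos_le_one _
        exact mul_le_mul (by nlinarith [abs_nonneg ((x - z)/2)]) h2 (abs_nonneg _)
          (by positivity)
    _ = |x - z| := by rw [abs_div, abs_two]; ring

private lemma abs_min_sub_min (c a b : ℝ) : |min c a - min c b| ≤ |a - b| := by
  rcases le_total c a with h1 | h1 <;> rcases le_total c b with h2 | h2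
  · rw [min_eq_left h1, min_eq_left h2]; simp
  · rw [min_eq_left h1, min_eq_right h2, abs_of_nonneg (by linarith)]
    have := le_abs_self (a - b); linarith
  · rw [min_eq_right h1, min_eq_left h2, abs_of_nonpos (by linarith)]
    have := neg_abs_le (a - b); linarith
  · rw [min_eq_right h1, min_eq_right h2]

private lemma abs_max_sub_max (a b : ℝ) : |max a 0 - max b 0| ≤ |a - b| := by
  rcases le_total a 0 with h1 | h1 <;> rcases le_total b 0 with h2 | h2
  · rw [max_eq_right h1, max_eq_right h2]; simp
  · rw [max_eq_right h1, max_eq_left h2, abs_of_nonpos (by linarith)]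
    have := neg_abs_le (a - b); linarith
  · rw [max_eq_left h1, max_eq_right h2, abs_of_nonneg (by linarith)]
    have := le_abs_self (a - b); linarith
  · rw [max_eq_left h1, max_eq_left h2]

private lemma integrableOn_comp_neg {f : ℝ → ℝ} {s : Set ℝ}
    (hf : IntegrableOn f s (volume : Measure ℝ)) :
    IntegrableOn (fun x => f (-x)) (Neg.neg ⁻¹' s) (volume : Measure ℝ) := by
  have m : MeasurableEmbedding (fun x : ℝ => -x) :=
    (Homeomorph.neg ℝ).measurableEmbedding
  have h1 : IntegrableOn f s ((volume : Measure ℝ).map fun x : ℝ => -x) := by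
    rwa [show (Measure.map (fun x : ℝ => -x) volume) = volume from
      Measure.map_neg_eq_self volume]
  exact m.integrableOn_map_iff.mp h1

private lemma riesz_aux (α : ℝ) (hα0 : 0 < α) (hα1 : α < 1)
    (ε : ℝ) (hε0 : 0 < ε) (hε1 : ε ≤ 1) (u : ℝ → ℝ)
    (hcont : Continuous u)
    (hbd : ∀ t, |u t| ≤ ε ^ 2)
    (hlip : ∀ s t : ℝ, |u s - u t| ≤ 2 * |s - t|) (y : ℝ) :
    Integrable (fun ξ : ℝ => ε ^ α * |ξ| ^ (-1 - α) * (u (y + ξ) - u y) * Real.sign ξ)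
      (volume : Measure ℝ) ∧
    (1 / ε) * |∫ ξ : ℝ, ε ^ α * |ξ| ^ (-1 - α) * (u (y + ξ) - u y) * Real.sign ξ|
      ≤ (4 / (1 - α)) * ε ^ ((1 - α) / 2) + (2 / α) * ε ^ (1 - α / 2) := by
  have hε2 : (0:ℝ) < ε ^ 2 := by positivity
  have hεα : (0:ℝ) < ε ^ α := Real.rpow_pos_of_pos hε0 α
  set δ : ℝ := ε ^ ((3:ℝ)/2) with hδdef
  have hδ : 0 < δ := Real.rpow_pos_of_pos hε0 _
  set f : ℝ → ℝ := fun ξ => ε ^ α * |ξ| ^ (-1 - α) * (u (y + ξ) - u y) * Real.sign ξ with hf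
  set fA : ℝ → ℝ := fun ξ => ε ^ α * |ξ| ^ (-1 - α) * u (y + ξ) * Real.sign ξ with hfA
  set fB : ℝ → ℝ := fun ξ => ε ^ α * |ξ| ^ (-1 - α) * u y * Real.sign ξ with hfB
  have hg2nn : ∀ ξ : ℝ, (0:ℝ) ≤ |ξ| ^ (-1 - α) := fun ξ => Real.rpow_nonneg (abs_nonneg ξ) _
  have hcompl : (Ioc (-δ) δ)ᶜ = Iic (-δ) ∪ Ioi δ := by
    ext x
    simp only [mem_compl_iff, mem_Ioc, not_and_or, not_lt, not_le, mem_union, mem_Iic, mem_Ioi]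
  -- integrability of the kernel pieces
  have hg2Ioi : IntegrableOn (fun ξ : ℝ => |ξ| ^ (-1 - α)) (Ioi δ) := by
    have h0 : IntegrableOn (fun x : ℝ => x ^ (-1 - α)) (Ioi δ) :=
      integrableOn_Ioi_rpow_of_lt (by linarith) hδ
    exact h0.congr_fun (fun x hx => by rw [abs_of_pos (hδ.trans hx)]) measurableSet_Ioi
  have hg2Iic : IntegrableOn (fun ξ : ℝ => |ξ| ^ (-1 - α)) (Iic (-δ)) := by
    have h1 : IntegrableOn (fun ξ : ℝ => |ξ| ^ (-1 - α)) (Ici δ) :=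
      Iff.mpr integrableOn_Ici_iff_integrableOn_Ioi hg2Ioi
    have h2 := integrableOn_comp_neg h1
    simpa [neg_preimage, neg_Ici, abs_neg] using h2
  have hg2T : IntegrableOn (fun ξ : ℝ => |ξ| ^ (-1 - α)) ((Ioc (-δ) δ)ᶜ) := by
    rw [hcompl]; exact hg2Iic.union hg2Ioi
  have h0δ : IntervalIntegrable (fun x : ℝ => |x| ^ (-α)) volume 0 δ := by
    have h : IntervalIntegrable (fun x : ℝ => x ^ (-α)) volume 0 δ :=
      intervalIntegrable_rpow' (by linarith)
    rw [intervalIntegrable_iff_integrableOn_Ioc_of_le hδ.le] at h ⊢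
    exact h.congr_fun (fun x hx => by rw [abs_of_pos hx.1]) measurableSet_Ioc
  have hneg : IntervalIntegrable (fun x : ℝ => |x| ^ (-α)) volume (-δ) 0 := by
    have h2 := Iff.mp IntervalIntegrable.iff_comp_neg h0δ
    simp only [abs_neg, neg_zero] at h2
    exact h2.symm
  have hgN : IntegrableOn (fun ξ : ℝ => |ξ| ^ (-α)) (Ioc (-δ) δ) := by
    rw [← Ioc_union_Ioc_eq_Ioc (by linarith : -δ ≤ 0) hδ.le]
    exact ((intervalIntegrable_iff_integrableOn_Ioc_of_le (by linarith)).mp hneg).union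
      ((intervalIntegrable_iff_integrableOn_Ioc_of_le hδ.le).mp h0δ)
  -- values of the kernel integrals
  have hK : ∫ ξ in Ioi δ, |ξ| ^ (-1 - α) = δ ^ (-α) / α := by
    rw [setIntegral_congr_fun measurableSet_Ioi
      (fun x (hx : x ∈ Ioi δ) => by
        show |x| ^ (-1 - α) = x ^ (-1 - α)
        rw [abs_of_pos (hδ.trans hx)]),
      integral_Ioi_rpow_of_lt (by linarith) hδ,
      show (-1 - α) + 1 = -α by ring]
    field_simp
  have heven : ∫ ξ in Iic (-δ), |ξ| ^ (-1 - α) = ∫ ξ in Ioi δ, |ξ| ^ (-1 - α) := by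
    have h := integral_comp_neg_Iic (-δ) (fun x : ℝ => |x| ^ (-1 - α))
    simp only [abs_neg, neg_neg] at h
    exact h
  have htail_int : ∫ ξ in (Ioc (-δ) δ)ᶜ, |ξ| ^ (-1 - α) = 2 * (δ ^ (-α) / α) := by
    rw [hcompl, setIntegral_union (Iic_disjoint_Ioi (by linarith)) measurableSet_Ioi
      hg2Iic hg2Ioi, heven, hK]
    ring
  have hnear_int : ∫ ξ in Ioc (-δ) δ, |ξ| ^ (-α) = 2 * (δ ^ (1 - α) / (1 - α)) := by
    have eq3 : ∫ x in (0:ℝ)..δ, |x| ^ (-α) = δ ^ (1 - α) / (1 - α) := by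
      rw [intervalIntegral.integral_congr (g := fun x : ℝ => x ^ (-α))
        (fun x hx => by
          rw [uIcc_of_le hδ.le] at hx
          show |x| ^ (-α) = x ^ (-α)
          rw [abs_of_nonneg hx.1]),
        integral_rpow (Or.inl (by linarith)),
        Real.zero_rpow (by intro h; linarith : -α + 1 ≠ 0),
        show -α + 1 = 1 - α by ring]
      ring
    have eq2 : ∫ x in (-δ)..0, |x| ^ (-α) = ∫ x in (0:ℝ)..δ, |x| ^ (-α) := by
      have h := intervalIntegral.integral_comp_neg (a := 0) (b := δ)
        (fun x : ℝ => |x| ^ (-α))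
      simp only [abs_neg, neg_zero] at h
      exact h.symm
    rw [← intervalIntegral.integral_of_le (show -δ ≤ δ by linarith),
      ← intervalIntegral.integral_add_adjacent_intervals hneg h0δ, eq2, eq3]
    ring
  -- measurability
  have hm2 : Measurable fun ξ : ℝ => |ξ| ^ (-1 - α) := by fun_prop
  have hmu : Measurable fun ξ : ℝ => u (y + ξ) :=
    (hcont.comp (continuous_const.add continuous_id)).measurable
  have hmf : Measurable f := by
    rw [hf]
    exact (((measurable_const.mul hm2).mul (hmu.sub measurable_const)).mul measurable_realSign)
  have hmfA : Measurable fA := by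
    rw [hfA]
    exact (((measurable_const.mul hm2).mul hmu).mul measurable_realSign)
  -- pointwise bounds
  have hf_near_bd : ∀ ξ : ℝ, |f ξ| ≤ 2 * ε ^ α * |ξ| ^ (-α) := by
    intro ξ
    rcases eq_or_ne ξ 0 with rfl | hξ
    · simp [hf, Real.sign_zero, abs_zero,
        Real.zero_rpow (show -α ≠ 0 by intro h; linarith)]
    · have h1 : |u (y + ξ) - u y| ≤ 2 * |ξ| := by
        have := hlip (y + ξ) y
        simpa using this
      have hrw : |ξ| ^ (-1 - α) * |ξ| = |ξ| ^ (-α) := by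
        rw [show -α = (-1 - α) + 1 by ring, Real.rpow_add_one (abs_ne_zero.mpr hξ)]
      calc |f ξ| = ε ^ α * |ξ| ^ (-1 - α) * |u (y + ξ) - u y| * |Real.sign ξ| := by
            rw [hf]
            show |ε ^ α * |ξ| ^ (-1 - α) * (u (y + ξ) - u y) * Real.sign ξ| = _
            rw [abs_mul, abs_mul, abs_mul, abs_of_pos hεα, abs_of_nonneg (hg2nn ξ)]
        _ ≤ ε ^ α * |ξ| ^ (-1 - α) * (2 * |ξ|) * 1 := by
            gcongr <;> first
              | exact h1
              | exact abs_realSign_le_one ξ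
              | positivity
        _ = 2 * ε ^ α * (|ξ| ^ (-1 - α) * |ξ|) := by ring
        _ = 2 * ε ^ α * |ξ| ^ (-α) := by rw [hrw]
  have hf_bd : ∀ ξ : ℝ, |f ξ| ≤ ε ^ α * (2 * ε ^ 2) * |ξ| ^ (-1 - α) := by
    intro ξ
    have h1 : |u (y + ξ) - u y| ≤ 2 * ε ^ 2 := by
      have := abs_sub_abs_le_abs_sub (u (y + ξ)) (u y)
      have h2 := abs_sub (u (y + ξ)) (u y)
      calc |u (y + ξ) - u y| ≤ |u (y + ξ)| + |u y| := abs_sub _ _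
        _ ≤ ε ^ 2 + ε ^ 2 := add_le_add (hbd _) (hbd _)
        _ = 2 * ε ^ 2 := by ring
    calc |f ξ| = ε ^ α * |ξ| ^ (-1 - α) * |u (y + ξ) - u y| * |Real.sign ξ| := by
          rw [hf]
          show |ε ^ α * |ξ| ^ (-1 - α) * (u (y + ξ) - u y) * Real.sign ξ| = _
          rw [abs_mul, abs_mul, abs_mul, abs_of_pos hεα, abs_of_nonneg (hg2nn ξ)]
      _ ≤ ε ^ α * |ξ| ^ (-1 - α) * (2 * ε ^ 2) * 1 := by
          gcongr <;> first
            | exact h1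
            | exact abs_realSign_le_one ξ
            | positivity
      _ = ε ^ α * (2 * ε ^ 2) * |ξ| ^ (-1 - α) := by ring
  have hfA_bd : ∀ ξ : ℝ, |fA ξ| ≤ ε ^ α * ε ^ 2 * |ξ| ^ (-1 - α) := by
    intro ξ
    calc |fA ξ| = ε ^ α * |ξ| ^ (-1 - α) * |u (y + ξ)| * |Real.sign ξ| := by
          rw [hfA]
          show |ε ^ α * |ξ| ^ (-1 - α) * u (y + ξ) * Real.sign ξ| = _
          rw [abs_mul, abs_mul, abs_mul, abs_of_pos hεα, abs_of_nonneg (hg2nn ξ)]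
      _ ≤ ε ^ α * |ξ| ^ (-1 - α) * ε ^ 2 * 1 := by
          gcongr <;> first
            | exact hbd _
            | exact abs_realSign_le_one ξ
            | positivity
      _ = ε ^ α * ε ^ 2 * |ξ| ^ (-1 - α) := by ring
  -- integrability of f
  have hIf_near : IntegrableOn f (Ioc (-δ) δ) := by
    refine Integrable.mono' (hgN.const_mul (2 * ε ^ α))
      (hmf.aestronglyMeasurable.restrict) (ae_of_all _ fun ξ => ?_)
    rw [Real.norm_eq_abs]
    exact hf_near_bd ξ
  have hIf_tail : IntegrableOn f ((Ioc (-δ) δ)ᶜ) := by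
    refine Integrable.mono' (hg2T.const_mul (ε ^ α * (2 * ε ^ 2)))
      (hmf.aestronglyMeasurable.restrict) (ae_of_all _ fun ξ => ?_)
    rw [Real.norm_eq_abs]
    exact hf_bd ξ
  have hIf : Integrable f := by
    have h := hIf_near.union hIf_tail
    rwa [union_compl_self, integrableOn_univ] at h
  -- tail integrability of fA, fB
  have hfA_T : IntegrableOn fA ((Ioc (-δ) δ)ᶜ) := by
    refine Integrable.mono' (hg2T.const_mul (ε ^ α * ε ^ 2))
      (hmfA.aestronglyMeasurable.restrict) (ae_of_all _ fun ξ => ?_)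
    rw [Real.norm_eq_abs]
    exact hfA_bd ξ
  have hfB_Ioi : IntegrableOn fB (Ioi δ) := by
    have hb : IntegrableOn (fun x : ℝ => ε ^ α * u y * |x| ^ (-1 - α)) (Ioi δ) :=
      hg2Ioi.const_mul _
    refine IntegrableOn.congr_fun hb (fun x hx => ?_) measurableSet_Ioi
    show ε ^ α * u y * |x| ^ (-1 - α) = fB x
    rw [hfB]
    show _ = ε ^ α * |x| ^ (-1 - α) * u y * Real.sign x
    rw [Real.sign_of_pos (hδ.trans hx)]
    ring
  have hfB_Iic : IntegrableOn fB (Iic (-δ)) := by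
    have hb : IntegrableOn (fun x : ℝ => -(ε ^ α * u y) * |x| ^ (-1 - α)) (Iic (-δ)) :=
      hg2Iic.const_mul _
    refine IntegrableOn.congr_fun hb (fun x hx => ?_) measurableSet_Iic
    show -(ε ^ α * u y) * |x| ^ (-1 - α) = fB x
    rw [hfB]
    show _ = ε ^ α * |x| ^ (-1 - α) * u y * Real.sign x
    rw [Real.sign_of_neg (lt_of_le_of_lt hx (by linarith))]
    ring
  have hfB_T : IntegrableOn fB ((Ioc (-δ) δ)ᶜ) := by
    rw [hcompl]; exact hfB_Iic.union hfB_Ioi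
  -- the odd part integrates to zero on the tail
  have hBIoi_val : ∫ ξ in Ioi δ, fB ξ = ε ^ α * u y * (δ ^ (-α) / α) := by
    rw [setIntegral_congr_fun measurableSet_Ioi
      (fun x (hx : x ∈ Ioi δ) => by
        show fB x = ε ^ α * u y * |x| ^ (-1 - α)
        rw [hfB]
        show ε ^ α * |x| ^ (-1 - α) * u y * Real.sign x = _
        rw [Real.sign_of_pos (hδ.trans hx)]; ring),
      MeasureTheory.integral_const_mul, hK]
  have hBIic_val : ∫ ξ in Iic (-δ), fB ξ = -(ε ^ α * u y * (δ ^ (-α) / α)) := by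
    rw [setIntegral_congr_fun measurableSet_Iic
      (fun x (hx : x ∈ Iic (-δ)) => by
        show fB x = -(ε ^ α * u y) * |x| ^ (-1 - α)
        rw [hfB]
        show ε ^ α * |x| ^ (-1 - α) * u y * Real.sign x = _
        rw [Real.sign_of_neg (lt_of_le_of_lt hx (by linarith))]; ring),
      MeasureTheory.integral_const_mul, heven, hK]
    ring
  have hsign0 : ∫ ξ in (Ioc (-δ) δ)ᶜ, fB ξ = 0 := by
    rw [hcompl, setIntegral_union (Iic_disjoint_Ioi (by linarith)) measurableSet_Ioi
      hfB_Iic hfB_Ioi, hBIic_val, hBIoi_val]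
    ring
  -- estimates
  have hnear_est : |∫ ξ in Ioc (-δ) δ, f ξ| ≤ (2 * ε ^ α) * (2 * (δ ^ (1 - α) / (1 - α))) := by
    have h1 : |∫ ξ in Ioc (-δ) δ, f ξ| ≤ ∫ ξ in Ioc (-δ) δ, |f ξ| := by
      simpa [Real.norm_eq_abs] using
        norm_integral_le_integral_norm (μ := volume.restrict (Ioc (-δ) δ)) f
    have h2 : ∫ ξ in Ioc (-δ) δ, |f ξ| ≤ ∫ ξ in Ioc (-δ) δ, (2 * ε ^ α) * |ξ| ^ (-α) :=
      setIntegral_mono_on hIf_near.abs (hgN.const_mul _) measurableSet_Ioc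
        (fun x _ => hf_near_bd x)
    have h3 : ∫ ξ in Ioc (-δ) δ, (2 * ε ^ α) * |ξ| ^ (-α)
        = (2 * ε ^ α) * (2 * (δ ^ (1 - α) / (1 - α))) := by
      rw [MeasureTheory.integral_const_mul, hnear_int]
    linarith
  have htail_est : |∫ ξ in (Ioc (-δ) δ)ᶜ, f ξ| ≤ (ε ^ α * ε ^ 2) * (2 * (δ ^ (-α) / α)) := by
    have heq : ∫ ξ in (Ioc (-δ) δ)ᶜ, f ξ = ∫ ξ in (Ioc (-δ) δ)ᶜ, fA ξ := by
      have hfeq : ∀ ξ, f ξ = fA ξ - fB ξ := by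
        intro ξ; rw [hf, hfA, hfB]; ring
      calc ∫ ξ in (Ioc (-δ) δ)ᶜ, f ξ = ∫ ξ in (Ioc (-δ) δ)ᶜ, (fA ξ - fB ξ) := by
            simp only [hfeq]
        _ = (∫ ξ in (Ioc (-δ) δ)ᶜ, fA ξ) - ∫ ξ in (Ioc (-δ) δ)ᶜ, fB ξ :=
            integral_sub hfA_T hfB_T
        _ = ∫ ξ in (Ioc (-δ) δ)ᶜ, fA ξ := by rw [hsign0]; ring
    rw [heq]
    have h1 : |∫ ξ in (Ioc (-δ) δ)ᶜ, fA ξ| ≤ ∫ ξ in (Ioc (-δ) δ)ᶜ, |fA ξ| := by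
      simpa [Real.norm_eq_abs] using
        norm_integral_le_integral_norm (μ := volume.restrict ((Ioc (-δ) δ)ᶜ)) fA
    have h2 : ∫ ξ in (Ioc (-δ) δ)ᶜ, |fA ξ| ≤ ∫ ξ in (Ioc (-δ) δ)ᶜ, (ε ^ α * ε ^ 2) * |ξ| ^ (-1 - α) :=
      setIntegral_mono_on hfA_T.abs (hg2T.const_mul _) measurableSet_Ioc.compl
        (fun x _ => hfA_bd x)
    have h3 : ∫ ξ in (Ioc (-δ) δ)ᶜ, (ε ^ α * ε ^ 2) * |ξ| ^ (-1 - α)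
        = (ε ^ α * ε ^ 2) * (2 * (δ ^ (-α) / α)) := by
      rw [MeasureTheory.integral_const_mul, htail_int]
    linarith
  have habs : |∫ ξ, f ξ| ≤ (2 * ε ^ α) * (2 * (δ ^ (1 - α) / (1 - α)))
      + (ε ^ α * ε ^ 2) * (2 * (δ ^ (-α) / α)) := by
    rw [← integral_add_compl measurableSet_Ioc hIf]
    exact (abs_add_le _ _).trans (add_le_add hnear_est htail_est)
  refine ⟨hIf, ?_⟩
  -- exponent arithmetic
  have e1 : ε ^ α * δ ^ (1 - α) = ε ^ ((1 - α) / 2) * ε := by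
    rw [hδdef, ← Real.rpow_mul hε0.le, ← Real.rpow_add hε0,
      show ε ^ ((1 - α) / 2) * ε = ε ^ ((1 - α) / 2 + 1) from
        (Real.rpow_add_one hε0.ne' _).symm]
    congr 1; ring
  have e2 : ε ^ α * ε ^ 2 * δ ^ (-α) = ε ^ (1 - α / 2) * ε := by
    rw [show (ε : ℝ) ^ (2 : ℕ) = ε ^ ((2 : ℝ)) from by
        rw [← Real.rpow_natCast ε 2]; norm_num,
      hδdef, ← Real.rpow_mul hε0.le, ← Real.rpow_add hε0, ← Real.rpow_add hε0,
      show ε ^ (1 - α / 2) * ε = ε ^ ((1 - α / 2) + 1) from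
        (Real.rpow_add_one hε0.ne' _).symm]
    congr 1; ring
  have h1α : (0:ℝ) < 1 - α := by linarith
  calc (1 / ε) * |∫ ξ, f ξ|
      ≤ (1 / ε) * ((2 * ε ^ α) * (2 * (δ ^ (1 - α) / (1 - α)))
          + (ε ^ α * ε ^ 2) * (2 * (δ ^ (-α) / α))) := by
        apply mul_le_mul_of_nonneg_left habs (by positivity)
    _ = (4 / (1 - α)) * ((ε ^ α * δ ^ (1 - α)) / ε)
          + (2 / α) * ((ε ^ α * ε ^ 2 * δ ^ (-α)) / ε) := by
        field_simp
        ring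
    _ = (4 / (1 - α)) * ε ^ ((1 - α) / 2) + (2 / α) * ε ^ (1 - α / 2) := by
        rw [e1, e2, mul_div_assoc (ε ^ ((1 - α) / 2)), div_self hε0.ne', mul_one,
          mul_div_assoc (ε ^ (1 - α / 2)), div_self hε0.ne', mul_one]

/-- For `α ∈ (0,1)`, `0 < ε ≤ 1`, `R > 1`, the cut-off `φ_R(t) = min{1,(R−|t|)⁺}` and
`u_ε(t) = ε² sin(t/ε²) φ_R(t)`, for every `y ∈ ℝ` the integral
`∫ ε^α |ξ|^{−1−α}(u_ε(y+ξ) − u_ε(y)) sign(ξ) dξ` converges absolutely and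
`(1/ε)|∫ …| ≤ (4/(1−α)) ε^{(1−α)/2} + (2/α) ε^{1−α/2}`. -/
theorem riesz_counterexample_pointwise_bound (α : ℝ) (hα0 : 0 < α) (hα1 : α < 1)
    (ε : ℝ) (hε0 : 0 < ε) (hε1 : ε ≤ 1) (R : ℝ) (hR : 1 < R) (y : ℝ) :
    Integrable
      (fun ξ : ℝ => ε ^ α * |ξ| ^ (-1 - α) *
        ((ε ^ 2 * Real.sin ((y + ξ) / ε ^ 2) * min 1 (max (R - |y + ξ|) 0))
          - (ε ^ 2 * Real.sin (y / ε ^ 2) * min 1 (max (R - |y|) 0))) * Real.sign ξ)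
      (volume : Measure ℝ) ∧
    (1 / ε) * |∫ ξ : ℝ, ε ^ α * |ξ| ^ (-1 - α) *
        ((ε ^ 2 * Real.sin ((y + ξ) / ε ^ 2) * min 1 (max (R - |y + ξ|) 0))
          - (ε ^ 2 * Real.sin (y / ε ^ 2) * min 1 (max (R - |y|) 0))) * Real.sign ξ|
      ≤ (4 / (1 - α)) * ε ^ ((1 - α) / 2) + (2 / α) * ε ^ (1 - α / 2) := by
  have hε2 : (0:ℝ) < ε ^ 2 := by positivity
  have hε2le : ε ^ 2 ≤ 1 := by nlinarith
  have hsin1 : ∀ x : ℝ, |Real.sin x| ≤ 1 := fun x =>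
    abs_le.mpr ⟨Real.neg_one_le_sin x, Real.sin_le_one x⟩
  have hφ0 : ∀ x : ℝ, 0 ≤ min 1 (max (R - |x|) 0) := fun x =>
    le_min zero_le_one (le_max_right _ _)
  have hφ1 : ∀ x : ℝ, min 1 (max (R - |x|) 0) ≤ 1 := fun x => min_le_left _ _
  have hφabs : ∀ x : ℝ, |min 1 (max (R - |x|) 0)| ≤ 1 := fun x =>
    abs_le.mpr ⟨by linarith [hφ0 x], hφ1 x⟩
  have hφlip : ∀ s t : ℝ, |min 1 (max (R - |s|) 0) - min 1 (max (R - |t|) 0)| ≤ |s - t| := by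
    intro s t
    calc |min 1 (max (R - |s|) 0) - min 1 (max (R - |t|) 0)|
        ≤ |max (R - |s|) 0 - max (R - |t|) 0| := abs_min_sub_min 1 _ _
      _ ≤ |(R - |s|) - (R - |t|)| := abs_max_sub_max _ _
      _ = abs (|t| - |s|) := by rw [show (R - |s|) - (R - |t|) = |t| - |s| by ring]
      _ ≤ |t - s| := abs_abs_sub_abs_le_abs_sub t s
      _ = |s - t| := abs_sub_comm t s
  exact riesz_aux α hα0 hα1 ε hε0 hε1
    (fun t => ε ^ 2 * Real.sin (t / ε ^ 2) * min 1 (max (R - |t|) 0))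
    (by fun_prop)
    (by
      intro t
      show |ε ^ 2 * Real.sin (t / ε ^ 2) * min 1 (max (R - |t|) 0)| ≤ ε ^ 2
      rw [abs_mul, abs_mul, abs_of_pos hε2]
      calc ε ^ 2 * |Real.sin (t / ε ^ 2)| * |min 1 (max (R - |t|) 0)|
          ≤ ε ^ 2 * 1 * 1 := by gcongr <;> first | exact hsin1 _ | exact hφabs _ | positivity
        _ = ε ^ 2 := by ring)
    (by
      intro s t
      show |ε ^ 2 * Real.sin (s / ε ^ 2) * min 1 (max (R - |s|) 0)
          - ε ^ 2 * Real.sin (t / ε ^ 2) * min 1 (max (R - |t|) 0)| ≤ 2 * |s - t|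
      have hsin : |Real.sin (s / ε ^ 2) - Real.sin (t / ε ^ 2)| ≤ |s - t| / ε ^ 2 := by
        calc |Real.sin (s / ε ^ 2) - Real.sin (t / ε ^ 2)| ≤ |s / ε ^ 2 - t / ε ^ 2| :=
              abs_sin_sub_sin _ _
          _ = |s - t| / ε ^ 2 := by rw [← sub_div, abs_div, abs_of_pos hε2]
      have hA : |ε ^ 2 * Real.sin (s / ε ^ 2) * (min 1 (max (R - |s|) 0) - min 1 (max (R - |t|) 0))|
          ≤ ε ^ 2 * |s - t| := by
        rw [abs_mul, abs_mul, abs_of_pos hε2]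
        calc ε ^ 2 * |Real.sin (s / ε ^ 2)| * |min 1 (max (R - |s|) 0) - min 1 (max (R - |t|) 0)|
            ≤ ε ^ 2 * 1 * |s - t| :=
              mul_le_mul (mul_le_mul_of_nonneg_left (hsin1 _) hε2.le) (hφlip s t)
                (abs_nonneg _) (by positivity)
          _ = ε ^ 2 * |s - t| := by ring
      have hB : |ε ^ 2 * (Real.sin (s / ε ^ 2) - Real.sin (t / ε ^ 2)) * min 1 (max (R - |t|) 0)|
          ≤ |s - t| := by
        rw [abs_mul, abs_mul, abs_of_pos hε2]
        calc ε ^ 2 * |Real.sin (s / ε ^ 2) - Real.sin (t / ε ^ 2)| * |min 1 (max (R - |t|) 0)|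
            ≤ ε ^ 2 * (|s - t| / ε ^ 2) * 1 :=
              mul_le_mul (mul_le_mul_of_nonneg_left hsin hε2.le) (hφabs _)
                (abs_nonneg _) (by positivity)
          _ = |s - t| := by field_simp
      calc |ε ^ 2 * Real.sin (s / ε ^ 2) * min 1 (max (R - |s|) 0)
            - ε ^ 2 * Real.sin (t / ε ^ 2) * min 1 (max (R - |t|) 0)|
          = |ε ^ 2 * Real.sin (s / ε ^ 2) * (min 1 (max (R - |s|) 0) - min 1 (max (R - |t|) 0))
            + ε ^ 2 * (Real.sin (s / ε ^ 2) - Real.sin (t / ε ^ 2)) * min 1 (max (R - |t|) 0)| := by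
            congr 1; ring
        _ ≤ _ := abs_add_le _ _
        _ ≤ ε ^ 2 * |s - t| + |s - t| := add_le_add hA hB
        _ ≤ 2 * |s - t| := by nlinarith [abs_nonneg (s - t)])
    y
end

section
/- Let ρ_1, ρ_2, ϱ be positive real numbers with ρ_1 > ρ_2 + 2ϱ. For u : ℤ² → ℝ define the two discrete nonlocal partial derivatives D₁u(k) = ρ_1(u_{k+e₁} − u_k) + ρ_2(u_{k+2e₁} − u_{k−e₁}) + ϱ(u_{k+e₁+e₂} − u_{k+e₂}) + ϱ(u_{k+e₁−e₂} − u_{k−e₂}) and D₂u(k) = ρ_1(u_{k+e₂} − u_k) + ρ_2(u_{k+2e₂} − u_{k−e₂}) + ϱ(u_{k+e₂+e₁} − u_{k+e₁}) + ϱ(u_{k+e₂−e₁} − u_{k−e₁}). Then there exists Λ > 0, depending only on ρ_1, ρ_2, ϱ, such that for every finitely supported u : ℤ² → ℝ, ∑_{k∈ℤ²} ( |D₁u(k)|² + |D₂u(k)|² ) ≥ Λ ∑_{k,ℓ∈ℤ², |k−ℓ|=1} |u_k − u_ℓ|². -/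
/-- The discrete nonlocal partial derivative in the first direction (case `d = 2`, `M = 2`). -/
def D1 (ρ1 ρ2 ϱ : ℝ) (u : ℤ × ℤ → ℝ) (k : ℤ × ℤ) : ℝ :=
  ρ1 * (u (k + (1, 0)) - u k) + ρ2 * (u (k + (2, 0)) - u (k + (-1, 0)))
    + ϱ * (u (k + (1, 1)) - u (k + (0, 1))) + ϱ * (u (k + (1, -1)) - u (k + (0, -1)))

/-- The discrete nonlocal partial derivative in the second direction (case `d = 2`, `M = 2`). -/
def D2 (ρ1 ρ2 ϱ : ℝ) (u : ℤ × ℤ → ℝ) (k : ℤ × ℤ) : ℝ :=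
  ρ1 * (u (k + (0, 1)) - u k) + ρ2 * (u (k + (0, 2)) - u (k + (0, -1)))
    + ϱ * (u (k + (1, 1)) - u (k + (1, 0))) + ϱ * (u (k + (-1, 1)) - u (k + (-1, 0)))

open Function Set

/-! Auxiliary support-finiteness lemmas -/

private lemma fs_shift {f : ℤ × ℤ → ℝ} (hf : (support f).Finite) (a : ℤ × ℤ) :
    (support fun k => f (k + a)).Finite := by
  have h : (support fun k => f (k + a)) ⊆ (· + a) ⁻¹' (support f) := fun k hk => hk
  exact (hf.preimage (add_left_injective a).injOn).subset h

private lemma finsum_shift (f : ℤ × ℤ → ℝ) (a : ℤ × ℤ) :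
    (∑ᶠ k, f (k + a)) = ∑ᶠ k, f k := by
  simpa using finsum_comp_equiv (Equiv.addRight a) (f := f)

private lemma fs_of {α : Type*} {f g : α → ℝ} (hf : (support f).Finite)
    (h : ∀ k, f k = 0 → g k = 0) : (support g).Finite :=
  hf.subset fun k hk h0 => hk (h k h0)

private lemma fs_of2 {α : Type*} {f g h : α → ℝ} (hf : (support f).Finite) (hg : (support g).Finite)
    (H : ∀ k, f k = 0 → g k = 0 → h k = 0) : (support h).Finite := by
  refine (hf.union hg).subset fun k hk => ?_
  by_contra hc
  simp only [mem_union, mem_support, not_or, not_not] at hc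
  exact hk (H k hc.1 hc.2)

private lemma fs5 {v : ℤ × ℤ → ℝ} (hv : (support v).Finite) (a b : ℤ × ℤ) {h : ℤ × ℤ → ℝ}
    (H : ∀ k, v k = 0 → v (k + a) = 0 → v (k + -a) = 0 → v (k + b) = 0 → v (k + -b) = 0 →
      h k = 0) : (support h).Finite := by
  have hfin : (support v ∪ ((· + a) ⁻¹' support v) ∪ ((· + -a) ⁻¹' support v)
      ∪ ((· + b) ⁻¹' support v) ∪ ((· + -b) ⁻¹' support v)).Finite :=
    ((((hv.union (hv.preimage (add_left_injective a).injOn)).union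
      (hv.preimage (add_left_injective (-a)).injOn)).union
      (hv.preimage (add_left_injective b).injOn)).union
      (hv.preimage (add_left_injective (-b)).injOn))
  refine hfin.subset fun k hk => ?_
  by_contra hc
  simp only [mem_union, mem_preimage, mem_support, not_or, not_not] at hc
  obtain ⟨⟨⟨⟨h1, h2⟩, h3⟩, h4⟩, h5⟩ := hc
  exact hk (H k h1 h2 h3 h4 h5)

/-! The cross term `∑ v·(v(·+a) + 2v + v(·−a))` is a sum of squares -/

private lemma cross_sum {v : ℤ × ℤ → ℝ} (hv : (support v).Finite) (a : ℤ × ℤ) :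
    (∑ᶠ k, v k * (v (k + a) + 2 * v k + v (k + -a)))
      = ∑ᶠ k, (v k + v (k + a)) ^ 2 := by
  have hva := fs_shift hv a
  have hvna := fs_shift hv (-a)
  have h1 : (support fun k => v k * v (k + a)).Finite :=
    fs_of hv fun k h0 => by simp [h0]
  have h2 : (support fun k => 2 * (v k) ^ 2 + v (k + -a) * v k).Finite :=
    fs_of2 hv hvna fun k e1 e2 => by simp [e1, e2]
  have h2a : (support fun k => 2 * (v k) ^ 2).Finite :=
    fs_of hv fun k h0 => by simp [h0]
  have h2b : (support fun k => v (k + -a) * v k).Finite :=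
    fs_of hv fun k h0 => by simp [h0]
  have h3 : (support fun k => (v k) ^ 2).Finite :=
    fs_of hv fun k h0 => by simp [h0]
  have h4 : (support fun k => 2 * (v k * v (k + a)) + (v (k + a)) ^ 2).Finite :=
    fs_of2 hv hva fun k e1 e2 => by simp [e1, e2]
  have h4a : (support fun k => 2 * (v k * v (k + a))).Finite :=
    fs_of hv fun k h0 => by simp [h0]
  have h4b : (support fun k => (v (k + a)) ^ 2).Finite :=
    fs_of hva fun k h0 => by simp [h0]
  have hshift : (∑ᶠ k, v (k + -a) * v k) = ∑ᶠ k, v k * v (k + a) := by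
    rw [← finsum_shift (fun k => v (k + -a) * v k) a]
    exact finsum_congr fun k => by rw [add_neg_cancel_right]
  have hsq : (∑ᶠ k, (v (k + a)) ^ 2) = ∑ᶠ k, (v k) ^ 2 :=
    finsum_shift (fun k => (v k) ^ 2) a
  calc (∑ᶠ k, v k * (v (k + a) + 2 * v k + v (k + -a)))
      = ∑ᶠ k, (v k * v (k + a) + (2 * (v k) ^ 2 + v (k + -a) * v k)) :=
        finsum_congr fun k => by ring
    _ = (∑ᶠ k, v k * v (k + a)) + ((∑ᶠ k, 2 * (v k) ^ 2) + ∑ᶠ k, v (k + -a) * v k) := by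
        rw [finsum_add_distrib h1 h2, finsum_add_distrib h2a h2b]
    _ = (∑ᶠ k, v k * v (k + a)) + (2 * (∑ᶠ k, (v k) ^ 2) + ∑ᶠ k, v k * v (k + a)) := by
        rw [hshift, mul_finsum _ 2]
    _ = (∑ᶠ k, (v k) ^ 2) + (2 * (∑ᶠ k, v k * v (k + a)) + ∑ᶠ k, (v k) ^ 2) := by ring
    _ = (∑ᶠ k, (v k) ^ 2) + (2 * (∑ᶠ k, v k * v (k + a)) + ∑ᶠ k, (v (k + a)) ^ 2) := by
        rw [hsq]
    _ = (∑ᶠ k, (v k) ^ 2) + ((∑ᶠ k, 2 * (v k * v (k + a))) + ∑ᶠ k, (v (k + a)) ^ 2) := by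
        rw [mul_finsum _ 2]
    _ = ∑ᶠ k, ((v k) ^ 2 + (2 * (v k * v (k + a)) + (v (k + a)) ^ 2)) := by
        rw [finsum_add_distrib h3 h4, finsum_add_distrib h4a h4b]
    _ = ∑ᶠ k, (v k + v (k + a)) ^ 2 := finsum_congr fun k => by ring

/-! The one-direction coercivity bound -/

private lemma dir_bound {c ρ2 ϱ : ℝ} (hc : 0 < c) (hρ2 : 0 < ρ2) (hϱ : 0 < ϱ)
    {v : ℤ × ℤ → ℝ} (hv : (support v).Finite) (a b : ℤ × ℤ) :
    (∑ᶠ k, (c * v k + (ρ2 * (v (k + a) + 2 * v k + v (k + -a))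
        + ϱ * (v (k + b) + 2 * v k + v (k + -b)))) ^ 2)
      ≥ c ^ 2 * ∑ᶠ k, (v k) ^ 2 := by
  set g : ℤ × ℤ → ℝ := fun k => ρ2 * (v (k + a) + 2 * v k + v (k + -a))
    + ϱ * (v (k + b) + 2 * v k + v (k + -b)) with hg_def
  have hg : (support g).Finite :=
    fs5 hv a b fun k e1 e2 e3 e4 e5 => by simp [hg_def, e1, e2, e3, e4, e5]
  have hvsq : (support fun k => c ^ 2 * (v k) ^ 2).Finite :=
    fs_of hv fun k h0 => by simp [h0]
  have hv2 : (support fun k => (v k) ^ 2).Finite := fs_of hv fun k h0 => by simp [h0]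
  have hvg : (support fun k => 2 * c * (v k * g k)).Finite :=
    fs_of hv fun k h0 => by simp [h0]
  have hvg' : (support fun k => v k * g k).Finite := fs_of hv fun k h0 => by simp [h0]
  have hgsq : (support fun k => (g k) ^ 2).Finite := fs_of hg fun k h0 => by simp [h0]
  have hrest : (support fun k => 2 * c * (v k * g k) + (g k) ^ 2).Finite :=
    fs_of2 hv hg fun k e1 e2 => by simp [e1, e2]
  have key : ∀ k, (c * v k + g k) ^ 2
      = c ^ 2 * (v k) ^ 2 + (2 * c * (v k * g k) + (g k) ^ 2) := fun k => by ring
  rw [finsum_congr key, finsum_add_distrib hvsq hrest, finsum_add_distrib hvg hgsq,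
    ← mul_finsum _ (c ^ 2), ← mul_finsum _ (2 * c)]
  have hcross : (∑ᶠ k, v k * g k)
      = ρ2 * (∑ᶠ k, (v k + v (k + a)) ^ 2) + ϱ * (∑ᶠ k, (v k + v (k + b)) ^ 2) := by
    have ha : (support fun k => ρ2 * (v k * (v (k + a) + 2 * v k + v (k + -a)))).Finite :=
      fs_of hv fun k h0 => by simp [h0]
    have hb : (support fun k => ϱ * (v k * (v (k + b) + 2 * v k + v (k + -b)))).Finite :=
      fs_of hv fun k h0 => by simp [h0]
    have ha' : (support fun k => v k * (v (k + a) + 2 * v k + v (k + -a))).Finite :=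
      fs_of hv fun k h0 => by simp [h0]
    have hb' : (support fun k => v k * (v (k + b) + 2 * v k + v (k + -b))).Finite :=
      fs_of hv fun k h0 => by simp [h0]
    calc (∑ᶠ k, v k * g k)
        = ∑ᶠ k, (ρ2 * (v k * (v (k + a) + 2 * v k + v (k + -a)))
            + ϱ * (v k * (v (k + b) + 2 * v k + v (k + -b)))) :=
          finsum_congr fun k => by simp only [hg_def]; ring
      _ = (∑ᶠ k, ρ2 * (v k * (v (k + a) + 2 * v k + v (k + -a))))
            + ∑ᶠ k, ϱ * (v k * (v (k + b) + 2 * v k + v (k + -b))) :=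
          finsum_add_distrib ha hb
      _ = ρ2 * (∑ᶠ k, v k * (v (k + a) + 2 * v k + v (k + -a)))
            + ϱ * (∑ᶠ k, v k * (v (k + b) + 2 * v k + v (k + -b))) := by
          rw [mul_finsum _ ρ2, mul_finsum _ ϱ]
      _ = ρ2 * (∑ᶠ k, (v k + v (k + a)) ^ 2) + ϱ * (∑ᶠ k, (v k + v (k + b)) ^ 2) := by
          rw [cross_sum hv a, cross_sum hv b]
  have hA : (0:ℝ) ≤ ∑ᶠ k, (v k + v (k + a)) ^ 2 := finsum_nonneg fun k => sq_nonneg _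
  have hB : (0:ℝ) ≤ ∑ᶠ k, (v k + v (k + b)) ^ 2 := finsum_nonneg fun k => sq_nonneg _
  have hC : (0:ℝ) ≤ ∑ᶠ k, (g k) ^ 2 := finsum_nonneg fun k => sq_nonneg _
  nlinarith [hcross, mul_nonneg hρ2.le hA, mul_nonneg hϱ.le hB]

/-! Classifying nearest neighbours -/

private lemma sq_add_sq_eq_one_int {s t : ℤ} : s ^ 2 + t ^ 2 = 1 ↔
    s = 1 ∧ t = 0 ∨ s = -1 ∧ t = 0 ∨ s = 0 ∧ t = 1 ∨ s = 0 ∧ t = -1 := by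
  constructor
  · intro h
    have hs1 : -1 ≤ s := by nlinarith [sq_nonneg t, sq_nonneg (s+1)]
    have hs2 : s ≤ 1 := by nlinarith [sq_nonneg t, sq_nonneg (s-1)]
    have ht1 : -1 ≤ t := by nlinarith [sq_nonneg s, sq_nonneg (t+1)]
    have ht2 : t ≤ 1 := by nlinarith [sq_nonneg s, sq_nonneg (t-1)]
    interval_cases s <;> interval_cases t <;> omega
  · rintro (⟨rfl, rfl⟩ | ⟨rfl, rfl⟩ | ⟨rfl, rfl⟩ | ⟨rfl, rfl⟩) <;> norm_num

private lemma fs_pair {u : ℤ × ℤ → ℝ} (hu : (support u).Finite) (a : ℤ × ℤ) :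
    (support fun p : (ℤ × ℤ) × (ℤ × ℤ) =>
      if p.2 = p.1 + a then (u p.1 - u p.2) ^ 2 else 0).Finite := by
  have hsub : (support fun p : (ℤ × ℤ) × (ℤ × ℤ) =>
      if p.2 = p.1 + a then (u p.1 - u p.2) ^ 2 else 0)
        ⊆ (fun k => (k, k + a)) '' (support u ∪ ((· + a) ⁻¹' support u)) := by
    rintro ⟨p1, p2⟩ hp
    simp only [mem_support] at hp
    by_cases hc : p2 = p1 + a
    · subst hc
      refine ⟨p1, ?_, rfl⟩
      rw [if_pos rfl] at hp
      by_contra hmem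
      simp only [mem_union, mem_preimage, mem_support, not_or, not_not] at hmem
      exact hp (by rw [hmem.1, hmem.2]; ring)
    · simp [hc] at hp
  exact ((hu.union (hu.preimage (add_left_injective a).injOn)).image _).subset hsub

private lemma finsum_pair (u : ℤ × ℤ → ℝ) (a : ℤ × ℤ) :
    (∑ᶠ p : (ℤ × ℤ) × (ℤ × ℤ), if p.2 = p.1 + a then (u p.1 - u p.2) ^ 2 else 0)
      = ∑ᶠ k, (u k - u (k + a)) ^ 2 := by
  set h : (ℤ × ℤ) × (ℤ × ℤ) → ℝ :=
    fun p => if p.2 = p.1 + a then (u p.1 - u p.2) ^ 2 else 0 with hh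
  have hg : Injective (fun k : ℤ × ℤ => (k, k + a)) := fun x y hxy =>
    (Prod.ext_iff.1 hxy).1
  have hsupp : support h ⊆ range (fun k : ℤ × ℤ => (k, k + a)) := by
    rintro ⟨p1, p2⟩ hp
    simp only [mem_support, hh] at hp
    by_cases hc : p2 = p1 + a
    · exact ⟨p1, by simp [hc]⟩
    · simp [hc] at hp
  calc (∑ᶠ p, h p) = ∑ᶠ p ∈ range (fun k : ℤ × ℤ => (k, k + a)), h p := by
        rw [finsum_mem_def, Set.indicator_eq_self.2 hsupp]
    _ = ∑ᶠ k, h (k, k + a) := finsum_mem_range hg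
    _ = ∑ᶠ k, (u k - u (k + a)) ^ 2 := finsum_congr fun k => by simp [hh]

/-- Coerciveness of the two-dimensional discrete nonlocal energy: if `ρ_1 > ρ_2 + 2ϱ` with
`ρ_1, ρ_2, ϱ > 0`, there exists `Λ > 0` such that for every finitely supported `u : ℤ² → ℝ`,
`∑_k (|D₁u(k)|² + |D₂u(k)|²) ≥ Λ ∑_{|k−ℓ|=1} |u_k − u_ℓ|²`. -/
theorem two_dimensional_discrete_nonlocal_coercive (ρ1 ρ2 ϱ : ℝ)
    (hρ1 : 0 < ρ1) (hρ2 : 0 < ρ2) (hϱ : 0 < ϱ) (hcond : ρ2 + 2 * ϱ < ρ1) :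
    ∃ Λ : ℝ, 0 < Λ ∧
      ∀ u : ℤ × ℤ → ℝ, (Function.support u).Finite →
        ∑ᶠ k : ℤ × ℤ, ((D1 ρ1 ρ2 ϱ u k) ^ 2 + (D2 ρ1 ρ2 ϱ u k) ^ 2)
          ≥ Λ * ∑ᶠ p : (ℤ × ℤ) × (ℤ × ℤ),
              (if (p.1.1 - p.2.1) ^ 2 + (p.1.2 - p.2.2) ^ 2 = 1
                then (u p.1 - u p.2) ^ 2 else 0) := by
  set c := ρ1 - ρ2 - 2 * ϱ with hc_def
  have hc : 0 < c := by simp only [hc_def]; linarith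
  refine ⟨c ^ 2 / 2, by positivity, ?_⟩
  intro u hu
  set v : ℤ × ℤ → ℝ := fun k => u (k + (1, 0)) - u k with hv_def
  set w : ℤ × ℤ → ℝ := fun k => u (k + (0, 1)) - u k with hw_def
  have hv : (support v).Finite :=
    fs_of2 (fs_shift hu (1, 0)) hu fun k e1 e2 => by simp only [hv_def, e1, e2, sub_zero]
  have hw : (support w).Finite :=
    fs_of2 (fs_shift hu (0, 1)) hu fun k e1 e2 => by simp only [hw_def, e1, e2, sub_zero]
  have hD1 : ∀ k, D1 ρ1 ρ2 ϱ u k = c * v k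
      + (ρ2 * (v (k + ((1:ℤ), (0:ℤ))) + 2 * v k + v (k + -((1:ℤ), (0:ℤ))))
        + ϱ * (v (k + ((0:ℤ), (1:ℤ))) + 2 * v k + v (k + -((0:ℤ), (1:ℤ))))) := by
    intro k; obtain ⟨x, y⟩ := k
    simp only [hv_def, hc_def, D1, Prod.mk_add_mk, Prod.neg_mk, neg_zero, add_zero, neg_neg]
    norm_num [add_assoc]
    ring
  have hD2 : ∀ k, D2 ρ1 ρ2 ϱ u k = c * w k
      + (ρ2 * (w (k + ((0:ℤ), (1:ℤ))) + 2 * w k + w (k + -((0:ℤ), (1:ℤ))))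
        + ϱ * (w (k + ((1:ℤ), (0:ℤ))) + 2 * w k + w (k + -((1:ℤ), (0:ℤ))))) := by
    intro k; obtain ⟨x, y⟩ := k
    simp only [hw_def, hc_def, D2, Prod.mk_add_mk, Prod.neg_mk, neg_zero, add_zero, neg_neg]
    norm_num [add_assoc]
    ring
  have hf1 : (support fun k => (D1 ρ1 ρ2 ϱ u k) ^ 2).Finite := by
    refine fs5 hv ((1:ℤ), (0:ℤ)) ((0:ℤ), (1:ℤ)) fun k e1 e2 e3 e4 e5 => ?_
    rw [hD1 k, e1, e2, e3, e4, e5]; ring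
  have hf2 : (support fun k => (D2 ρ1 ρ2 ϱ u k) ^ 2).Finite := by
    refine fs5 hw ((0:ℤ), (1:ℤ)) ((1:ℤ), (0:ℤ)) fun k e1 e2 e3 e4 e5 => ?_
    rw [hD2 k, e1, e2, e3, e4, e5]; ring
  have hB1 : (∑ᶠ k, (D1 ρ1 ρ2 ϱ u k) ^ 2) ≥ c ^ 2 * ∑ᶠ k, (v k) ^ 2 := by
    rw [finsum_congr fun k => congrArg (· ^ 2) (hD1 k)]
    exact dir_bound hc hρ2 hϱ hv ((1:ℤ), (0:ℤ)) ((0:ℤ), (1:ℤ))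
  have hB2 : (∑ᶠ k, (D2 ρ1 ρ2 ϱ u k) ^ 2) ≥ c ^ 2 * ∑ᶠ k, (w k) ^ 2 := by
    rw [finsum_congr fun k => congrArg (· ^ 2) (hD2 k)]
    exact dir_bound hc hρ2 hϱ hw ((0:ℤ), (1:ℤ)) ((1:ℤ), (0:ℤ))
  -- the right-hand side
  have hsplit : ∀ p : (ℤ × ℤ) × (ℤ × ℤ),
      (if (p.1.1 - p.2.1) ^ 2 + (p.1.2 - p.2.2) ^ 2 = 1 then (u p.1 - u p.2) ^ 2 else 0)
        = (if p.2 = p.1 + ((1:ℤ), (0:ℤ)) then (u p.1 - u p.2) ^ 2 else 0)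
          + ((if p.2 = p.1 + ((-1:ℤ), (0:ℤ)) then (u p.1 - u p.2) ^ 2 else 0)
          + ((if p.2 = p.1 + ((0:ℤ), (1:ℤ)) then (u p.1 - u p.2) ^ 2 else 0)
          + (if p.2 = p.1 + ((0:ℤ), (-1:ℤ)) then (u p.1 - u p.2) ^ 2 else 0))) := by
    rintro ⟨⟨x1, y1⟩, ⟨x2, y2⟩⟩
    simp only [Prod.mk_add_mk, Prod.mk.injEq]
    simp only [sq_add_sq_eq_one_int]
    split_ifs <;> try ring
    all_goals (exfalso; omega)
  have hp1 := fs_pair hu ((1:ℤ), (0:ℤ))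
  have hp2 := fs_pair hu ((-1:ℤ), (0:ℤ))
  have hp3 := fs_pair hu ((0:ℤ), (1:ℤ))
  have hp4 := fs_pair hu ((0:ℤ), (-1:ℤ))
  have hp34 : (support fun p : (ℤ × ℤ) × (ℤ × ℤ) =>
      (if p.2 = p.1 + ((0:ℤ), (1:ℤ)) then (u p.1 - u p.2) ^ 2 else 0)
        + (if p.2 = p.1 + ((0:ℤ), (-1:ℤ)) then (u p.1 - u p.2) ^ 2 else 0)).Finite :=
    fs_of2 hp3 hp4 (by intro p e1 e2; simp only [e1, e2, add_zero])
  have hp234 : (support fun p : (ℤ × ℤ) × (ℤ × ℤ) =>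
      (if p.2 = p.1 + ((-1:ℤ), (0:ℤ)) then (u p.1 - u p.2) ^ 2 else 0)
        + ((if p.2 = p.1 + ((0:ℤ), (1:ℤ)) then (u p.1 - u p.2) ^ 2 else 0)
          + (if p.2 = p.1 + ((0:ℤ), (-1:ℤ)) then (u p.1 - u p.2) ^ 2 else 0))).Finite :=
    fs_of2 hp2 hp34 (by intro p e1 e2; simp only [e1, e2, add_zero])
  have S1 : (∑ᶠ k, (u k - u (k + ((1:ℤ), (0:ℤ)))) ^ 2) = ∑ᶠ k, (v k) ^ 2 :=
    finsum_congr fun k => by simp only [hv_def]; ring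
  have S2 : (∑ᶠ k, (u k - u (k + ((-1:ℤ), (0:ℤ)))) ^ 2) = ∑ᶠ k, (v k) ^ 2 := by
    rw [← finsum_shift (fun k => (u k - u (k + ((-1:ℤ), (0:ℤ)))) ^ 2) ((1:ℤ), (0:ℤ))]
    refine finsum_congr fun k => ?_
    have h0 : k + ((1:ℤ), (0:ℤ)) + ((-1:ℤ), (0:ℤ)) = k := by
      rw [add_assoc, show ((1:ℤ), (0:ℤ)) + ((-1:ℤ), (0:ℤ)) = 0 by decide, add_zero]
    rw [h0]
  have S3 : (∑ᶠ k, (u k - u (k + ((0:ℤ), (1:ℤ)))) ^ 2) = ∑ᶠ k, (w k) ^ 2 :=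
    finsum_congr fun k => by simp only [hw_def]; ring
  have S4 : (∑ᶠ k, (u k - u (k + ((0:ℤ), (-1:ℤ)))) ^ 2) = ∑ᶠ k, (w k) ^ 2 := by
    rw [← finsum_shift (fun k => (u k - u (k + ((0:ℤ), (-1:ℤ)))) ^ 2) ((0:ℤ), (1:ℤ))]
    refine finsum_congr fun k => ?_
    have h0 : k + ((0:ℤ), (1:ℤ)) + ((0:ℤ), (-1:ℤ)) = k := by
      rw [add_assoc, show ((0:ℤ), (1:ℤ)) + ((0:ℤ), (-1:ℤ)) = 0 by decide, add_zero]
    rw [h0]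
  have hR : (∑ᶠ p : (ℤ × ℤ) × (ℤ × ℤ),
      (if (p.1.1 - p.2.1) ^ 2 + (p.1.2 - p.2.2) ^ 2 = 1 then (u p.1 - u p.2) ^ 2 else 0))
        = 2 * (∑ᶠ k, (v k) ^ 2) + 2 * (∑ᶠ k, (w k) ^ 2) := by
    rw [finsum_congr hsplit, finsum_add_distrib hp1 hp234, finsum_add_distrib hp2 hp34,
      finsum_add_distrib hp3 hp4, finsum_pair u ((1:ℤ), (0:ℤ)), finsum_pair u ((-1:ℤ), (0:ℤ)),
      finsum_pair u ((0:ℤ), (1:ℤ)), finsum_pair u ((0:ℤ), (-1:ℤ)), S1, S2, S3, S4]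
    ring
  rw [finsum_add_distrib hf1 hf2, hR]
  have hkey : c ^ 2 / 2 * (2 * (∑ᶠ k, (v k) ^ 2) + 2 * (∑ᶠ k, (w k) ^ 2))
      = c ^ 2 * (∑ᶠ k, (v k) ^ 2) + c ^ 2 * (∑ᶠ k, (w k) ^ 2) := by ring
  rw [ge_iff_le, hkey]
  exact add_le_add hB1 hB2
end

section
/- Let ρ_1, ρ_2, ϱ be positive real numbers with ρ_1 > ρ_2 + 2ϱ, and for u : ℤ² → ℝ define D₁u(k) = ρ_1(u_{k+e₁} − u_k) + ρ_2(u_{k+2e₁} − u_{k−e₁}) + ϱ(u_{k+e₁+e₂} − u_{k+e₂}) + ϱ(u_{k+e₁−e₂} − u_{k−e₂}). Then for every finitely supported u : ℤ² → ℝ, ∑_{k∈ℤ²} |D₁u(k)|² ≥ (ρ_1 − ρ_2 − 2ϱ)² ∑_{k∈ℤ²} |u_{k+e₁} − u_k|². -/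
/-- If `ρ_1 > ρ_2 + 2ϱ` with `ρ_1, ρ_2, ϱ > 0`, then for every finitely supported
`u : ℤ² → ℝ`, `∑_k |D₁u(k)|² ≥ (ρ_1 − ρ_2 − 2ϱ)² ∑_k |u_{k+e₁} − u_k|²`. -/
theorem two_dimensional_discrete_partial_coercive (ρ1 ρ2 ϱ : ℝ)
    (hρ1 : 0 < ρ1) (hρ2 : 0 < ρ2) (hϱ : 0 < ϱ) (hcond : ρ2 + 2 * ϱ < ρ1) :
    ∀ u : ℤ × ℤ → ℝ, (Function.support u).Finite →
      ∑ᶠ k : ℤ × ℤ, (D1 ρ1 ρ2 ϱ u k) ^ 2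
        ≥ (ρ1 - ρ2 - 2 * ϱ) ^ 2 * ∑ᶠ k : ℤ × ℤ, (u (k + (1, 0)) - u k) ^ 2 := by
  intro u hu
  set c : ℝ := ρ1 - ρ2 - 2 * ϱ with hc_def
  have hc : 0 < c := by rw [hc_def]; linarith
  set z : ℤ × ℤ → ℝ := fun k => u (k + (1, 0)) - u k with hz_def
  -- z has finite support
  have hzfin : (Function.support z).Finite := by
    apply Set.Finite.subset (Set.Finite.union
      (hu.preimage (Set.injOn_of_injective (add_left_injective ((1:ℤ),(0:ℤ))))) hu)
    intro k hk
    by_cases h : u (k + (1,0)) = 0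
    · right
      simp only [Function.mem_support, hz_def] at hk ⊢
      intro h0; apply hk; rw [h, h0]; ring
    · left; exact h
  -- the D1 in terms of z
  have hD1 : ∀ k, D1 ρ1 ρ2 ϱ u k =
      (ρ1 + ρ2) * z k + ρ2 * z (k + (1,0)) + ρ2 * z (k + (-1,0))
        + ϱ * z (k + (0,1)) + ϱ * z (k + (0,-1)) := by
    intro k
    obtain ⟨a, b⟩ := k
    simp only [D1, hz_def, Prod.mk_add_mk]
    ring_nf
  -- the big finset
  set E : Finset (ℤ × ℤ) := hzfin.toFinset with hE_def
  set F : Finset (ℤ × ℤ) := E ∪ E.image (· + ((1:ℤ),(0:ℤ))) ∪ E.image (· + (-1,0))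
      ∪ E.image (· + (0,1)) ∪ E.image (· + (0,-1)) with hF_def
  have hadd : ∀ (k v w : ℤ × ℤ), v + w = 0 → k + v + w = k := by
    intro k v w h; rw [add_assoc, h, add_zero]
  have hmem : ∀ (v k : ℤ × ℤ),
      (v = (0,0) ∨ v = (1,0) ∨ v = (-1,0) ∨ v = (0,1) ∨ v = (0,-1)) →
      z (k + v) ≠ 0 → k ∈ F := by
    intro v k hv hzk
    have hkE : k + v ∈ E := by
      simp only [hE_def, Set.Finite.mem_toFinset, Function.mem_support]; exact hzk
    rcases hv with rfl | rfl | rfl | rfl | rfl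
    · simp only [hF_def, Finset.mem_union]
      left; left; left; left
      rwa [show ((0:ℤ),(0:ℤ)) = (0 : ℤ × ℤ) from rfl, add_zero] at hkE
    · simp only [hF_def, Finset.mem_union]
      left; left; right
      exact Finset.mem_image.2 ⟨k + (1,0), hkE, hadd k (1,0) (-1,0) (by decide)⟩
    · simp only [hF_def, Finset.mem_union]
      left; left; left; right
      exact Finset.mem_image.2 ⟨k + (-1,0), hkE, hadd k (-1,0) (1,0) (by decide)⟩
    · simp only [hF_def, Finset.mem_union]
      right
      exact Finset.mem_image.2 ⟨k + (0,1), hkE, hadd k (0,1) (0,-1) (by decide)⟩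
    · simp only [hF_def, Finset.mem_union]
      left; right
      exact Finset.mem_image.2 ⟨k + (0,-1), hkE, hadd k (0,-1) (0,1) (by decide)⟩
  have hmem0 : ∀ k : ℤ × ℤ, z k ≠ 0 → k ∈ F := by
    intro k hk
    exact hmem (0,0) k (Or.inl rfl) (by rw [show ((0:ℤ),(0:ℤ)) = (0 : ℤ × ℤ) from rfl, add_zero]; exact hk)
  -- abbreviations
  set S : ℝ := ∑ k ∈ F, z k ^ 2 with hS_def
  -- finsum of z^2 equals S
  have hfinS : ∑ᶠ k : ℤ × ℤ, (u (k + (1, 0)) - u k) ^ 2 = S := by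
    apply finsum_eq_sum_of_support_subset
    intro k hk
    simp only [Function.mem_support] at hk
    apply hmem0
    simp only [hz_def]
    intro h0
    exact hk (by rw [h0]; ring)
  -- shifted sums of squares equal S
  have hshift : ∀ v : ℤ × ℤ,
      (v = (1,0) ∨ v = (-1,0) ∨ v = (0,1) ∨ v = (0,-1)) →
      ∑ k ∈ F, z (k + v) ^ 2 = S := by
    intro v hv
    have hv' : v = (0,0) ∨ v = (1,0) ∨ v = (-1,0) ∨ v = (0,1) ∨ v = (0,-1) := Or.inr hv
    have h1 : ∑ k ∈ F, z (k + v) ^ 2 = ∑ᶠ k : ℤ × ℤ, z (k + v) ^ 2 := by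
      symm
      apply finsum_eq_sum_of_support_subset
      intro k hk
      apply hmem v k hv'
      intro h0
      simp only [Function.mem_support] at hk
      exact hk (by rw [h0]; ring)
    have h2 : ∑ᶠ k : ℤ × ℤ, z (k + v) ^ 2 = ∑ᶠ k : ℤ × ℤ, z k ^ 2 :=
      finsum_comp_equiv (Equiv.addRight v) (f := fun k => z k ^ 2)
    have h3 : ∑ᶠ k : ℤ × ℤ, z k ^ 2 = S := by
      apply finsum_eq_sum_of_support_subset
      intro k hk
      apply hmem0
      intro h0
      simp only [Function.mem_support] at hk
      exact hk (by rw [h0]; ring)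
    rw [h1, h2, h3]
  -- cross terms are bounded below by -S
  have hcross : ∀ v : ℤ × ℤ,
      (v = (1,0) ∨ v = (-1,0) ∨ v = (0,1) ∨ v = (0,-1)) →
      -S ≤ ∑ k ∈ F, z (k + v) * z k := by
    intro v hv
    have h0 : (0:ℝ) ≤ ∑ k ∈ F, (z (k + v) + z k) ^ 2 :=
      Finset.sum_nonneg fun k _ => sq_nonneg _
    have hexp : ∑ k ∈ F, (z (k + v) + z k) ^ 2
        = ∑ k ∈ F, z (k + v) ^ 2 + 2 * ∑ k ∈ F, z (k + v) * z k + S := by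
      rw [hS_def, Finset.mul_sum, ← Finset.sum_add_distrib, ← Finset.sum_add_distrib]
      apply Finset.sum_congr rfl
      intro k _; ring
    rw [hexp, hshift v hv] at h0
    linarith
  -- the mixed sum
  have hT : c * S ≤ ∑ k ∈ F, D1 ρ1 ρ2 ϱ u k * z k := by
    have hTexp : ∑ k ∈ F, D1 ρ1 ρ2 ϱ u k * z k
        = (ρ1 + ρ2) * S + ρ2 * (∑ k ∈ F, z (k + (1,0)) * z k)
          + ρ2 * (∑ k ∈ F, z (k + (-1,0)) * z k)
          + ϱ * (∑ k ∈ F, z (k + (0,1)) * z k)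
          + ϱ * (∑ k ∈ F, z (k + (0,-1)) * z k) := by
      rw [hS_def]
      simp only [Finset.mul_sum, ← Finset.sum_add_distrib]
      apply Finset.sum_congr rfl
      intro k _
      rw [hD1 k]; ring
    have h1 := hcross (1,0) (Or.inl rfl)
    have h2 := hcross (-1,0) (Or.inr (Or.inl rfl))
    have h3 := hcross (0,1) (Or.inr (Or.inr (Or.inl rfl)))
    have h4 := hcross (0,-1) (Or.inr (Or.inr (Or.inr rfl)))
    rw [hTexp, hc_def]
    nlinarith [mul_le_mul_of_nonneg_left h1 hρ2.le, mul_le_mul_of_nonneg_left h2 hρ2.le,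
      mul_le_mul_of_nonneg_left h3 hϱ.le, mul_le_mul_of_nonneg_left h4 hϱ.le]
  -- Cauchy-Schwarz
  have hCS : (∑ k ∈ F, D1 ρ1 ρ2 ϱ u k * z k) ^ 2
      ≤ (∑ k ∈ F, D1 ρ1 ρ2 ϱ u k ^ 2) * S := by
    rw [hS_def]
    exact Finset.sum_mul_sq_le_sq_mul_sq F _ _
  -- finsum of D1^2 equals the finset sum
  have hfinQ : ∑ᶠ k : ℤ × ℤ, D1 ρ1 ρ2 ϱ u k ^ 2 = ∑ k ∈ F, D1 ρ1 ρ2 ϱ u k ^ 2 := by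
    apply finsum_eq_sum_of_support_subset
    intro k hk
    simp only [Function.mem_support] at hk
    have hD : D1 ρ1 ρ2 ϱ u k ≠ 0 := fun h => hk (by rw [h]; ring)
    by_contra hkF
    apply hD
    rw [hD1 k]
    have e0 : z k = 0 := by
      by_contra h; exact hkF (hmem0 k h)
    have e1 : z (k + (1,0)) = 0 := by
      by_contra h; exact hkF (hmem (1,0) k (by tauto) h)
    have e2 : z (k + (-1,0)) = 0 := by
      by_contra h; exact hkF (hmem (-1,0) k (by tauto) h)
    have e3 : z (k + (0,1)) = 0 := by
      by_contra h; exact hkF (hmem (0,1) k (by tauto) h)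
    have e4 : z (k + (0,-1)) = 0 := by
      by_contra h; exact hkF (hmem (0,-1) k (by tauto) h)
    rw [e0, e1, e2, e3, e4]; ring
  rw [hfinS, hfinQ]
  -- conclude
  have hSnn : 0 ≤ S := Finset.sum_nonneg fun k _ => sq_nonneg _
  rcases eq_or_lt_of_le hSnn with hSeq | hSpos
  · rw [← hSeq]
    simpa using Finset.sum_nonneg (fun k (_ : k ∈ F) => sq_nonneg (D1 ρ1 ρ2 ϱ u k))
  · have hcS : 0 ≤ c * S := le_of_lt (mul_pos hc hSpos)
    have h1 : (c * S) ^ 2 ≤ (∑ k ∈ F, D1 ρ1 ρ2 ϱ u k * z k) ^ 2 :=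
      pow_le_pow_left₀ hcS hT 2
    have h2 : c ^ 2 * S * S ≤ (∑ k ∈ F, D1 ρ1 ρ2 ϱ u k ^ 2) * S := by
      calc c ^ 2 * S * S = (c * S) ^ 2 := by ring
        _ ≤ _ := le_trans h1 hCS
    have := le_of_mul_le_mul_right h2 hSpos
    linarith
end
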